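/- arXiv:1506.02086 — 16 statements merged into one kernel-verified Lean document; each statement's English description precedes it below -/
import Mathlib

section
/- In U_q(sl_2), the relations x^2 ν_y = q^4 ν_y x^2, x^2 ν_z = q^{-4} ν_z x^2, y^2 ν_z = q^4 ν_z y^2, y^2 ν_x = q^{-4} ν_x y^2, z^2 ν_x = q^4 ν_x z^2, and z^2 ν_y = q^{-4} ν_y z^2 hold. -/
section aux
variable {K U : Type*} [Field K] [Ring U] [Algebra K U] {q : K} {a b : U}

lemma hab_aux (hq : q ≠ 0)
    (h : q • (b * a) - q⁻¹ • (a * b) = (q - q⁻¹) • (1 : U)) :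
    a * b = (q ^ 2) • (b * a) - (q ^ 2 - 1) • (1 : U) := by
  have h1 : q⁻¹ • (a * b) = q • (b * a) - (q - q⁻¹) • (1 : U) := by
    rw [eq_sub_iff_add_eq, ← h]; abel
  have h2 : a * b = q • (q⁻¹ • (a * b)) := by
    rw [smul_smul, mul_inv_cancel₀ hq, one_smul]
  rw [h2, h1, smul_sub, smul_smul, smul_smul]
  match_scalars <;> field_simp <;> ring

lemma comm_a (hq : q ≠ 0)
    (h : q • (b * a) - q⁻¹ • (a * b) = (q - q⁻¹) • (1 : U)) :
    a * (q • ((1 : U) - b * a)) = (q ^ 2) • ((q • ((1 : U) - b * a)) * a) := by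
  have hab := hab_aux hq h
  have e1 : a * (b * a) = (a * b) * a := by rw [mul_assoc]
  rw [mul_smul_comm, smul_mul_assoc, mul_sub, sub_mul, mul_one, one_mul, e1, hab,
    sub_mul, smul_mul_assoc, smul_mul_assoc, one_mul, mul_assoc]
  module

lemma comm_b (hq : q ≠ 0)
    (h : q • (b * a) - q⁻¹ • (a * b) = (q - q⁻¹) • (1 : U)) :
    b * (q • ((1 : U) - b * a)) = (q⁻¹ ^ 2) • ((q • ((1 : U) - b * a)) * b) := by
  have hab := hab_aux hq h
  have e1 : (b * a) * b = b * (a * b) := by rw [mul_assoc]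
  rw [mul_smul_comm, smul_mul_assoc, mul_sub, sub_mul, mul_one, one_mul, e1, hab,
    mul_sub, mul_smul_comm, mul_smul_comm, mul_one, ← mul_assoc]
  match_scalars <;> field_simp <;> ring

lemma sq_comm {c : K} {u ν : U} (h : u * ν = c • (ν * u)) :
    u ^ 2 * ν = (c ^ 2) • (ν * u ^ 2) := by
  have : u ^ 2 * ν = u * (u * ν) := by rw [pow_two, mul_assoc]
  rw [this, h, mul_smul_comm, ← mul_assoc, h, smul_mul_assoc, smul_smul,
    ← pow_two c, mul_assoc, ← pow_two u]

end aux

theorem stmt_2 (K : Type*) [Field K] (q : K) (hq : q ≠ 0) (hq2 : q ^ 2 ≠ 1)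
    (U : Type*) [Ring U] [Algebra K U] (x y yi z : U)
    (hyyi : y * yi = 1) (hyiy : yi * y = 1)
    (hxy : q • (x * y) - q⁻¹ • (y * x) = (q - q⁻¹) • (1 : U))
    (hyz : q • (y * z) - q⁻¹ • (z * y) = (q - q⁻¹) • (1 : U))
    (hzx : q • (z * x) - q⁻¹ • (x * z) = (q - q⁻¹) • (1 : U))
    (νx νy νz : U)
    (hνx : νx = q • ((1 : U) - y * z))
    (hνy : νy = q • ((1 : U) - z * x))
    (hνz : νz = q • ((1 : U) - x * y)) :
    x ^ 2 * νy = (q ^ 4) • (νy * x ^ 2) ∧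
    x ^ 2 * νz = (q⁻¹ ^ 4) • (νz * x ^ 2) ∧
    y ^ 2 * νz = (q ^ 4) • (νz * y ^ 2) ∧
    y ^ 2 * νx = (q⁻¹ ^ 4) • (νx * y ^ 2) ∧
    z ^ 2 * νx = (q ^ 4) • (νx * z ^ 2) ∧
    z ^ 2 * νy = (q⁻¹ ^ 4) • (νy * z ^ 2) := by
  subst hνx hνy hνz
  have e1 : (q ^ 4 : K) = (q ^ 2) ^ 2 := by ring
  have e2 : (q⁻¹ ^ 4 : K) = (q⁻¹ ^ 2) ^ 2 := by ring
  rw [e1, e2]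
  exact ⟨sq_comm (comm_a hq hzx), sq_comm (comm_b hq hxy),
    sq_comm (comm_a hq hxy), sq_comm (comm_b hq hyz),
    sq_comm (comm_a hq hyz), sq_comm (comm_b hq hzx)⟩
end

section
/- In U_q(sl_2), x^2 y^2 = 1 - q^{-2}(q+q^{-1})ν_z + q^{-4}ν_z^2 and y^2 x^2 = 1 - q^2(q+q^{-1})ν_z + q^4 ν_z^2, and the analogous relations with (x,y,z) cyclically permuted: y^2z^2 = 1 - q^{-2}(q+q^{-1})ν_x + q^{-4}ν_x^2, z^2y^2 = 1 - q^2(q+q^{-1})ν_x + q^4ν_x^2, z^2x^2 = 1 - q^{-2}(q+q^{-1})ν_y + q^{-4}ν_y^2, x^2z^2 = 1 - q^2(q+q^{-1})ν_y + q^4ν_y^2. -/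
lemma key_pair {K U : Type*} [Field K] [Ring U] [Algebra K U] (q : K) (hq : q ≠ 0)
    (a b ν : U)
    (h : q • (a * b) - q⁻¹ • (b * a) = (q - q⁻¹) • (1 : U))
    (hν : ν = q • ((1 : U) - a * b)) :
    a ^ 2 * b ^ 2 = 1 - (q⁻¹ ^ 2 * (q + q⁻¹)) • ν + (q⁻¹ ^ 4) • ν ^ 2 ∧
    b ^ 2 * a ^ 2 = 1 - (q ^ 2 * (q + q⁻¹)) • ν + (q ^ 4) • ν ^ 2 := by
  have hab : a * b = 1 - q⁻¹ • ν := by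
    rw [hν, smul_smul, inv_mul_cancel₀ hq, one_smul]; abel
  have hba : b * a = 1 - q • ν := by
    have h1 := congrArg (fun u => q • u) h
    simp only [smul_sub, smul_smul, mul_inv_cancel₀ hq, one_smul] at h1
    have h2 : b * a = (q * q) • (a * b) - (q * (q - q⁻¹)) • (1 : U) := by
      rw [← h1]; abel
    rw [h2, hab]
    match_scalars <;> field_simp <;> ring
  have e2 : q • (a * ν) = q⁻¹ • (ν * a) := by
    have e1 : a * (b * a) = (a * b) * a := (mul_assoc a b a).symm
    rw [hab, hba] at e1
    simp only [mul_sub, sub_mul, mul_one, one_mul, mul_smul_comm, smul_mul_assoc] at e1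
    exact sub_right_inj.mp e1
  have f2 : q⁻¹ • (b * ν) = q • (ν * b) := by
    have f1 : b * (a * b) = (b * a) * b := (mul_assoc b a b).symm
    rw [hab, hba] at f1
    simp only [mul_sub, sub_mul, mul_one, one_mul, mul_smul_comm, smul_mul_assoc] at f1
    exact sub_right_inj.mp f1
  have hca : a * ν = (q⁻¹ * q⁻¹) • (ν * a) := by
    calc a * ν = q⁻¹ • (q • (a * ν)) := by
          rw [smul_smul, inv_mul_cancel₀ hq, one_smul]
      _ = (q⁻¹ * q⁻¹) • (ν * a) := by rw [e2, smul_smul]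
  have hcb : b * ν = (q * q) • (ν * b) := by
    calc b * ν = q • (q⁻¹ • (b * ν)) := by
          rw [smul_smul, mul_inv_cancel₀ hq, one_smul]
      _ = (q * q) • (ν * b) := by rw [f2, smul_smul]
  constructor
  · have e : a ^ 2 * b ^ 2 = a * ((a * b) * b) := by noncomm_ring
    rw [e, hab]
    have key1 : a * (ν * b) = (q⁻¹ * q⁻¹) • (ν * (a * b)) := by
      rw [← mul_assoc, hca, smul_mul_assoc, mul_assoc]
    rw [sub_mul, one_mul, smul_mul_assoc, mul_sub, mul_smul_comm, key1, hab]
    rw [mul_sub, mul_one, mul_smul_comm]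
    simp only [pow_two]
    match_scalars <;> field_simp <;> ring
  · have e : b ^ 2 * a ^ 2 = b * ((b * a) * a) := by noncomm_ring
    rw [e, hba]
    have key1 : b * (ν * a) = (q * q) • (ν * (b * a)) := by
      rw [← mul_assoc, hcb, smul_mul_assoc, mul_assoc]
    rw [sub_mul, one_mul, smul_mul_assoc, mul_sub, mul_smul_comm, key1, hba]
    rw [mul_sub, mul_one, mul_smul_comm]
    simp only [pow_two]
    match_scalars <;> field_simp <;> ring

theorem stmt_3 (K : Type*) [Field K] (q : K) (hq : q ≠ 0) (hq2 : q ^ 2 ≠ 1)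
    (U : Type*) [Ring U] [Algebra K U] (x y yi z : U)
    (hyyi : y * yi = 1) (hyiy : yi * y = 1)
    (hxy : q • (x * y) - q⁻¹ • (y * x) = (q - q⁻¹) • (1 : U))
    (hyz : q • (y * z) - q⁻¹ • (z * y) = (q - q⁻¹) • (1 : U))
    (hzx : q • (z * x) - q⁻¹ • (x * z) = (q - q⁻¹) • (1 : U))
    (νx νy νz : U)
    (hνx : νx = q • ((1 : U) - y * z))
    (hνy : νy = q • ((1 : U) - z * x))
    (hνz : νz = q • ((1 : U) - x * y)) :
    x ^ 2 * y ^ 2 = 1 - (q⁻¹ ^ 2 * (q + q⁻¹)) • νz + (q⁻¹ ^ 4) • νz ^ 2 ∧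
    y ^ 2 * x ^ 2 = 1 - (q ^ 2 * (q + q⁻¹)) • νz + (q ^ 4) • νz ^ 2 ∧
    y ^ 2 * z ^ 2 = 1 - (q⁻¹ ^ 2 * (q + q⁻¹)) • νx + (q⁻¹ ^ 4) • νx ^ 2 ∧
    z ^ 2 * y ^ 2 = 1 - (q ^ 2 * (q + q⁻¹)) • νx + (q ^ 4) • νx ^ 2 ∧
    z ^ 2 * x ^ 2 = 1 - (q⁻¹ ^ 2 * (q + q⁻¹)) • νy + (q⁻¹ ^ 4) • νy ^ 2 ∧
    x ^ 2 * z ^ 2 = 1 - (q ^ 2 * (q + q⁻¹)) • νy + (q ^ 4) • νy ^ 2 := by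
  obtain ⟨h1, h2⟩ := key_pair q hq x y νz hxy hνz
  obtain ⟨h3, h4⟩ := key_pair q hq y z νx hyz hνx
  obtain ⟨h5, h6⟩ := key_pair q hq z x νy hzx hνy
  exact ⟨h1, h2, h3, h4, h5, h6⟩
end

section
/- In U_q(sl_2), x^2 ν_x = q^{-1}x^2 - q^{-1} + q^2 ν_y + q^{-2} ν_z - q ν_y ν_z and ν_x x^2 = q^{-1}x^2 - q^{-1} + q^{-2} ν_y + q^2 ν_z - q ν_y ν_z. -/
set_option maxHeartbeats 2000000 in


theorem stmt_4 (K : Type*) [Field K] (q : K) (hq : q ≠ 0) (hq2 : q ^ 2 ≠ 1)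
    (U : Type*) [Ring U] [Algebra K U] (x y yi z : U)
    (hyyi : y * yi = 1) (hyiy : yi * y = 1)
    (hxy : q • (x * y) - q⁻¹ • (y * x) = (q - q⁻¹) • (1 : U))
    (hyz : q • (y * z) - q⁻¹ • (z * y) = (q - q⁻¹) • (1 : U))
    (hzx : q • (z * x) - q⁻¹ • (x * z) = (q - q⁻¹) • (1 : U))
    (νx νy νz : U)
    (hνx : νx = q • ((1 : U) - y * z))
    (hνy : νy = q • ((1 : U) - z * x))
    (hνz : νz = q • ((1 : U) - x * y)) :
    x ^ 2 * νx = q⁻¹ • (x ^ 2) - q⁻¹ • (1 : U) + (q ^ 2) • νy + (q⁻¹ ^ 2) • νz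
      - q • (νy * νz) ∧
    νx * x ^ 2 = q⁻¹ • (x ^ 2) - q⁻¹ • (1 : U) + (q⁻¹ ^ 2) • νy + (q ^ 2) • νz
      - q • (νy * νz) := by
  -- solve the relations for x*y, x*z, z*y
  have L1 : x * y = (q⁻¹ * q⁻¹) • (y * x) + (1 - q⁻¹ * q⁻¹) • (1 : U) := by
    have h := congrArg (fun u : U => q⁻¹ • u) hxy
    simp only [smul_sub, smul_smul, inv_mul_cancel₀ hq, one_smul] at h
    have hc : q⁻¹ * (q - q⁻¹) = 1 - q⁻¹ * q⁻¹ := by field_simp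
    rw [hc, sub_eq_iff_eq_add] at h
    rw [h]; abel
  have L2 : x * z = (q * q) • (z * x) + (1 - q * q) • (1 : U) := by
    have h := congrArg (fun u : U => q • u) hzx
    simp only [smul_sub, smul_smul, mul_inv_cancel₀ hq, one_smul] at h
    have hc : q * (q - q⁻¹) = q * q - 1 := by field_simp
    rw [hc, sub_eq_iff_eq_add] at h
    have h2 : x * z = (q * q) • (z * x) - (q * q - 1) • (1 : U) := by rw [h]; abel
    rw [h2]; match_scalars <;> ring
  have L3 : z * y = (q * q) • (y * z) + (1 - q * q) • (1 : U) := by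
    have h := congrArg (fun u : U => q • u) hyz
    simp only [smul_sub, smul_smul, mul_inv_cancel₀ hq, one_smul] at h
    have hc : q * (q - q⁻¹) = q * q - 1 := by field_simp
    rw [hc, sub_eq_iff_eq_add] at h
    have h2 : z * y = (q * q) • (y * z) - (q * q - 1) • (1 : U) := by rw [h]; abel
    rw [h2]; match_scalars <;> ring
  -- x*(x*y) and x*(x*z)
  have E1 : x * (x * y) = (q⁻¹ * q⁻¹ * (q⁻¹ * q⁻¹)) • (y * (x * x))
      + (1 - q⁻¹ * q⁻¹ * (q⁻¹ * q⁻¹)) • x := by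
    rw [L1, mul_add, mul_smul_comm, mul_smul_comm, mul_one,
      show x * (y * x) = (x * y) * x by rw [mul_assoc], L1]
    simp only [add_mul, smul_mul_assoc, one_mul, smul_smul, mul_assoc]
    match_scalars <;> ring
  have E2 : x * (x * z) = (q * q * (q * q)) • (z * (x * x))
      + (1 - q * q * (q * q)) • x := by
    rw [L2, mul_add, mul_smul_comm, mul_smul_comm, mul_one,
      show x * (z * x) = (x * z) * x by rw [mul_assoc], L2]
    simp only [add_mul, smul_mul_assoc, one_mul, smul_smul, mul_assoc]
    match_scalars <;> ring
  -- normal form of x*x*(y*z)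
  have M1 : x * (x * (y * z)) = y * (z * (x * x))
      + (q⁻¹ * q⁻¹ * (q⁻¹ * q⁻¹) - 1) • (y * x) + (q * q - q⁻¹ * q⁻¹) • (z * x)
      + ((1 - q * q) * (1 - q⁻¹ * q⁻¹ * (q⁻¹ * q⁻¹))) • (1 : U) := by
    have h0 : x * (x * (y * z)) = (x * (x * y)) * z := by simp only [mul_assoc]
    rw [h0, E1, add_mul, smul_mul_assoc, smul_mul_assoc,
      show y * (x * x) * z = y * (x * (x * z)) by simp only [mul_assoc], E2, L2]
    simp only [mul_add, smul_add, smul_smul, mul_smul_comm, mul_one, mul_assoc]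
    match_scalars
    all_goals try ring
    all_goals try ring_nf
    all_goals try ring
    all_goals simp only [inv_pow, ← div_eq_mul_inv, ← neg_div, ← add_div,
      div_sub_div_same]
    all_goals try rw [eq_div_iff (pow_ne_zero _ hq)]
    all_goals try ring
    all_goals field_simp
    all_goals try ring
  -- normal form of z*x*x*y
  have M2 : z * (x * (x * y)) = (q⁻¹ * q⁻¹) • (y * (z * (x * x)))
      + (q⁻¹ * q⁻¹ * (q⁻¹ * q⁻¹) - q⁻¹ * q⁻¹) • (x * x)
      + (1 - q⁻¹ * q⁻¹ * (q⁻¹ * q⁻¹)) • (z * x) := by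
    rw [E1, mul_add, mul_smul_comm, mul_smul_comm,
      show z * (y * (x * x)) = (z * y) * (x * x) by rw [mul_assoc], L3]
    simp only [add_mul, smul_mul_assoc, one_mul, smul_smul, mul_assoc]
    match_scalars
    all_goals try ring
    all_goals try ring_nf
    all_goals try ring
    all_goals simp only [inv_pow, ← div_eq_mul_inv, ← neg_div, ← add_div,
      div_sub_div_same]
    all_goals try rw [eq_div_iff (pow_ne_zero _ hq)]
    all_goals try ring
    all_goals field_simp
    all_goals try ring
  constructor
  · rw [hνx, hνy, hνz]
    simp only [pow_two, mul_sub, sub_mul, mul_one, one_mul, mul_smul_comm, smul_mul_assoc,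
      smul_sub, smul_smul, mul_add, add_mul, smul_add, mul_assoc]
    rw [M1, M2]
    simp only [L1]
    match_scalars
    all_goals try ring
    all_goals try ring_nf
    all_goals try ring
    all_goals simp only [inv_pow, ← div_eq_mul_inv, ← neg_div, ← add_div,
      div_sub_div_same]
    all_goals try rw [eq_div_iff (pow_ne_zero _ hq)]
    all_goals try ring
    all_goals field_simp
    all_goals try ring
  · rw [hνx, hνy, hνz]
    simp only [pow_two, mul_sub, sub_mul, mul_one, one_mul, mul_smul_comm, smul_mul_assoc,
      smul_sub, smul_smul, mul_add, add_mul, smul_add, mul_assoc]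
    rw [M2]
    simp only [L1]
    match_scalars
    all_goals try ring
    all_goals try ring_nf
    all_goals try ring
    all_goals simp only [inv_pow, ← div_eq_mul_inv, ← neg_div, ← add_div,
      div_sub_div_same]
    all_goals try rw [eq_div_iff (pow_ne_zero _ hq)]
    all_goals try ring
    all_goals field_simp
    all_goals try ring
end

section
/- In U_q(sl_2), x^2 = 1 - (qν_yν_z - q^{-1}ν_zν_y)/(q-q^{-1}), y^2 = 1 - (qν_zν_x - q^{-1}ν_xν_z)/(q-q^{-1}), and z^2 = 1 - (qν_xν_y - q^{-1}ν_yν_x)/(q-q^{-1}). -/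
lemma key {K : Type*} [Field K] {U : Type*} [Ring U] [Algebra K U]
    (q : K) (hq : q ≠ 0) (hq2 : q ^ 2 ≠ 1) (a b c : U)
    (hab : q • (a * b) - q⁻¹ • (b * a) = (q - q⁻¹) • (1 : U))
    (hbc : q • (b * c) - q⁻¹ • (c * b) = (q - q⁻¹) • (1 : U))
    (hca : q • (c * a) - q⁻¹ • (a * c) = (q - q⁻¹) • (1 : U)) :
    a ^ 2 = 1 - (q - q⁻¹)⁻¹ • (q • ((q • ((1:U) - c * a)) * (q • ((1:U) - a * b)))
      - q⁻¹ • ((q • ((1:U) - a * b)) * (q • ((1:U) - c * a)))) := by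
  have hd : q - q⁻¹ ≠ 0 := by
    intro h
    apply hq2
    rw [sub_eq_zero] at h
    rw [pow_two]
    nth_rewrite 2 [h]
    exact mul_inv_cancel₀ hq
  rw [sub_eq_iff_eq_add] at hab hbc hca
  have hab' : a * b = (q⁻¹ * (q - q⁻¹)) • (1:U) + (q⁻¹ * q⁻¹) • (b * a) := by
    calc a * b = q⁻¹ • (q • (a * b)) := by rw [smul_smul, inv_mul_cancel₀ hq, one_smul]
    _ = _ := by rw [hab, smul_add, smul_smul, smul_smul]
  have hbc' : b * c = (q⁻¹ * (q - q⁻¹)) • (1:U) + (q⁻¹ * q⁻¹) • (c * b) := by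
    calc b * c = q⁻¹ • (q • (b * c)) := by rw [smul_smul, inv_mul_cancel₀ hq, one_smul]
    _ = _ := by rw [hbc, smul_add, smul_smul, smul_smul]
  have hca' : c * a = (q⁻¹ * (q - q⁻¹)) • (1:U) + (q⁻¹ * q⁻¹) • (a * c) := by
    calc c * a = q⁻¹ • (q • (c * a)) := by rw [smul_smul, inv_mul_cancel₀ hq, one_smul]
    _ = _ := by rw [hca, smul_add, smul_smul, smul_smul]
  have main : (q - q⁻¹) • ((1:U) - a ^ 2) =
      q • ((q • ((1:U) - c * a)) * (q • ((1:U) - a * b)))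
      - q⁻¹ • ((q • ((1:U) - a * b)) * (q • ((1:U) - c * a))) := by
    simp only [pow_two, smul_mul_assoc, mul_smul_comm, smul_smul, mul_sub, sub_mul,
      one_mul, mul_one, smul_sub, smul_add]
    rw [show c * a * (a * b) = (c * a) * (a * b) from rfl]
    rw [show a * b * (c * a) = a * ((b * c) * a) by noncomm_ring]
    rw [hca', hbc', hab']
    simp only [smul_mul_assoc, mul_smul_comm, smul_smul, add_mul, mul_add, smul_add,
      one_mul, mul_one, mul_assoc]
    match_scalars <;> (field_simp; try ring) <;> (field_simp; try ring)
  have h2 : (1:U) - a ^ 2 = (q - q⁻¹)⁻¹ • (q • ((q • ((1:U) - c * a)) * (q • ((1:U) - a * b)))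
      - q⁻¹ • ((q • ((1:U) - a * b)) * (q • ((1:U) - c * a)))) := by
    rw [← main, smul_smul, inv_mul_cancel₀ hd, one_smul]
  rw [← h2, sub_sub_cancel]

theorem stmt_5 (K : Type*) [Field K] (q : K) (hq : q ≠ 0) (hq2 : q ^ 2 ≠ 1)
    (U : Type*) [Ring U] [Algebra K U] (x y yi z : U)
    (hyyi : y * yi = 1) (hyiy : yi * y = 1)
    (hxy : q • (x * y) - q⁻¹ • (y * x) = (q - q⁻¹) • (1 : U))
    (hyz : q • (y * z) - q⁻¹ • (z * y) = (q - q⁻¹) • (1 : U))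
    (hzx : q • (z * x) - q⁻¹ • (x * z) = (q - q⁻¹) • (1 : U))
    (νx νy νz : U)
    (hνx : νx = q • ((1 : U) - y * z))
    (hνy : νy = q • ((1 : U) - z * x))
    (hνz : νz = q • ((1 : U) - x * y)) :
    x ^ 2 = 1 - (q - q⁻¹)⁻¹ • (q • (νy * νz) - q⁻¹ • (νz * νy)) ∧
    y ^ 2 = 1 - (q - q⁻¹)⁻¹ • (q • (νz * νx) - q⁻¹ • (νx * νz)) ∧
    z ^ 2 = 1 - (q - q⁻¹)⁻¹ • (q • (νx * νy) - q⁻¹ • (νy * νx)) := by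
  subst hνx hνy hνz
  exact ⟨key q hq hq2 x y z hxy hyz hzx,
    key q hq hq2 y z x hyz hzx hxy,
    key q hq hq2 z x y hzx hxy hyz⟩
end

section
/- Assume q^4 ≠ 1. In U_q(sl_2), (q+q^{-1})ν_x = q^2 + q^{-2} - (q^4 y^2 z^2 - q^{-4} z^2 y^2)/(q^2 - q^{-2}), and similarly for ν_y, ν_z with the cyclic substitutions (x,y,z) → (y,z,x) → (z,x,y). -/
lemma aux_stmt6 {K : Type*} [Field K] (q : K) (hq : q ≠ 0) (hq4 : q ^ 4 ≠ 1)
    {U : Type*} [Ring U] [Algebra K U] (a b : U)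
    (h : q • (a * b) - q⁻¹ • (b * a) = (q - q⁻¹) • (1 : U)) :
    (q + q⁻¹) • (q • ((1 : U) - a * b)) = (q ^ 2 + q⁻¹ ^ 2) • (1 : U)
      - (q ^ 2 - q⁻¹ ^ 2)⁻¹ • ((q ^ 4) • (a ^ 2 * b ^ 2) - (q⁻¹ ^ 4) • (b ^ 2 * a ^ 2)) := by
  have hba : b * a = (q ^ 2) • (a * b) - (q ^ 2 - 1) • (1 : U) := by
    have h' := congrArg (fun u => q • u) h
    simp only [smul_sub, smul_smul, mul_inv_cancel₀ hq, one_smul] at h'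
    rw [sub_eq_iff_eq_add, show q * q = q ^ 2 by ring,
      show q * (q - q⁻¹) = q ^ 2 - 1 by field_simp] at h'
    rw [eq_sub_iff_add_eq, h']
    abel
  have hA : (q ^ 2) • (a ^ 2 * b ^ 2) = (a * b) * (a * b) + (q ^ 2 - 1) • (a * b) := by
    have : (a * b) * (a * b) = a * (b * a) * b := by noncomm_ring
    rw [this, hba]
    simp only [mul_sub, sub_mul, mul_smul_comm, smul_mul_assoc, mul_one, one_mul]
    rw [show a * (a * b) * b = a ^ 2 * b ^ 2 by noncomm_ring]
    abel
  have hA' : a ^ 2 * b ^ 2 = (q⁻¹ ^ 2) • ((a * b) * (a * b)) + (q⁻¹ ^ 2 * (q ^ 2 - 1)) • (a * b) := by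
    have h'' := congrArg (fun u => (q⁻¹ ^ 2) • u) hA
    simp only [smul_add, smul_smul] at h''
    rw [show q⁻¹ ^ 2 * q ^ 2 = 1 by field_simp, one_smul] at h''
    exact h''
  have hB : b ^ 2 * a ^ 2 = (q ^ 6) • ((a * b) * (a * b))
      - (2 * q ^ 4 * (q ^ 2 - 1) + q ^ 2 * (q ^ 2 - 1)) • (a * b)
      + (q ^ 2 * (q ^ 2 - 1) ^ 2 + (q ^ 2 - 1) ^ 2) • (1 : U) := by
    have e1 : b ^ 2 * a ^ 2 = b * (b * a) * a := by noncomm_ring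
    rw [e1, hba]
    simp only [mul_sub, sub_mul, mul_smul_comm, smul_mul_assoc, mul_one, one_mul]
    rw [show b * (a * b) * a = (b * a) * (b * a) by noncomm_ring, hba]
    simp only [mul_sub, sub_mul, mul_smul_comm, smul_mul_assoc, mul_one, one_mul, smul_sub,
      smul_smul]
    match_scalars <;> ring
  have hd : q ^ 2 - q⁻¹ ^ 2 ≠ 0 := by
    intro h0
    apply hq4
    field_simp at h0
    linear_combination h0
  have hq41 : q ^ 4 - 1 ≠ 0 := sub_ne_zero.mpr hq4
  have hinv : (q ^ 2 - q⁻¹ ^ 2)⁻¹ = q ^ 2 * (q ^ 4 - 1)⁻¹ := by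
    have e : q ^ 2 - q⁻¹ ^ 2 = (q ^ 4 - 1) * (q ^ 2)⁻¹ := by field_simp
    rw [e, mul_inv, inv_inv, mul_comm]
  rw [hA', hB, hinv]
  match_scalars <;> (field_simp; ring)

theorem stmt_6 (K : Type*) [Field K] (q : K) (hq : q ≠ 0) (hq2 : q ^ 2 ≠ 1) (hq4 : q ^ 4 ≠ 1)
    (U : Type*) [Ring U] [Algebra K U] (x y yi z : U)
    (hyyi : y * yi = 1) (hyiy : yi * y = 1)
    (hxy : q • (x * y) - q⁻¹ • (y * x) = (q - q⁻¹) • (1 : U))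
    (hyz : q • (y * z) - q⁻¹ • (z * y) = (q - q⁻¹) • (1 : U))
    (hzx : q • (z * x) - q⁻¹ • (x * z) = (q - q⁻¹) • (1 : U))
    (νx νy νz : U)
    (hνx : νx = q • ((1 : U) - y * z))
    (hνy : νy = q • ((1 : U) - z * x))
    (hνz : νz = q • ((1 : U) - x * y)) :
    (q + q⁻¹) • νx = (q ^ 2 + q⁻¹ ^ 2) • (1 : U)
      - (q ^ 2 - q⁻¹ ^ 2)⁻¹ • ((q ^ 4) • (y ^ 2 * z ^ 2) - (q⁻¹ ^ 4) • (z ^ 2 * y ^ 2)) ∧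
    (q + q⁻¹) • νy = (q ^ 2 + q⁻¹ ^ 2) • (1 : U)
      - (q ^ 2 - q⁻¹ ^ 2)⁻¹ • ((q ^ 4) • (z ^ 2 * x ^ 2) - (q⁻¹ ^ 4) • (x ^ 2 * z ^ 2)) ∧
    (q + q⁻¹) • νz = (q ^ 2 + q⁻¹ ^ 2) • (1 : U)
      - (q ^ 2 - q⁻¹ ^ 2)⁻¹ • ((q ^ 4) • (x ^ 2 * y ^ 2) - (q⁻¹ ^ 4) • (y ^ 2 * x ^ 2)) := by
  subst hνx hνy hνz
  exact ⟨aux_stmt6 q hq hq4 y z hyz, aux_stmt6 q hq hq4 z x hzx, aux_stmt6 q hq hq4 x y hxy⟩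
end

section
/- In U_q(sl_2), the cubic relation q^3 ν_x^2 ν_y - (q+q^{-1}) ν_x ν_y ν_x + q^{-3} ν_y ν_x^2 = (q^2 - q^{-2})(q - q^{-1}) ν_x holds. -/
set_option maxHeartbeats 4000000

theorem stmt_7 (K : Type*) [Field K] (q : K) (hq : q ≠ 0) (hq2 : q ^ 2 ≠ 1)
    (U : Type*) [Ring U] [Algebra K U] (x y yi z : U)
    (hyyi : y * yi = 1) (hyiy : yi * y = 1)
    (hxy : q • (x * y) - q⁻¹ • (y * x) = (q - q⁻¹) • (1 : U))
    (hyz : q • (y * z) - q⁻¹ • (z * y) = (q - q⁻¹) • (1 : U))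
    (hzx : q • (z * x) - q⁻¹ • (x * z) = (q - q⁻¹) • (1 : U))
    (νx νy νz : U)
    (hνx : νx = q • ((1 : U) - y * z))
    (hνy : νy = q • ((1 : U) - z * x))
    (hνz : νz = q • ((1 : U) - x * y)) :
    (q ^ 3) • (νx ^ 2 * νy) - (q + q⁻¹) • (νx * νy * νx) + (q⁻¹ ^ 3) • (νy * νx ^ 2)
      = ((q ^ 2 - q⁻¹ ^ 2) * (q - q⁻¹)) • νx := by
  -- base rewrite rules
  have hzy0 : z * y = (q ^ 2) • (y * z) - (q ^ 2 - 1) • (1 : U) := by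
    have h := congrArg (fun u : U => q • u) hyz
    simp only [smul_sub, smul_smul, mul_inv_cancel₀ hq, one_smul] at h
    have hc : q * (q - q⁻¹) = q ^ 2 - 1 := by field_simp
    have hc2 : q * q = q ^ 2 := by ring
    rw [hc, hc2, sub_eq_iff_eq_add] at h
    rw [h, add_sub_cancel_left]
  have hxz0 : x * z = (q ^ 2) • (z * x) - (q ^ 2 - 1) • (1 : U) := by
    have h := congrArg (fun u : U => q • u) hzx
    simp only [smul_sub, smul_smul, mul_inv_cancel₀ hq, one_smul] at h
    have hc : q * (q - q⁻¹) = q ^ 2 - 1 := by field_simp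
    have hc2 : q * q = q ^ 2 := by ring
    rw [hc, hc2, sub_eq_iff_eq_add] at h
    rw [h, add_sub_cancel_left]
  have hxy0 : x * y = (q⁻¹ ^ 2) • (y * x) + (1 - q⁻¹ ^ 2) • (1 : U) := by
    have h := congrArg (fun u : U => q⁻¹ • u) hxy
    simp only [smul_sub, smul_smul, inv_mul_cancel₀ hq, one_smul] at h
    have hc : q⁻¹ * (q - q⁻¹) = 1 - q⁻¹ ^ 2 := by field_simp
    have hc2 : q⁻¹ * q⁻¹ = q⁻¹ ^ 2 := by ring
    rw [hc, hc2, sub_eq_iff_eq_add] at h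
    rw [h, add_comm]
  -- trailing versions
  have hzy : ∀ t : U, z * (y * t) = (q ^ 2) • (y * (z * t)) - (q ^ 2 - 1) • t := by
    intro t
    rw [← mul_assoc, hzy0, sub_mul, smul_mul_assoc, smul_mul_assoc, one_mul, mul_assoc]
  have hxz : ∀ t : U, x * (z * t) = (q ^ 2) • (z * (x * t)) - (q ^ 2 - 1) • t := by
    intro t
    rw [← mul_assoc, hxz0, sub_mul, smul_mul_assoc, smul_mul_assoc, one_mul, mul_assoc]
  have hxy' : ∀ t : U, x * (y * t) = (q⁻¹ ^ 2) • (y * (x * t)) + (1 - q⁻¹ ^ 2) • t := by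
    intro t
    rw [← mul_assoc, hxy0, add_mul, smul_mul_assoc, smul_mul_assoc, one_mul, mul_assoc]
  subst hνx hνy
  simp only [pow_two, mul_sub, sub_mul, mul_add, add_mul, smul_sub, smul_add, smul_smul,
    mul_smul_comm, smul_mul_assoc, mul_one, one_mul, mul_assoc, hzy, hxz, hxy', hzy0, hxz0, hxy0]
  match_scalars <;> field_simp <;> ring
end

section
/- In U_q(sl_2), the relation q^{-3} ν_y^2 ν_x - (q+q^{-1}) ν_y ν_x ν_y + q^3 ν_x ν_y^2 = (q^2 - q^{-2})(q - q^{-1}) ν_y holds. -/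
set_option maxHeartbeats 4000000


theorem stmt_8 (K : Type*) [Field K] (q : K) (hq : q ≠ 0) (hq2 : q ^ 2 ≠ 1)
    (U : Type*) [Ring U] [Algebra K U] (x y yi z : U)
    (hyyi : y * yi = 1) (hyiy : yi * y = 1)
    (hxy : q • (x * y) - q⁻¹ • (y * x) = (q - q⁻¹) • (1 : U))
    (hyz : q • (y * z) - q⁻¹ • (z * y) = (q - q⁻¹) • (1 : U))
    (hzx : q • (z * x) - q⁻¹ • (x * z) = (q - q⁻¹) • (1 : U))
    (νx νy νz : U)
    (hνx : νx = q • ((1 : U) - y * z))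
    (hνy : νy = q • ((1 : U) - z * x))
    (hνz : νz = q • ((1 : U) - x * y)) :
    (q⁻¹ ^ 3) • (νy ^ 2 * νx) - (q + q⁻¹) • (νy * νx * νy) + (q ^ 3) • (νx * νy ^ 2)
      = ((q ^ 2 - q⁻¹ ^ 2) * (q - q⁻¹)) • νy := by
  -- general principle: from q•a - q⁻¹•b = (q-q⁻¹)•1, rewrite b in terms of a
  have key : ∀ a b : U, q • a - q⁻¹ • b = (q - q⁻¹) • 1 →
      b = (q ^ 2) • a - (q ^ 2 - 1) • (1 : U) := by
    intro a b h
    have h2 : q⁻¹ • b = q • a - (q - q⁻¹) • (1 : U) := by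
      rw [← h]; module
    calc b = q • (q⁻¹ • b) := by rw [smul_smul, mul_inv_cancel₀ hq, one_smul]
    _ = q • (q • a - (q - q⁻¹) • (1 : U)) := by rw [h2]
    _ = (q ^ 2) • a - (q ^ 2 - 1) • (1 : U) := by
        rw [smul_sub, smul_smul, smul_smul]
        match_scalars <;>
    (try field_simp) <;> (try rw [eq_div_iff (by simp [hq])]) <;> (try ring) <;>
    (try (simp only [inv_pow, ← zpow_natCast q, ← zpow_neg, ← zpow_add₀ hq]; norm_num)) <;>
    (try ring)
  have key' : ∀ a b : U, q • a - q⁻¹ • b = (q - q⁻¹) • 1 →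
      a = (q⁻¹ ^ 2) • b + (1 - q⁻¹ ^ 2) • (1 : U) := by
    intro a b h
    have h2 : q • a = q⁻¹ • b + (q - q⁻¹) • (1 : U) := by
      rw [← h]; module
    calc a = q⁻¹ • (q • a) := by rw [smul_smul, inv_mul_cancel₀ hq, one_smul]
    _ = q⁻¹ • (q⁻¹ • b + (q - q⁻¹) • (1 : U)) := by rw [h2]
    _ = (q⁻¹ ^ 2) • b + (1 - q⁻¹ ^ 2) • (1 : U) := by
        rw [smul_add, smul_smul, smul_smul]
        match_scalars <;>
    (try field_simp) <;> (try rw [eq_div_iff (by simp [hq])]) <;> (try ring) <;>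
    (try (simp only [inv_pow, ← zpow_natCast q, ← zpow_neg, ← zpow_add₀ hq]; norm_num)) <;>
    (try ring)
  have h1p : z * y = (q ^ 2) • (y * z) - (q ^ 2 - 1) • (1 : U) := key _ _ hyz
  have h2p : y * x = (q ^ 2) • (x * y) - (q ^ 2 - 1) • (1 : U) := key _ _ hxy
  have h3p : z * x = (q⁻¹ ^ 2) • (x * z) + (1 - q⁻¹ ^ 2) • (1 : U) := key' _ _ hzx
  have h1 : ∀ u : U, z * (y * u) = (q ^ 2) • (y * (z * u)) - (q ^ 2 - 1) • u := by
    intro u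
    rw [← mul_assoc, h1p, sub_mul, smul_mul_assoc, smul_mul_assoc, one_mul, mul_assoc]
  have h2 : ∀ u : U, y * (x * u) = (q ^ 2) • (x * (y * u)) - (q ^ 2 - 1) • u := by
    intro u
    rw [← mul_assoc, h2p, sub_mul, smul_mul_assoc, smul_mul_assoc, one_mul, mul_assoc]
  have h3 : ∀ u : U, z * (x * u) = (q⁻¹ ^ 2) • (x * (z * u)) + (1 - q⁻¹ ^ 2) • u := by
    intro u
    rw [← mul_assoc, h3p, add_mul, smul_mul_assoc, smul_mul_assoc, one_mul, mul_assoc]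
  subst hνx hνy
  simp only [pow_two, sq, mul_sub, sub_mul, mul_add, add_mul, mul_one, one_mul,
    smul_sub, smul_add, smul_smul, mul_smul_comm, smul_mul_assoc, mul_assoc,
    h1p, h2p, h3p, h1, h2, h3]
  match_scalars <;>
    (try field_simp) <;> (try rw [eq_div_iff (by simp [hq])]) <;> (try ring) <;>
    (try (simp only [inv_pow, ← zpow_natCast q, ← zpow_neg, ← zpow_add₀ hq]; norm_num)) <;>
    (try ring)
end

section
/- In U_q(sl_2), ν_x · (qν_yν_z - q^{-1}ν_zν_y)/(q-q^{-1}) = ν_x - q^{-2}ν_y - q^2ν_z + (q^2ν_yν_z - q^{-2}ν_zν_y)/(q-q^{-1}). -/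
set_option maxHeartbeats 12000000 in
theorem stmt_9 (K : Type*) [Field K] (q : K) (hq : q ≠ 0) (hq2 : q ^ 2 ≠ 1)
    (U : Type*) [Ring U] [Algebra K U] (x y yi z : U)
    (hyyi : y * yi = 1) (hyiy : yi * y = 1)
    (hxy : q • (x * y) - q⁻¹ • (y * x) = (q - q⁻¹) • (1 : U))
    (hyz : q • (y * z) - q⁻¹ • (z * y) = (q - q⁻¹) • (1 : U))
    (hzx : q • (z * x) - q⁻¹ • (x * z) = (q - q⁻¹) • (1 : U))
    (νx νy νz : U)
    (hνx : νx = q • ((1 : U) - y * z))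
    (hνy : νy = q • ((1 : U) - z * x))
    (hνz : νz = q • ((1 : U) - x * y)) :
    νx * ((q - q⁻¹)⁻¹ • (q • (νy * νz) - q⁻¹ • (νz * νy)))
      = νx - (q⁻¹ ^ 2) • νy - (q ^ 2) • νz
        + (q - q⁻¹)⁻¹ • ((q ^ 2) • (νy * νz) - (q⁻¹ ^ 2) • (νz * νy)) := by
  have hqi : q * q⁻¹ = 1 := mul_inv_cancel₀ hq
  -- oriented rewrite rules (Gröbner basis)
  have e1 : y * x = (q * q) • (x * y) - (q * (q - q⁻¹)) • (1 : U) := by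
    have h1 : q⁻¹ • (y * x) = q • (x * y) - (q - q⁻¹) • (1 : U) := by
      rw [← hxy]; abel
    calc y * x = q • (q⁻¹ • (y * x)) := by
          rw [smul_smul, hqi, one_smul]
      _ = (q * q) • (x * y) - (q * (q - q⁻¹)) • (1 : U) := by
          rw [h1, smul_sub, smul_smul, smul_smul]
  have e2 : z * y = (q * q) • (y * z) - (q * (q - q⁻¹)) • (1 : U) := by
    have h1 : q⁻¹ • (z * y) = q • (y * z) - (q - q⁻¹) • (1 : U) := by
      rw [← hyz]; abel
    calc z * y = q • (q⁻¹ • (z * y)) := by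
          rw [smul_smul, hqi, one_smul]
      _ = (q * q) • (y * z) - (q * (q - q⁻¹)) • (1 : U) := by
          rw [h1, smul_sub, smul_smul, smul_smul]
  have e3 : z * x = (q⁻¹ * q⁻¹) • (x * z) + (q⁻¹ * (q - q⁻¹)) • (1 : U) := by
    have h1 : q • (z * x) = q⁻¹ • (x * z) + (q - q⁻¹) • (1 : U) := by
      rw [← hzx]; abel
    calc z * x = q⁻¹ • (q • (z * x)) := by
          rw [smul_smul, inv_mul_cancel₀ hq, one_smul]
      _ = (q⁻¹ * q⁻¹) • (x * z) + (q⁻¹ * (q - q⁻¹)) • (1 : U) := by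
          rw [h1, smul_add, smul_smul, smul_smul]
  -- extended versions for right-associated words
  have e1' : ∀ u : U, y * (x * u) =
      (q * q) • (x * (y * u)) - (q * (q - q⁻¹)) • u := by
    intro u
    have h : (y * x) * u = ((q * q) • (x * y) - (q * (q - q⁻¹)) • (1 : U)) * u := by
      rw [e1]
    simpa [mul_assoc, sub_mul, smul_mul_assoc] using h
  have e2' : ∀ u : U, z * (y * u) =
      (q * q) • (y * (z * u)) - (q * (q - q⁻¹)) • u := by
    intro u
    have h : (z * y) * u = ((q * q) • (y * z) - (q * (q - q⁻¹)) • (1 : U)) * u := by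
      rw [e2]
    simpa [mul_assoc, sub_mul, smul_mul_assoc] using h
  have e3' : ∀ u : U, z * (x * u) =
      (q⁻¹ * q⁻¹) • (x * (z * u)) + (q⁻¹ * (q - q⁻¹)) • u := by
    intro u
    have h : (z * x) * u = ((q⁻¹ * q⁻¹) • (x * z) + (q⁻¹ * (q - q⁻¹)) • (1 : U)) * u := by
      rw [e3]
    simpa [mul_assoc, add_mul, smul_mul_assoc] using h
  have hd : q - q⁻¹ ≠ 0 := by
    intro h
    apply hq2
    have h2 := sub_eq_zero.mp h
    field_simp at h2
    exact h2
  -- Lemma A : q • νyνz - q⁻¹ • νzνy = (q - q⁻¹) • (1 - x*x)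
  have lamA : q • (νy * νz) - q⁻¹ • (νz * νy) = (q - q⁻¹) • ((1 : U) - x * x) := by
    rw [hνy, hνz]
    simp only [mul_sub, sub_mul, mul_add, add_mul, mul_one, one_mul, smul_sub, smul_add,
      smul_smul, smul_mul_assoc, mul_smul_comm, mul_assoc]
    simp only [e1', e2', e3', e1, e2, e3, mul_sub, sub_mul, mul_add, add_mul, mul_one,
      one_mul, smul_sub, smul_add, smul_smul, smul_mul_assoc, mul_smul_comm, mul_assoc]
    match_scalars
    all_goals (try field_simp)
    all_goals (try ring)
    all_goals (try (ring_nf; field_simp; try ring))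
  -- Lemma B : q² • νyνz - q⁻² • νzνy = (q-q⁻¹) • W
  have lamB : (q ^ 2) • (νy * νz) - (q⁻¹ ^ 2) • (νz * νy) =
      (q - q⁻¹) • (q • (x * (x * (y * z))) - q • (x * z) - q⁻¹ • (x * y)
        - q • (x * x) + (q + q⁻¹) • (1 : U)) := by
    rw [hνy, hνz]
    simp only [mul_sub, sub_mul, mul_add, add_mul, mul_one, one_mul, smul_sub, smul_add,
      smul_smul, smul_mul_assoc, mul_smul_comm, mul_assoc]
    simp only [e1', e2', e3', e1, e2, e3, mul_sub, sub_mul, mul_add, add_mul, mul_one,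
      one_mul, smul_sub, smul_add, smul_smul, smul_mul_assoc, mul_smul_comm, mul_assoc]
    match_scalars
    all_goals (try field_simp)
    all_goals (try ring)
    all_goals (try (ring_nf; field_simp; try ring))
  rw [lamA, lamB, inv_smul_smul₀ hd, inv_smul_smul₀ hd, hνx, hνy, hνz]
  simp only [mul_sub, sub_mul, mul_add, add_mul, mul_one, one_mul, smul_sub, smul_add,
    smul_smul, smul_mul_assoc, mul_smul_comm, mul_assoc]
  simp only [e1', e2', e3', e1, e2, e3, mul_sub, sub_mul, mul_add, add_mul, mul_one,
    one_mul, smul_sub, smul_add, smul_smul, smul_mul_assoc, mul_smul_comm, mul_assoc]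
  match_scalars
  all_goals (try field_simp)
  all_goals (try ring)
  all_goals (try (ring_nf; field_simp; try ring))
end

section
/- In U_q(sl_2), (qν_yν_z - q^{-1}ν_zν_y)/(q-q^{-1}) · ν_x = ν_x - q^2 ν_y - q^{-2} ν_z + (q^2 ν_y ν_z - q^{-2} ν_z ν_y)/(q-q^{-1}). -/
set_option maxHeartbeats 4000000 in
theorem stmt_10 (K : Type*) [Field K] (q : K) (hq : q ≠ 0) (hq2 : q ^ 2 ≠ 1)
    (U : Type*) [Ring U] [Algebra K U] (x y yi z : U)
    (hyyi : y * yi = 1) (hyiy : yi * y = 1)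
    (hxy : q • (x * y) - q⁻¹ • (y * x) = (q - q⁻¹) • (1 : U))
    (hyz : q • (y * z) - q⁻¹ • (z * y) = (q - q⁻¹) • (1 : U))
    (hzx : q • (z * x) - q⁻¹ • (x * z) = (q - q⁻¹) • (1 : U))
    (νx νy νz : U)
    (hνx : νx = q • ((1 : U) - y * z))
    (hνy : νy = q • ((1 : U) - z * x))
    (hνz : νz = q • ((1 : U) - x * y)) :
    ((q - q⁻¹)⁻¹ • (q • (νy * νz) - q⁻¹ • (νz * νy))) * νx
      = νx - (q ^ 2) • νy - (q⁻¹ ^ 2) • νz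
        + (q - q⁻¹)⁻¹ • ((q ^ 2) • (νy * νz) - (q⁻¹ ^ 2) • (νz * νy)) := by
  have hqi : q * q⁻¹ = 1 := mul_inv_cancel₀ hq
  have hc : q - q⁻¹ ≠ 0 := by
    rw [sub_ne_zero]
    intro h
    apply hq2
    field_simp at h
    rw [pow_two]
    linear_combination h
  have hyx : y * x = (q ^ 2) • (x * y) - (q ^ 2 - 1) • (1 : U) := by
    have h1 : q⁻¹ • (y * x) = q • (x * y) - (q - q⁻¹) • (1 : U) := by
      rw [← hxy]; abel
    have h2 := congrArg (fun u => q • u) h1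
    simpa [smul_smul, hqi, inv_mul_cancel₀ hq, smul_sub, smul_add, sub_smul,
      add_smul, one_smul, mul_sub, mul_add, mul_one, pow_two] using h2
  have hzy : z * y = (q ^ 2) • (y * z) - (q ^ 2 - 1) • (1 : U) := by
    have h1 : q⁻¹ • (z * y) = q • (y * z) - (q - q⁻¹) • (1 : U) := by
      rw [← hyz]; abel
    have h2 := congrArg (fun u => q • u) h1
    simpa [smul_smul, hqi, inv_mul_cancel₀ hq, smul_sub, smul_add, sub_smul,
      add_smul, one_smul, mul_sub, mul_add, mul_one, pow_two] using h2
  have hzxn : z * x = (q⁻¹ ^ 2) • (x * z) + (1 - q⁻¹ ^ 2) • (1 : U) := by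
    have h1 : q • (z * x) = q⁻¹ • (x * z) + (q - q⁻¹) • (1 : U) := by
      rw [← hzx]; abel
    have h2 := congrArg (fun u => q⁻¹ • u) h1
    simpa [smul_smul, hqi, inv_mul_cancel₀ hq, smul_sub, smul_add, sub_smul,
      add_smul, one_smul, mul_sub, mul_add, mul_one, pow_two] using h2
  have hyxw : ∀ w : U, y * (x * w) = (q ^ 2) • (x * (y * w)) - (q ^ 2 - 1) • w := by
    intro w
    rw [← mul_assoc, hyx, sub_mul, smul_mul_assoc, smul_mul_assoc, one_mul, mul_assoc]
  have hzyw : ∀ w : U, z * (y * w) = (q ^ 2) • (y * (z * w)) - (q ^ 2 - 1) • w := by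
    intro w
    rw [← mul_assoc, hzy, sub_mul, smul_mul_assoc, smul_mul_assoc, one_mul, mul_assoc]
  have hzxw : ∀ w : U, z * (x * w) = (q⁻¹ ^ 2) • (x * (z * w)) + (1 - q⁻¹ ^ 2) • w := by
    intro w
    rw [← mul_assoc, hzxn, add_mul, smul_mul_assoc, smul_mul_assoc, one_mul, mul_assoc]
  have star : (q • (νy * νz) - q⁻¹ • (νz * νy)) * νx
      = (q - q⁻¹) • (νx - (q ^ 2) • νy - (q⁻¹ ^ 2) • νz)
        + ((q ^ 2) • (νy * νz) - (q⁻¹ ^ 2) • (νz * νy)) := by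
    rw [hνx, hνy, hνz]
    simp only [mul_sub, sub_mul, mul_add, add_mul, smul_sub, smul_add, smul_smul,
      smul_mul_assoc, mul_smul_comm, mul_assoc, mul_one, one_mul,
      hyx, hzy, hzxn, hyxw, hzyw, hzxw]
    clear hyx hzy hzxn hyxw hzyw hzxw hxy hyz hzx hyyi hyiy hνx hνy hνz
    match_scalars <;> first
      | ring1
      | linear_combination (norm := ring1) (-(q * q⁻¹) + q * q⁻¹ ^ 3 + q ^ 2 - 2 * (q ^ 2 * q⁻¹ ^ 2) + q ^ 3 * q⁻¹) * hqi
      | linear_combination (norm := ring1) (-(q ^ 3 * q⁻¹ ^ 3) + q ^ 6 * q⁻¹ ^ 2) * hqi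
      | linear_combination (norm := ring1) (-(q * q⁻¹ ^ 3) + q ^ 2 * q⁻¹ ^ 2) * hqi
      | linear_combination (norm := ring1) (q ^ 7 * q⁻¹ ^ 3) * hqi
      | linear_combination (norm := ring1) (q * q⁻¹ - q ^ 2 + q ^ 2 * q⁻¹ ^ 2 - q ^ 3 * q⁻¹) * hqi
      | linear_combination (norm := ring1) (-(q ^ 6 * q⁻¹ ^ 2)) * hqi
      | linear_combination (norm := ring1) (q ^ 3 * q⁻¹ ^ 3) * hqi
      | linear_combination (norm := ring1) (-(q ^ 7 * q⁻¹ ^ 3)) * hqi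
  calc ((q - q⁻¹)⁻¹ • (q • (νy * νz) - q⁻¹ • (νz * νy))) * νx
      = (q - q⁻¹)⁻¹ • ((q • (νy * νz) - q⁻¹ • (νz * νy)) * νx) := by
        rw [smul_mul_assoc]
    _ = (q - q⁻¹)⁻¹ • ((q - q⁻¹) • (νx - (q ^ 2) • νy - (q⁻¹ ^ 2) • νz)
          + ((q ^ 2) • (νy * νz) - (q⁻¹ ^ 2) • (νz * νy))) := by rw [star]
    _ = νx - (q ^ 2) • νy - (q⁻¹ ^ 2) • νz
          + (q - q⁻¹)⁻¹ • ((q ^ 2) • (νy * νz) - (q⁻¹ ^ 2) • (νz * νy)) := by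
        rw [smul_add, smul_smul, inv_mul_cancel₀ hc, one_smul]
end

section
/- The K-subspace A of U_q(sl_2) spanned by the monomials x^r y^s z^t with r, s, t ∈ ℕ and r + s + t even is a K-subalgebra of U_q(sl_2). -/
section Aux

variable {K : Type*} [Field K] {U : Type*} [Ring U] [Algebra K U]

lemma swap_pow (v w : U) (l m : K)
    (h : w * v = l • (v * w) + m • (1 : U)) :
    ∀ c : ℕ, ∃ e : K, w ^ (c + 1) * v = (l ^ (c + 1)) • (v * w ^ (c + 1)) + e • w ^ c := by
  intro c
  induction c with
  | zero => exact ⟨m, by simpa using h⟩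
  | succ c ih =>
    obtain ⟨e, he⟩ := ih
    refine ⟨l * e + m, ?_⟩
    calc w ^ (c + 2) * v = w ^ (c + 1) * (w * v) := by rw [pow_succ, mul_assoc]
      _ = l • (w ^ (c + 1) * v * w) + m • w ^ (c + 1) := by
          rw [h, mul_add, mul_smul_comm, mul_smul_comm, mul_one, mul_assoc]
      _ = l • ((l ^ (c + 1) • (v * w ^ (c + 1)) + e • w ^ c) * w) + m • w ^ (c + 1) := by
          rw [he]
      _ = (l ^ (c + 2)) • (v * w ^ (c + 2)) + (l * e + m) • w ^ (c + 1) := by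
          simp only [add_mul, smul_mul_assoc, smul_add, smul_smul, mul_assoc, ← pow_succ,
            ← pow_succ', add_smul]
          abel


variable (K) in
def spn (x y z : U) (n : ℕ) : Submodule K U :=
  Submodule.span K
    {u : U | ∃ a b c : ℕ, a + b + c ≤ n ∧ (a + b + c + n) % 2 = 0 ∧ u = x ^ a * y ^ b * z ^ c}

lemma mon_mem_spn {x y z : U} {a b c n : ℕ} (h1 : a + b + c ≤ n)
    (h2 : (a + b + c + n) % 2 = 0) : x ^ a * y ^ b * z ^ c ∈ spn K x y z n :=
  Submodule.subset_span ⟨a, b, c, h1, h2, rfl⟩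

section Steps

variable {q : K} {x y z : U}
variable (hYX : ∀ b : ℕ, ∃ e : K, y ^ (b+1) * x = ((q*q) ^ (b+1)) • (x * y ^ (b+1)) + e • y ^ b)
variable (hZY : ∀ c : ℕ, ∃ e : K, z ^ (c+1) * y = ((q*q) ^ (c+1)) • (y * z ^ (c+1)) + e • z ^ c)
variable (hZX : ∀ c : ℕ, ∃ e : K,
    z ^ (c+1) * x = ((q⁻¹*q⁻¹) ^ (c+1)) • (x * z ^ (c+1)) + e • z ^ c)

include hYX hZX in
lemma stepx (a b c n : ℕ) (h1 : a + b + c ≤ n) (h2 : (a + b + c + n) % 2 = 0) :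
    (x ^ a * y ^ b * z ^ c) * x ∈ spn K x y z (n + 1) := by
  have norm : ∀ u v w : U, u * v * w = u * (v * w) := mul_assoc
  cases c with
  | zero =>
    cases b with
    | zero =>
      have key : (x ^ a * y ^ 0 * z ^ 0) * x = x ^ (a+1) * y ^ 0 * z ^ 0 := by
        simp [pow_succ]
      rw [key]; exact mon_mem_spn (by omega) (by omega)
    | succ b =>
      obtain ⟨e, he⟩ := hYX b
      have key : (x ^ a * y ^ (b+1) * z ^ 0) * x
          = ((q*q) ^ (b+1)) • (x ^ (a+1) * y ^ (b+1) * z ^ 0)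
            + e • (x ^ a * y ^ b * z ^ 0) := by
        simp only [pow_zero, mul_one, mul_assoc, he, mul_add, mul_smul_comm]
        simp only [← mul_assoc, ← pow_succ]
      rw [key]
      exact Submodule.add_mem _
        (Submodule.smul_mem _ _ (mon_mem_spn (by omega) (by omega)))
        (Submodule.smul_mem _ _ (mon_mem_spn (by omega) (by omega)))
  | succ c =>
    obtain ⟨e1, he1⟩ := hZX c
    cases b with
    | zero =>
      have key : (x ^ a * y ^ 0 * z ^ (c+1)) * x
          = ((q⁻¹*q⁻¹) ^ (c+1)) • (x ^ (a+1) * y ^ 0 * z ^ (c+1))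
            + e1 • (x ^ a * y ^ 0 * z ^ c) := by
        simp only [pow_zero, mul_one, mul_assoc, he1, mul_add, mul_smul_comm]
        simp only [← mul_assoc, ← pow_succ]
      rw [key]
      exact Submodule.add_mem _
        (Submodule.smul_mem _ _ (mon_mem_spn (by omega) (by omega)))
        (Submodule.smul_mem _ _ (mon_mem_spn (by omega) (by omega)))
    | succ b =>
      obtain ⟨e, he⟩ := hYX b
      have key : (x ^ a * y ^ (b+1) * z ^ (c+1)) * x
          = ((q⁻¹*q⁻¹) ^ (c+1) * (q*q) ^ (b+1)) • (x ^ (a+1) * y ^ (b+1) * z ^ (c+1))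
            + ((q⁻¹*q⁻¹) ^ (c+1) * e) • (x ^ a * y ^ b * z ^ (c+1))
            + e1 • (x ^ a * y ^ (b+1) * z ^ c) := by
        rw [mul_assoc, he1, mul_add, mul_smul_comm, mul_smul_comm]
        congr 1
        rw [show x ^ a * y ^ (b+1) * (x * z ^ (c+1)) = x ^ a * (y ^ (b+1) * x) * z ^ (c+1) by
          simp only [mul_assoc]]
        rw [he, mul_add, mul_smul_comm, mul_smul_comm, add_mul, smul_mul_assoc,
          smul_mul_assoc, smul_add, smul_smul, smul_smul]
        congr 2
        simp only [← mul_assoc, ← pow_succ]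
      rw [key]
      refine Submodule.add_mem _ (Submodule.add_mem _
        (Submodule.smul_mem _ _ (mon_mem_spn (by omega) (by omega)))
        (Submodule.smul_mem _ _ (mon_mem_spn (by omega) (by omega))))
        (Submodule.smul_mem _ _ (mon_mem_spn (by omega) (by omega)))

include hZY in
lemma stepy (a b c n : ℕ) (h1 : a + b + c ≤ n) (h2 : (a + b + c + n) % 2 = 0) :
    (x ^ a * y ^ b * z ^ c) * y ∈ spn K x y z (n + 1) := by
  cases c with
  | zero =>
    have key : (x ^ a * y ^ b * z ^ 0) * y = x ^ a * y ^ (b+1) * z ^ 0 := by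
      simp [pow_succ, mul_assoc]
    rw [key]; exact mon_mem_spn (by omega) (by omega)
  | succ c =>
    obtain ⟨e, he⟩ := hZY c
    have key : (x ^ a * y ^ b * z ^ (c+1)) * y
        = ((q*q) ^ (c+1)) • (x ^ a * y ^ (b+1) * z ^ (c+1)) + e • (x ^ a * y ^ b * z ^ c) := by
      rw [mul_assoc, he, mul_add, mul_smul_comm, mul_smul_comm]
      congr 2
      simp only [pow_succ, mul_assoc]
    rw [key]
    exact Submodule.add_mem _
      (Submodule.smul_mem _ _ (mon_mem_spn (by omega) (by omega)))
      (Submodule.smul_mem _ _ (mon_mem_spn (by omega) (by omega)))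

lemma stepz (a b c n : ℕ) (h1 : a + b + c ≤ n) (h2 : (a + b + c + n) % 2 = 0) :
    (x ^ a * y ^ b * z ^ c) * z ∈ spn K x y z (n + 1) := by
  have key : (x ^ a * y ^ b * z ^ c) * z = x ^ a * y ^ b * z ^ (c+1) := by
    rw [mul_assoc, ← pow_succ]
  rw [key]; exact mon_mem_spn (by omega) (by omega)

include hYX hZX hZY in
lemma mul_gen_mem {n : ℕ} {u : U} (hu : u ∈ spn K x y z n) (g : U)
    (hg : g = x ∨ g = y ∨ g = z) : u * g ∈ spn K x y z (n + 1) := by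
  induction hu using Submodule.span_induction with
  | mem w hw =>
    obtain ⟨a, b, c, h1, h2, rfl⟩ := hw
    rcases hg with rfl | rfl | rfl
    · exact stepx hYX hZX a b c n h1 h2
    · exact stepy hZY a b c n h1 h2
    · exact stepz a b c n h1 h2
  | zero => rw [zero_mul]; exact Submodule.zero_mem _
  | add w v _ _ hw hv => rw [add_mul]; exact Submodule.add_mem _ hw hv
  | smul k w _ hw => rw [smul_mul_assoc]; exact Submodule.smul_mem _ _ hw

include hYX hZX hZY in
lemma mul_mon_mem {n : ℕ} {u : U} (hu : u ∈ spn K x y z n) (r s t : ℕ) :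
    u * (x ^ r * y ^ s * z ^ t) ∈ spn K x y z (n + (r + s + t)) := by
  have hx : ∀ r : ℕ, ∀ m : ℕ, ∀ v : U, v ∈ spn K x y z m → v * x ^ r ∈ spn K x y z (m + r) := by
    intro r
    induction r with
    | zero => intro m v hv; simpa using hv
    | succ r ih =>
      intro m v hv
      have := mul_gen_mem hYX hZY hZX (ih m v hv) x (Or.inl rfl)
      rw [pow_succ, ← mul_assoc]
      simpa [add_assoc] using this
  have hy : ∀ s : ℕ, ∀ m : ℕ, ∀ v : U, v ∈ spn K x y z m → v * y ^ s ∈ spn K x y z (m + s) := by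
    intro s
    induction s with
    | zero => intro m v hv; simpa using hv
    | succ s ih =>
      intro m v hv
      have := mul_gen_mem hYX hZY hZX (ih m v hv) y (Or.inr (Or.inl rfl))
      rw [pow_succ, ← mul_assoc]
      simpa [add_assoc] using this
  have hz : ∀ t : ℕ, ∀ m : ℕ, ∀ v : U, v ∈ spn K x y z m → v * z ^ t ∈ spn K x y z (m + t) := by
    intro t
    induction t with
    | zero => intro m v hv; simpa using hv
    | succ t ih =>
      intro m v hv
      have := mul_gen_mem hYX hZY hZX (ih m v hv) z (Or.inr (Or.inr rfl))
      rw [pow_succ, ← mul_assoc]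
      simpa [add_assoc] using this
  have : u * x ^ r * y ^ s * z ^ t ∈ spn K x y z (n + r + s + t) :=
    hz t _ _ (hy s _ _ (hx r _ _ hu))
  simpa [mul_assoc, add_assoc] using this

end Steps

end Aux


/-- The K-subspace of `U_q(sl_2)` spanned by the monomials `x^r y^s z^t`
with `r + s + t` even is a K-subalgebra. -/
theorem stmt_11 (K : Type*) [Field K] (q : K) (hq : q ≠ 0) (hq2 : q ^ 2 ≠ 1)
    (U : Type*) [Ring U] [Algebra K U] (x y yi z : U)
    (hyyi : y * yi = 1) (hyiy : yi * y = 1)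
    (hxy : q • (x * y) - q⁻¹ • (y * x) = (q - q⁻¹) • (1 : U))
    (hyz : q • (y * z) - q⁻¹ • (z * y) = (q - q⁻¹) • (1 : U))
    (hzx : q • (z * x) - q⁻¹ • (x * z) = (q - q⁻¹) • (1 : U))
    (A : Submodule K U)
    (hA : A = Submodule.span K
      {u : U | ∃ r s t : ℕ, Even (r + s + t) ∧ u = x ^ r * y ^ s * z ^ t}) :
    (1 : U) ∈ A ∧ ∀ a ∈ A, ∀ b ∈ A, a * b ∈ A := by
  subst hA
  -- derive the swap relations
  have hyx' : y * x = (q*q) • (x * y) + (q*(q⁻¹-q)) • (1 : U) := by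
    have h1 := congrArg (fun u : U => q • u) hxy
    simp only [smul_sub, smul_smul, mul_inv_cancel₀ hq, one_smul] at h1
    have h2 : y * x = (q*q) • (x * y) - (q*(q-q⁻¹)) • (1 : U) := by
      rw [← h1]; abel
    rw [h2, sub_eq_add_neg, ← neg_smul]
    congr 1
    ring_nf
  have hzy' : z * y = (q*q) • (y * z) + (q*(q⁻¹-q)) • (1 : U) := by
    have h1 := congrArg (fun u : U => q • u) hyz
    simp only [smul_sub, smul_smul, mul_inv_cancel₀ hq, one_smul] at h1
    have h2 : z * y = (q*q) • (y * z) - (q*(q-q⁻¹)) • (1 : U) := by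
      rw [← h1]; abel
    rw [h2, sub_eq_add_neg, ← neg_smul]
    congr 1
    ring_nf
  have hzx' : z * x = (q⁻¹*q⁻¹) • (x * z) + (q⁻¹*(q-q⁻¹)) • (1 : U) := by
    have h1 := congrArg (fun u : U => q⁻¹ • u) hzx
    simp only [smul_sub, smul_smul, inv_mul_cancel₀ hq, one_smul] at h1
    rw [sub_eq_iff_eq_add] at h1
    rw [h1]; abel
  have hYX := swap_pow x y (q*q) (q*(q⁻¹-q)) hyx'
  have hZY := swap_pow y z (q*q) (q*(q⁻¹-q)) hzy'
  have hZX := swap_pow x z (q⁻¹*q⁻¹) (q⁻¹*(q-q⁻¹)) hzx'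
  set S : Set U :=
    {u : U | ∃ r s t : ℕ, Even (r + s + t) ∧ u = x ^ r * y ^ s * z ^ t} with hS
  have hsub : ∀ n : ℕ, n % 2 = 0 → spn K x y z n ≤ Submodule.span K S := by
    intro n hn
    apply Submodule.span_le.2
    rintro u ⟨a, b, c, h1, h2, rfl⟩
    exact Submodule.subset_span ⟨a, b, c, Nat.even_iff.2 (by omega), rfl⟩
  constructor
  · exact Submodule.subset_span ⟨0, 0, 0, by simp, by simp⟩
  · intro a ha b hb
    -- first: generators times b
    have inner : ∀ r s t : ℕ, Even (r + s + t) →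
        (x ^ r * y ^ s * z ^ t) * b ∈ Submodule.span K S := by
      intro r s t hrst
      induction hb using Submodule.span_induction with
      | mem w hw =>
        obtain ⟨r', s', t', hw1, rfl⟩ := hw
        have hm : x ^ r * y ^ s * z ^ t ∈ spn K x y z (r + s + t) :=
          mon_mem_spn le_rfl (by rw [Nat.even_iff] at hrst; omega)
        have := mul_mon_mem hYX hZY hZX hm r' s' t'
        refine hsub _ ?_ this
        rw [Nat.even_iff] at hrst hw1
        omega
      | zero => rw [mul_zero]; exact Submodule.zero_mem _
      | add w v _ _ hw hv => rw [mul_add]; exact Submodule.add_mem _ hw hv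
      | smul k w _ hw => rw [mul_smul_comm]; exact Submodule.smul_mem _ _ hw
    induction ha using Submodule.span_induction with
    | mem w hw =>
      obtain ⟨r, s, t, hw1, rfl⟩ := hw
      exact inner r s t hw1
    | zero => rw [zero_mul]; exact Submodule.zero_mem _
    | add w v _ _ hw hv => rw [add_mul]; exact Submodule.add_mem _ hw hv
    | smul k w _ hw => rw [smul_mul_assoc]; exact Submodule.smul_mem _ _ hw
end

section
/- The subalgebra A of U_q(sl_2) spanned by the monomials x^r y^s z^t with r, s, t ∈ ℕ and r + s + t even is generated as a K-algebra by the three elements ν_x = q(1-yz), ν_y = q(1-zx), ν_z = q(1-xy). -/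
/-! Auxiliary lemmas for the equitable presentation of `U_q(sl_2)`. -/

section UqAux
variable {K : Type*} [Field K] {U : Type*} [Ring U] [Algebra K U] {q : K}

/-- From the equitable relation, express `b*a` in terms of `a*b`. -/
lemma uq_swap1 (hq : q ≠ 0) {a b : U}
    (h : q • (a * b) - q⁻¹ • (b * a) = (q - q⁻¹) • (1 : U)) :
    b * a = (q ^ 2) • (a * b) + (1 - q ^ 2) • (1 : U) := by
  have h1 : q⁻¹ • (b * a) = q • (a * b) - (q - q⁻¹) • (1 : U) := by
    rw [← h, sub_sub_cancel]
  have h2 : b * a = q • (q⁻¹ • (b * a)) := by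
    rw [smul_smul, mul_inv_cancel₀ hq, one_smul]
  rw [h2, h1]
  match_scalars <;> field_simp <;> ring

/-- From the equitable relation, express `a*b` in terms of `b*a`. -/
lemma uq_swap2 (hq : q ≠ 0) {a b : U}
    (h : q • (a * b) - q⁻¹ • (b * a) = (q - q⁻¹) • (1 : U)) :
    a * b = (q ^ 2)⁻¹ • (b * a) + (1 - (q ^ 2)⁻¹) • (1 : U) := by
  have h1 : q • (a * b) = q⁻¹ • (b * a) + (q - q⁻¹) • (1 : U) := by
    rw [← h]; abel
  have h2 : a * b = q⁻¹ • (q • (a * b)) := by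
    rw [smul_smul, inv_mul_cancel₀ hq, one_smul]
  rw [h2, h1]
  match_scalars <;> field_simp <;> ring

/-- The key identity expressing `x*x` via products of `x*y`, `z*x`, `x*z`. -/
lemma uq_sq_identity (hq : q ≠ 0) {x y z : U}
    (hxy : q • (x * y) - q⁻¹ • (y * x) = (q - q⁻¹) • (1 : U))
    (hyz : q • (y * z) - q⁻¹ • (z * y) = (q - q⁻¹) • (1 : U))
    (hzx : q • (z * x) - q⁻¹ • (x * z) = (q - q⁻¹) • (1 : U)) :
    (q ^ 2 - 1) • (x * x) =
      (q ^ 2) • ((x * y) * (z * x)) - (q ^ 2 * q ^ 2) • ((z * x) * (x * y))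
        + (q ^ 2 - 1) • (x * z) + (q ^ 2 * q ^ 2 - q ^ 2) • (x * y) := by
  have e_yx := uq_swap1 hq hxy
  have e_zy := uq_swap1 hq hyz
  have e_zx := uq_swap2 hq hzx
  have f_yx : ∀ w : U, y * (x * w) = (q ^ 2) • (x * (y * w)) + (1 - q ^ 2) • w := by
    intro w
    rw [← mul_assoc, e_yx, add_mul, smul_mul_assoc, smul_mul_assoc, one_mul, mul_assoc]
  have f_zx : ∀ w : U,
      z * (x * w) = (q ^ 2)⁻¹ • (x * (z * w)) + (1 - (q ^ 2)⁻¹) • w := by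
    intro w
    rw [← mul_assoc, e_zx, add_mul, smul_mul_assoc, smul_mul_assoc, one_mul, mul_assoc]
  have hc : (q : K) ^ 2 ≠ 0 := pow_ne_zero _ hq
  rw [show (x * y) * (z * x) = x * (y * (z * x)) from mul_assoc _ _ _,
    show (z * x) * (x * y) = z * (x * (x * y)) from mul_assoc _ _ _]
  simp only [e_zx, f_zx, f_yx, e_zy, mul_add, mul_smul_comm, smul_add, smul_smul, mul_one]
  match_scalars <;> field_simp <;> ring

/-- Membership of `x*x` in a subalgebra containing `x*y` and `z*x`. -/
lemma uq_xx_mem (hq : q ≠ 0) (hq2 : q ^ 2 ≠ 1) {x y z : U}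
    (hxy : q • (x * y) - q⁻¹ • (y * x) = (q - q⁻¹) • (1 : U))
    (hyz : q • (y * z) - q⁻¹ • (z * y) = (q - q⁻¹) • (1 : U))
    (hzx : q • (z * x) - q⁻¹ • (x * z) = (q - q⁻¹) • (1 : U))
    {S : Subalgebra K U} (hxyS : x * y ∈ S) (hzxS : z * x ∈ S) : x * x ∈ S := by
  have hxz : x * z ∈ S := by
    rw [uq_swap1 hq hzx]
    exact add_mem (S.smul_mem hzxS _) (S.smul_mem (one_mem S) _)
  have key := uq_sq_identity hq hxy hyz hzx
  have h1 : (q ^ 2 - 1 : K) ≠ 0 := sub_ne_zero.mpr hq2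
  have h2 : x * x = (q ^ 2 - 1)⁻¹ • ((q ^ 2 - 1) • (x * x)) := by
    rw [smul_smul, inv_mul_cancel₀ h1, one_smul]
  rw [h2, key]
  exact S.smul_mem (add_mem (add_mem (sub_mem (S.smul_mem (mul_mem hxyS hzxS) _)
    (S.smul_mem (mul_mem hzxS hxyS) _)) (S.smul_mem hxz _)) (S.smul_mem hxyS _)) _

end UqAux

section UqSpan

variable (K : Type*) [Field K] (U : Type*) [Ring U] [Algebra K U]

/-- Span of the monomials `x^a y^b z^c` with `a+b+c ≡ p (mod 2)`. -/
def uqMsp (x y z : U) (p : ℕ) : Submodule K U :=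
  Submodule.span K {u : U | ∃ a b c : ℕ, (a + b + c) % 2 = p % 2 ∧ u = x ^ a * y ^ b * z ^ c}

variable {K U}
variable {x y z : U} {cyx dyx czx dzx czy dzy : K}

lemma uqMsp_congr {p p' : ℕ} (h : p % 2 = p' % 2) :
    uqMsp K U x y z p = uqMsp K U x y z p' := by
  unfold uqMsp; rw [h]

lemma uq_mono_mem {a b c p : ℕ} (h : (a + b + c) % 2 = p % 2) :
    x ^ a * y ^ b * z ^ c ∈ uqMsp K U x y z p :=
  Submodule.subset_span ⟨a, b, c, h, rfl⟩

/-- Straightening a power past a generator. -/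
lemma uq_pow_swap {a b : U} {c d : K} (e : b * a = c • (a * b) + d • (1 : U)) :
    ∀ t : ℕ, ∃ cc dd : K, b ^ (t + 1) * a = cc • (a * b ^ (t + 1)) + dd • b ^ t := by
  intro t
  induction t with
  | zero => exact ⟨c, d, by simpa [pow_one] using e⟩
  | succ t ih =>
    obtain ⟨cc, dd, heq⟩ := ih
    refine ⟨cc * c, cc * d + dd, ?_⟩
    rw [show b ^ (t + 2) = b * b ^ (t + 1) from pow_succ' b (t + 1), mul_assoc, heq,
      mul_add, mul_smul_comm, mul_smul_comm, ← mul_assoc, e, add_mul, smul_mul_assoc,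
      smul_mul_assoc, one_mul, mul_assoc, ← pow_succ', ← pow_succ']
    module

lemma uq_pow_swap0 {a b : U} {c d : K} (e : b * a = c • (a * b) + d • (1 : U)) :
    ∀ t : ℕ, ∃ cc dd : K,
      b ^ t * a = cc • (a * b ^ t) + dd • b ^ (t - 1) ∧ (t = 0 → dd = 0) := by
  intro t
  match t with
  | 0 => exact ⟨1, 0, by simp, fun _ => rfl⟩
  | t + 1 =>
    obtain ⟨cc, dd, heq⟩ := uq_pow_swap e t
    exact ⟨cc, dd, by simpa using heq, fun h => absurd h (Nat.succ_ne_zero t)⟩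

lemma uq_mono_mul_x (e_yx : y * x = cyx • (x * y) + dyx • (1 : U))
    (e_zx : z * x = czx • (x * z) + dzx • (1 : U)) (r s t : ℕ) :
    (x ^ r * y ^ s * z ^ t) * x ∈ uqMsp K U x y z (r + s + t + 1) := by
  obtain ⟨c1, d1, h1, hz1⟩ := uq_pow_swap0 e_zx t
  obtain ⟨c2, d2, h2, hz2⟩ := uq_pow_swap0 e_yx s
  have key : (x ^ r * y ^ s * z ^ t) * x =
      (c1 * c2) • (x ^ (r + 1) * y ^ s * z ^ t)
        + (c1 * d2) • (x ^ r * y ^ (s - 1) * z ^ t)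
        + d1 • (x ^ r * y ^ s * z ^ (t - 1)) := by
    rw [mul_assoc, h1, mul_add, mul_smul_comm, mul_smul_comm, ← mul_assoc,
      mul_assoc (x ^ r) (y ^ s) x, h2, mul_add, mul_smul_comm, mul_smul_comm,
      ← mul_assoc, ← pow_succ]
    simp only [add_mul, smul_mul_assoc, mul_assoc]
    module
  rw [key]
  refine add_mem (add_mem (Submodule.smul_mem _ _ ?_) ?_) ?_
  · exact uq_mono_mem (by omega)
  · rcases Nat.eq_zero_or_pos s with hs | hs
    · rw [hz2 hs, mul_zero, zero_smul]; exact zero_mem _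
    · exact Submodule.smul_mem _ _ (uq_mono_mem (by omega))
  · rcases Nat.eq_zero_or_pos t with ht | ht
    · rw [hz1 ht, zero_smul]; exact zero_mem _
    · exact Submodule.smul_mem _ _ (uq_mono_mem (by omega))

lemma uq_mono_mul_y (e_zy : z * y = czy • (y * z) + dzy • (1 : U)) (r s t : ℕ) :
    (x ^ r * y ^ s * z ^ t) * y ∈ uqMsp K U x y z (r + s + t + 1) := by
  obtain ⟨c1, d1, h1, hz1⟩ := uq_pow_swap0 e_zy t
  have key : (x ^ r * y ^ s * z ^ t) * y =
      c1 • (x ^ r * y ^ (s + 1) * z ^ t) + d1 • (x ^ r * y ^ s * z ^ (t - 1)) := by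
    rw [mul_assoc, h1, mul_add, mul_smul_comm, mul_smul_comm, ← mul_assoc,
      mul_assoc (x ^ r) (y ^ s) y, ← pow_succ]
  rw [key]
  refine add_mem (Submodule.smul_mem _ _ (uq_mono_mem (by omega))) ?_
  rcases Nat.eq_zero_or_pos t with ht | ht
  · rw [hz1 ht, zero_smul]; exact zero_mem _
  · exact Submodule.smul_mem _ _ (uq_mono_mem (by omega))

lemma uq_mono_mul_z (r s t : ℕ) :
    (x ^ r * y ^ s * z ^ t) * z ∈ uqMsp K U x y z (r + s + t + 1) := by
  have key : (x ^ r * y ^ s * z ^ t) * z = x ^ r * y ^ s * z ^ (t + 1) := by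
    rw [mul_assoc, ← pow_succ]
  rw [key]
  exact uq_mono_mem (by omega)

section
variable (e_yx : y * x = cyx • (x * y) + dyx • (1 : U))
    (e_zx : z * x = czx • (x * z) + dzx • (1 : U))
    (e_zy : z * y = czy • (y * z) + dzy • (1 : U))

include e_yx e_zx in
lemma uq_msp_mul_x {p : ℕ} {u : U} (hu : u ∈ uqMsp K U x y z p) :
    u * x ∈ uqMsp K U x y z (p + 1) := by
  induction hu using Submodule.span_induction with
  | mem u h =>
    obtain ⟨a, b, c, hp, rfl⟩ := h
    have := uq_mono_mul_x e_yx e_zx a b c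
    rwa [uqMsp_congr (show (a + b + c + 1) % 2 = (p + 1) % 2 by omega)] at this
  | zero => rw [zero_mul]; exact zero_mem _
  | add u v _ _ hu hv => rw [add_mul]; exact add_mem hu hv
  | smul a u _ hu => rw [smul_mul_assoc]; exact Submodule.smul_mem _ _ hu

include e_zy in
lemma uq_msp_mul_y {p : ℕ} {u : U} (hu : u ∈ uqMsp K U x y z p) :
    u * y ∈ uqMsp K U x y z (p + 1) := by
  induction hu using Submodule.span_induction with
  | mem u h =>
    obtain ⟨a, b, c, hp, rfl⟩ := h
    have := uq_mono_mul_y (x := x) e_zy a b c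
    rwa [uqMsp_congr (show (a + b + c + 1) % 2 = (p + 1) % 2 by omega)] at this
  | zero => rw [zero_mul]; exact zero_mem _
  | add u v _ _ hu hv => rw [add_mul]; exact add_mem hu hv
  | smul a u _ hu => rw [smul_mul_assoc]; exact Submodule.smul_mem _ _ hu

lemma uq_msp_mul_z {p : ℕ} {u : U} (hu : u ∈ uqMsp K U x y z p) :
    u * z ∈ uqMsp K U x y z (p + 1) := by
  induction hu using Submodule.span_induction with
  | mem u h =>
    obtain ⟨a, b, c, hp, rfl⟩ := h
    have := uq_mono_mul_z (K := K) (x := x) (y := y) (z := z) a b c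
    rwa [uqMsp_congr (show (a + b + c + 1) % 2 = (p + 1) % 2 by omega)] at this
  | zero => rw [zero_mul]; exact zero_mem _
  | add u v _ _ hu hv => rw [add_mul]; exact add_mem hu hv
  | smul a u _ hu => rw [smul_mul_assoc]; exact Submodule.smul_mem _ _ hu

include e_yx e_zx e_zy in
lemma uq_msp_mul_mono {p : ℕ} {u : U} (hu : u ∈ uqMsp K U x y z p) (r s t : ℕ) :
    u * (x ^ r * y ^ s * z ^ t) ∈ uqMsp K U x y z (p + r + s + t) := by
  have hx : ∀ (r : ℕ) {p : ℕ} {u : U}, u ∈ uqMsp K U x y z p →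
      u * x ^ r ∈ uqMsp K U x y z (p + r) := by
    intro r
    induction r with
    | zero => intro p u hu; simpa using hu
    | succ r ih =>
      intro p u hu
      rw [pow_succ, ← mul_assoc]
      exact uq_msp_mul_x e_yx e_zx (ih hu)
  have hy : ∀ (s : ℕ) {p : ℕ} {u : U}, u ∈ uqMsp K U x y z p →
      u * y ^ s ∈ uqMsp K U x y z (p + s) := by
    intro s
    induction s with
    | zero => intro p u hu; simpa using hu
    | succ s ih =>
      intro p u hu
      rw [pow_succ, ← mul_assoc]
      exact uq_msp_mul_y e_zy (ih hu)
  have hz : ∀ (t : ℕ) {p : ℕ} {u : U}, u ∈ uqMsp K U x y z p →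
      u * z ^ t ∈ uqMsp K U x y z (p + t) := by
    intro t
    induction t with
    | zero => intro p u hu; simpa using hu
    | succ t ih =>
      intro p u hu
      rw [pow_succ, ← mul_assoc]
      exact uq_msp_mul_z (ih hu)
  rw [← mul_assoc, ← mul_assoc]
  exact hz t (hy s (hx r hu))

include e_yx e_zx e_zy in
lemma uq_msp_mul_mem {u v : U} (hu : u ∈ uqMsp K U x y z 0)
    (hv : v ∈ uqMsp K U x y z 0) : u * v ∈ uqMsp K U x y z 0 := by
  induction hv using Submodule.span_induction with
  | mem v h =>
    obtain ⟨a, b, c, hp, rfl⟩ := h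
    have := uq_msp_mul_mono e_yx e_zx e_zy hu a b c
    rwa [uqMsp_congr (show (0 + a + b + c) % 2 = 0 % 2 by omega)] at this
  | zero => rw [mul_zero]; exact zero_mem _
  | add v w _ _ hv hw => rw [mul_add]; exact add_mem hv hw
  | smul a v _ hv => rw [mul_smul_comm]; exact Submodule.smul_mem _ _ hv

end

lemma uq_msp_one_mem : (1 : U) ∈ uqMsp K U x y z 0 := by
  have := uq_mono_mem (K := K) (x := x) (y := y) (z := z)
    (a := 0) (b := 0) (c := 0) (p := 0) rfl
  simpa using this

end UqSpan

section UqEven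
variable {K : Type*} [Field K] {U : Type*} [Ring U] [Algebra K U]

lemma uq_even_mono_mem (S : Subalgebra K U) {x y z : U}
    (hx2 : x * x ∈ S) (hy2 : y * y ∈ S) (hz2 : z * z ∈ S)
    (hxy : x * y ∈ S) (hyz : y * z ∈ S) (hxz : x * z ∈ S) :
    ∀ r s t : ℕ, Even (r + s + t) → x ^ r * y ^ s * z ^ t ∈ S := by
  have hxp : ∀ n : ℕ, x ^ (2 * n) ∈ S := fun n => by
    rw [pow_mul, sq]; exact pow_mem hx2 n
  have hyp : ∀ n : ℕ, y ^ (2 * n) ∈ S := fun n => by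
    rw [pow_mul, sq]; exact pow_mem hy2 n
  have hzp : ∀ n : ℕ, z ^ (2 * n) ∈ S := fun n => by
    rw [pow_mul, sq]; exact pow_mem hz2 n
  intro r s t hev
  obtain ⟨k, hk⟩ := hev
  rcases Nat.even_or_odd r with ⟨a, ha⟩ | ⟨a, ha⟩ <;>
    rcases Nat.even_or_odd s with ⟨b, hb⟩ | ⟨b, hb⟩ <;>
      rcases Nat.even_or_odd t with ⟨c, hc⟩ | ⟨c, hc⟩ <;> subst ha hb hc
  · rw [show a + a = 2 * a by ring, show b + b = 2 * b by ring, show c + c = 2 * c by ring]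
    exact mul_mem (mul_mem (hxp a) (hyp b)) (hzp c)
  · omega
  · omega
  · have key : x ^ (a + a) * y ^ (2 * b + 1) * z ^ (2 * c + 1) =
        x ^ (2 * a) * y ^ (2 * b) * ((y * z) * z ^ (2 * c)) := by
      rw [show a + a = 2 * a by ring, pow_succ, pow_succ' z]
      simp only [mul_assoc]
    rw [key]
    exact mul_mem (mul_mem (hxp a) (hyp b)) (mul_mem hyz (hzp c))
  · omega
  · rcases b with _ | b
    · have key : x ^ (2 * a + 1) * y ^ (0 + 0) * z ^ (2 * c + 1) =
          x ^ (2 * a) * ((x * z) * z ^ (2 * c)) := by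
        rw [pow_succ, pow_succ' z]
        simp only [show (0 + 0 : ℕ) = 0 from rfl, pow_zero, one_mul, mul_one, mul_assoc]
      rw [key]
      exact mul_mem (hxp a) (mul_mem hxz (hzp c))
    · have key : x ^ (2 * a + 1) * y ^ (b + 1 + (b + 1)) * z ^ (2 * c + 1) =
          x ^ (2 * a) * ((x * y) * (y ^ (2 * b) * ((y * z) * z ^ (2 * c)))) := by
        rw [show b + 1 + (b + 1) = 1 + (2 * b + 1) by ring, pow_add y 1 (2 * b + 1), pow_one,
          pow_succ y (2 * b), pow_succ x (2 * a), pow_succ' z]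
        simp only [mul_assoc]
      rw [key]
      exact mul_mem (hxp a) (mul_mem hxy (mul_mem (hyp b) (mul_mem hyz (hzp c))))
  · have key : x ^ (2 * a + 1) * y ^ (2 * b + 1) * z ^ (c + c) =
        x ^ (2 * a) * ((x * y) * (y ^ (2 * b) * z ^ (2 * c))) := by
      rw [show c + c = 2 * c by ring, pow_succ x (2 * a), pow_succ' y]
      simp only [mul_assoc]
    rw [key]
    exact mul_mem (hxp a) (mul_mem hxy (mul_mem (hyp b) (hzp c)))
  · omega

end UqEven

/-- The subalgebra `A` of `U_q(sl_2)` spanned by the monomials `x^r y^s z^t`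
with `r + s + t` even is generated as a K-algebra by `ν_x, ν_y, ν_z`. -/
theorem stmt_12 (K : Type*) [Field K] (q : K) (hq : q ≠ 0) (hq2 : q ^ 2 ≠ 1)
    (U : Type*) [Ring U] [Algebra K U] (x y yi z : U)
    (hyyi : y * yi = 1) (hyiy : yi * y = 1)
    (hxy : q • (x * y) - q⁻¹ • (y * x) = (q - q⁻¹) • (1 : U))
    (hyz : q • (y * z) - q⁻¹ • (z * y) = (q - q⁻¹) • (1 : U))
    (hzx : q • (z * x) - q⁻¹ • (x * z) = (q - q⁻¹) • (1 : U))
    (νx νy νz : U)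
    (hνx : νx = q • ((1 : U) - y * z))
    (hνy : νy = q • ((1 : U) - z * x))
    (hνz : νz = q • ((1 : U) - x * y)) :
    (Algebra.adjoin K {νx, νy, νz} : Set U) =
      (Submodule.span K
        {u : U | ∃ r s t : ℕ, Even (r + s + t) ∧ u = x ^ r * y ^ s * z ^ t} : Set U) := by
  have e_yx := uq_swap1 hq hxy
  have e_zy := uq_swap1 hq hyz
  have e_xz := uq_swap1 hq hzx
  have e_zx := uq_swap2 hq hzx
  -- the span in the statement is `uqMsp K U x y z 0`
  have hspan : uqMsp K U x y z 0 = Submodule.span K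
      {u : U | ∃ r s t : ℕ, Even (r + s + t) ∧ u = x ^ r * y ^ s * z ^ t} := by
    unfold uqMsp
    congr 1
    ext u
    constructor
    · rintro ⟨r, s, t, h, rfl⟩
      exact ⟨r, s, t, Nat.even_iff.mpr (by omega), rfl⟩
    · rintro ⟨r, s, t, h, rfl⟩
      exact ⟨r, s, t, by rw [Nat.even_iff] at h; omega, rfl⟩
  apply Set.Subset.antisymm
  · -- adjoin ⊆ span
    intro u hu
    have hAsub : Algebra.adjoin K {νx, νy, νz} ≤
        (uqMsp K U x y z 0).toSubalgebra uq_msp_one_mem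
          (fun a b ha hb => uq_msp_mul_mem e_yx e_zx e_zy ha hb) := by
      apply Algebra.adjoin_le
      rintro w hw
      simp only [Set.mem_insert_iff, Set.mem_singleton_iff] at hw
      rcases hw with h | h | h
      · rw [h]
        show νx ∈ uqMsp K U x y z 0
        rw [hνx]
        refine Submodule.smul_mem _ _ (sub_mem uq_msp_one_mem ?_)
        have := uq_mono_mem (K := K) (x := x) (y := y) (z := z)
          (a := 0) (b := 1) (c := 1) (p := 0) rfl
        simpa using this
      · rw [h]
        show νy ∈ uqMsp K U x y z 0
        rw [hνy, e_zx]
        have hxz1 : x * z ∈ uqMsp K U x y z 0 := by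
          have := uq_mono_mem (K := K) (x := x) (y := y) (z := z)
            (a := 1) (b := 0) (c := 1) (p := 0) rfl
          simpa using this
        exact Submodule.smul_mem _ _ (sub_mem uq_msp_one_mem
          (add_mem (Submodule.smul_mem _ _ hxz1)
            (Submodule.smul_mem _ _ uq_msp_one_mem)))
      · rw [h]
        show νz ∈ uqMsp K U x y z 0
        rw [hνz]
        refine Submodule.smul_mem _ _ (sub_mem uq_msp_one_mem ?_)
        have := uq_mono_mem (K := K) (x := x) (y := y) (z := z)
          (a := 1) (b := 1) (c := 0) (p := 0) rfl
        simpa using this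
    have h1 : u ∈ uqMsp K U x y z 0 := hAsub hu
    rw [hspan] at h1
    exact h1
  · -- span ⊆ adjoin
    set S := Algebra.adjoin K {νx, νy, νz} with hS
    have hνxS : νx ∈ S := Algebra.subset_adjoin (by simp)
    have hνyS : νy ∈ S := Algebra.subset_adjoin (by simp)
    have hνzS : νz ∈ S := Algebra.subset_adjoin (by simp)
    have m_xy : x * y ∈ S := by
      have h : q⁻¹ • νz = 1 - x * y := by
        rw [hνz, smul_smul, inv_mul_cancel₀ hq, one_smul]
      have h2 : x * y = (1 : U) - q⁻¹ • νz := by rw [h, sub_sub_cancel]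
      rw [h2]
      exact sub_mem (one_mem S) (S.smul_mem hνzS _)
    have m_yz : y * z ∈ S := by
      have h : q⁻¹ • νx = 1 - y * z := by
        rw [hνx, smul_smul, inv_mul_cancel₀ hq, one_smul]
      have h2 : y * z = (1 : U) - q⁻¹ • νx := by rw [h, sub_sub_cancel]
      rw [h2]
      exact sub_mem (one_mem S) (S.smul_mem hνxS _)
    have m_zx : z * x ∈ S := by
      have h : q⁻¹ • νy = 1 - z * x := by
        rw [hνy, smul_smul, inv_mul_cancel₀ hq, one_smul]
      have h2 : z * x = (1 : U) - q⁻¹ • νy := by rw [h, sub_sub_cancel]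
      rw [h2]
      exact sub_mem (one_mem S) (S.smul_mem hνyS _)
    have m_xz : x * z ∈ S := by
      rw [e_xz]
      exact add_mem (S.smul_mem m_zx _) (S.smul_mem (one_mem S) _)
    have hx2 : x * x ∈ S := uq_xx_mem hq hq2 hxy hyz hzx m_xy m_zx
    have hy2 : y * y ∈ S := uq_xx_mem hq hq2 hyz hzx hxy m_yz m_xy
    have hz2 : z * z ∈ S := uq_xx_mem hq hq2 hzx hxy hyz m_zx m_yz
    have hle : Submodule.span K
        {u : U | ∃ r s t : ℕ, Even (r + s + t) ∧ u = x ^ r * y ^ s * z ^ t} ≤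
        Subalgebra.toSubmodule S := by
      rw [Submodule.span_le]
      rintro u ⟨r, s, t, hev, rfl⟩
      exact uq_even_mono_mem S hx2 hy2 hz2 m_xy m_yz m_xz r s t hev
    intro u hu
    exact hle hu
end

section
/- Assume q^4 ≠ 1. Then the subalgebra A of U_q(sl_2) spanned by the monomials x^r y^s z^t with r + s + t even is generated as a K-algebra by x^2, y^2, z^2. -/
section Aux
variable {K U : Type*} [Field K] [Ring U] [Algebra K U]



lemma uqA_key_mul (u v : K) (a b : U) (e : b * a = u • (a * b) + v • (1:U)) (w : U) :
    b * (a * w) = u • (a * (b * w)) + v • w := by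
  rw [← mul_assoc, e, add_mul, smul_mul_assoc, smul_mul_assoc, one_mul, mul_assoc]

lemma uqA_comm_pow (u v : K) (a b : U) (e : b * a = u • (a * b) + v • (1:U)) (n : ℕ) :
    ∃ c : K, b ^ n * a = u ^ n • (a * b ^ n) + c • b ^ (n-1) ∧ (n = 0 → c = 0) := by
  induction n with
  | zero => exact ⟨0, by simp, fun _ => rfl⟩
  | succ m ih =>
    obtain ⟨c, hc, hc0⟩ := ih
    rcases Nat.eq_zero_or_pos m with rfl | hm
    · exact ⟨v, by simpa using e, by simp⟩
    · refine ⟨u ^ m * v + c, ?_, by omega⟩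
      have h1 : b ^ (m+1) * a = b * (b ^ m * a) := by rw [pow_succ', mul_assoc]
      rw [h1, hc, mul_add, mul_smul_comm, mul_smul_comm, uqA_key_mul u v a b e (b ^ m)]
      have h2 : b * b ^ (m-1) = b ^ m := by
        rw [← pow_succ']; congr 1; omega
      rw [h2, show b * b ^ m = b ^ (m+1) from (pow_succ' b m).symm]
      simp only [Nat.add_sub_cancel]
      module

lemma uqA_pair_mem (A : Subalgebra K U) (u v : K)
    (huv : u * v * (u+1)^2 ≠ 0) (a b : U) (e : b * a = u • (a * b) + v • (1:U))
    (ha : a * a ∈ A) (hb : b * b ∈ A) : a * b ∈ A := by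
  have k1 := uqA_key_mul u v a b e
  have h1 : (b*b)*(a*a) = (u^4) • ((a*a)*(b*b)) + (u*v*(u+1)^2) • (a*b)
      + (v^2*(u+1)) • (1:U) := by
    calc (b*b)*(a*a) = b*(b*(a*a)) := by rw [mul_assoc]
      _ = b*(u•(a*(b*a)) + v•a) := by rw [k1 a]
      _ = u•(b*(a*(b*a))) + v•(b*a) := by rw [mul_add, mul_smul_comm, mul_smul_comm]
      _ = u•(u•(a*(b*(b*a))) + v•(b*a)) + v•(b*a) := by rw [k1 (b*a)]
      _ = u•(u•(a*(b*(u•(a*b) + v•1))) + v•(b*a)) + v•(b*a) := by rw [← e]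
      _ = u•(u•(a*(u•(b*(a*b)) + v•b)) + v•(b*a)) + v•(b*a) := by
          rw [mul_add, mul_smul_comm, mul_smul_comm, mul_one]
      _ = u•(u•(a*(u•(u•(a*(b*b)) + v•b) + v•b)) + v•(b*a)) + v•(b*a) := by rw [k1 b]
      _ = u•(u•(a*(u•(u•(a*(b*b)) + v•b) + v•b)) + v•(u•(a*b) + v•1))
          + v•(u•(a*b) + v•1) := by rw [e]
      _ = (u^4) • (a*(a*(b*b))) + (u*v*(u+1)^2) • (a*b) + (v^2*(u+1)) • (1:U) := by
          simp only [mul_add, mul_smul_comm, smul_add, smul_smul]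
          module
      _ = (u^4) • ((a*a)*(b*b)) + (u*v*(u+1)^2) • (a*b) + (v^2*(u+1)) • (1:U) := by
          rw [mul_assoc a a (b*b)]
  have h2 : a*b = (u*v*(u+1)^2)⁻¹ • ((b*b)*(a*a) - (u^4) • ((a*a)*(b*b))
      - (v^2*(u+1)) • (1:U)) := by
    rw [h1]
    rw [show ∀ X Y Z : U, X + Y + Z - X - Z = Y from fun X Y Z => by abel]
    rw [smul_smul, inv_mul_cancel₀ huv, one_smul]
  rw [h2]
  exact A.smul_mem (A.sub_mem (A.sub_mem (A.mul_mem hb ha)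
    (A.smul_mem (A.mul_mem ha hb) _)) (A.smul_mem A.one_mem _)) _

def uqA_msp (x y z : U) (k : ℕ) : Set U :=
  {u : U | ∃ r s t : ℕ, (r + s + t) % 2 = k % 2 ∧ u = x ^ r * y ^ s * z ^ t}

lemma uqA_msp_congr (x y z : U) {k k' : ℕ} (h : k % 2 = k' % 2) :
    uqA_msp x y z k = uqA_msp x y z k' := by
  unfold uqA_msp; rw [h]

lemma uqA_mono_mem_span (x y z : U) {k r s t : ℕ} (h : (r+s+t) % 2 = k % 2) (w : U)
    (hw : w = x ^ r * y ^ s * z ^ t) :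
    w ∈ Submodule.span K (uqA_msp x y z k) :=
  Submodule.subset_span ⟨r, s, t, h, hw⟩

variable (x y z : U)

lemma uqA_mul_z_mem {k r s t : ℕ} (h : (r+s+t) % 2 = k % 2) :
    (x^r*y^s*z^t)*z ∈ Submodule.span K (uqA_msp x y z (k+1)) :=
  uqA_mono_mem_span x y z (r := r) (s := s) (t := t+1) (by omega) _
    (by rw [mul_assoc, ← pow_succ])

lemma uqA_mul_y_mem (uzy vzy : K) (ezy : z * y = uzy • (y * z) + vzy • (1:U))
    {k r s t : ℕ} (h : (r+s+t) % 2 = k % 2) :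
    (x^r*y^s*z^t)*y ∈ Submodule.span K (uqA_msp x y z (k+1)) := by
  obtain ⟨c, hc, hc0⟩ := uqA_comm_pow uzy vzy y z ezy t
  rw [mul_assoc, hc, mul_add, mul_smul_comm, mul_smul_comm]
  apply add_mem
  · exact Submodule.smul_mem _ _ (uqA_mono_mem_span x y z (r := r) (s := s+1) (t := t)
      (by omega) _ (by simp [pow_succ, mul_assoc]))
  · rcases t with _|t'
    · rw [hc0 rfl, zero_smul]; exact zero_mem _
    · exact Submodule.smul_mem _ _ (uqA_mono_mem_span x y z (r := r) (s := s) (t := t')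
        (by omega) _ (by norm_num))

lemma uqA_mul_x_mem (uyx vyx uzx vzx : K)
    (eyx : y * x = uyx • (x * y) + vyx • (1:U))
    (ezx : z * x = uzx • (x * z) + vzx • (1:U))
    {k r s t : ℕ} (h : (r+s+t) % 2 = k % 2) :
    (x^r*y^s*z^t)*x ∈ Submodule.span K (uqA_msp x y z (k+1)) := by
  obtain ⟨cz, hcz, hcz0⟩ := uqA_comm_pow uzx vzx x z ezx t
  obtain ⟨cy, hcy, hcy0⟩ := uqA_comm_pow uyx vyx x y eyx s
  rw [mul_assoc, hcz, mul_add, mul_smul_comm, mul_smul_comm]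
  apply add_mem
  · apply Submodule.smul_mem
    have E2 : x^r*y^s*(x*z^t)
        = uyx^s • (x^(r+1)*y^s*z^t) + cy • (x^r*y^(s-1)*z^t) := by
      have h3 : x^r*y^s*(x*z^t) = x^r*((y^s*x)*z^t) := by simp [mul_assoc]
      rw [h3, hcy, add_mul, smul_mul_assoc, smul_mul_assoc, mul_add,
        mul_smul_comm, mul_smul_comm]
      congr 1
      · congr 1; simp [pow_succ, mul_assoc]
      · congr 1; simp [mul_assoc]
    rw [E2]
    apply add_mem
    · exact Submodule.smul_mem _ _ (uqA_mono_mem_span x y z (r := r+1) (s := s) (t := t)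
        (by omega) _ rfl)
    · rcases s with _|s'
      · rw [hcy0 rfl, zero_smul]; exact zero_mem _
      · exact Submodule.smul_mem _ _ (uqA_mono_mem_span x y z (r := r) (s := s') (t := t)
          (by omega) _ (by norm_num))
  · rcases t with _|t'
    · rw [hcz0 rfl, zero_smul]; exact zero_mem _
    · exact Submodule.smul_mem _ _ (uqA_mono_mem_span x y z (r := r) (s := s) (t := t')
        (by omega) _ (by norm_num))

lemma uqA_span_mul (g : U)
    (hg : ∀ {k r s t : ℕ}, (r+s+t) % 2 = k % 2 →
      (x^r*y^s*z^t)*g ∈ Submodule.span K (uqA_msp x y z (k+1)))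
    {k : ℕ} {w : U} (hw : w ∈ Submodule.span K (uqA_msp x y z k)) :
    w * g ∈ Submodule.span K (uqA_msp x y z (k+1)) := by
  refine Submodule.span_induction ?_ ?_ ?_ ?_ hw
  · rintro w ⟨r, s, t, hp, rfl⟩; exact hg hp
  · rw [zero_mul]; exact zero_mem _
  · intro a b _ _ ha hb; rw [add_mul]; exact add_mem ha hb
  · intro c a _ h; rw [smul_mul_assoc]; exact Submodule.smul_mem _ _ h

lemma uqA_mul_zpow (t' : ℕ) : ∀ (k : ℕ) (w : U), w ∈ Submodule.span K (uqA_msp x y z k) →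
    w * z^t' ∈ Submodule.span K (uqA_msp x y z (k+t')) := by
  induction t' with
  | zero => intro k w hw; simpa using hw
  | succ n ih =>
    intro k w hw
    have h1 : w * z^(n+1) = (w*z) * z^n := by rw [pow_succ', ← mul_assoc]
    rw [h1, show k+(n+1) = (k+1)+n by omega]
    exact ih (k+1) (w*z) (uqA_span_mul x y z z (fun hp => uqA_mul_z_mem x y z hp) hw)

lemma uqA_mul_ypow_zpow (uzy vzy : K) (ezy : z * y = uzy • (y * z) + vzy • (1:U))
    (s' t' : ℕ) : ∀ (k : ℕ) (w : U), w ∈ Submodule.span K (uqA_msp x y z k) →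
    w * (y^s' * z^t') ∈ Submodule.span K (uqA_msp x y z (k+(s'+t'))) := by
  induction s' with
  | zero => intro k w hw; rw [pow_zero, one_mul, show k+(0+t') = k+t' by omega]
            exact uqA_mul_zpow x y z t' k w hw
  | succ n ih =>
    intro k w hw
    have h1 : w * (y^(n+1) * z^t') = (w*y) * (y^n * z^t') := by
      rw [pow_succ', mul_assoc, ← mul_assoc]
    rw [h1, show k+(n+1+t') = (k+1)+(n+t') by omega]
    exact ih (k+1) (w*y) (uqA_span_mul x y z y (fun hp => uqA_mul_y_mem x y z uzy vzy ezy hp) hw)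

lemma uqA_mul_mono (uyx vyx uzx vzx uzy vzy : K)
    (eyx : y * x = uyx • (x * y) + vyx • (1:U))
    (ezx : z * x = uzx • (x * z) + vzx • (1:U))
    (ezy : z * y = uzy • (y * z) + vzy • (1:U))
    (r' s' t' : ℕ) : ∀ (k : ℕ) (w : U), w ∈ Submodule.span K (uqA_msp x y z k) →
    w * (x^r' * y^s' * z^t') ∈ Submodule.span K (uqA_msp x y z (k+(r'+s'+t'))) := by
  induction r' with
  | zero => intro k w hw
            rw [pow_zero, one_mul, show k+(0+s'+t') = k+(s'+t') by omega]
            exact uqA_mul_ypow_zpow x y z uzy vzy ezy s' t' k w hw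
  | succ n ih =>
    intro k w hw
    have h1 : w * (x^(n+1) * y^s' * z^t') = (w*x) * (x^n * y^s' * z^t') := by
      rw [pow_succ']; simp only [mul_assoc]
    rw [h1, show k+(n+1+s'+t') = (k+1)+(n+s'+t') by omega]
    exact ih (k+1) (w*x)
      (uqA_span_mul x y z x (fun hp => uqA_mul_x_mem x y z uyx vyx uzx vzx eyx ezx hp) hw)

end Aux

/-- If `q⁴ ≠ 1`, the subalgebra `A` of `U_q(sl_2)` spanned by the monomials
`x^r y^s z^t` with `r + s + t` even is generated as a K-algebra by `x², y², z²`. -/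
theorem stmt_13 (K : Type*) [Field K] (q : K) (hq : q ≠ 0) (hq2 : q ^ 2 ≠ 1)
    (hq4 : q ^ 4 ≠ 1)
    (U : Type*) [Ring U] [Algebra K U] (x y yi z : U)
    (hyyi : y * yi = 1) (hyiy : yi * y = 1)
    (hxy : q • (x * y) - q⁻¹ • (y * x) = (q - q⁻¹) • (1 : U))
    (hyz : q • (y * z) - q⁻¹ • (z * y) = (q - q⁻¹) • (1 : U))
    (hzx : q • (z * x) - q⁻¹ • (x * z) = (q - q⁻¹) • (1 : U)) :
    (Algebra.adjoin K {x ^ 2, y ^ 2, z ^ 2} : Set U) =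
      (Submodule.span K
        {u : U | ∃ r s t : ℕ, Even (r + s + t) ∧ u = x ^ r * y ^ s * z ^ t} : Set U) := by
  have hα : q - q⁻¹ ≠ 0 := by
    intro h
    apply hq2
    have h1 : q = q⁻¹ := sub_eq_zero.mp h
    rw [sq]; nth_rewrite 2 [h1]; exact mul_inv_cancel₀ hq
  have hq21 : q ^ 2 + 1 ≠ 0 := by
    intro h
    apply hq4
    have h1 : q ^ 2 = -1 := by linear_combination h
    rw [show (4:ℕ) = 2*2 from rfl, pow_mul, h1]; ring
  have hqi21 : (q⁻¹) ^ 2 + 1 ≠ 0 := by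
    have key : ((q⁻¹) ^ 2 + 1) * q ^ 2 = (q⁻¹*q)^2 + q ^ 2 := by ring
    intro h
    apply hq21
    have h2 : ((q⁻¹) ^ 2 + 1) * q ^ 2 = q^2 + 1 := by
      rw [key, inv_mul_cancel₀ hq]; ring
    rw [← h2, h, zero_mul]
  -- straightening relations
  have eyx : y * x = (q^2) • (x*y) + (-(q*(q-q⁻¹))) • (1:U) := by
    have h1 := congrArg (fun w => q • w) hxy
    simp only [smul_sub, smul_smul, mul_inv_cancel₀ hq, one_smul] at h1
    have h2 := sub_eq_iff_eq_add.mp h1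
    have h3 : y*x = (q*q) • (x*y) - (q*(q-q⁻¹)) • (1:U) := by rw [h2]; abel
    rw [h3]; module
  have ezy : z * y = (q^2) • (y*z) + (-(q*(q-q⁻¹))) • (1:U) := by
    have h1 := congrArg (fun w => q • w) hyz
    simp only [smul_sub, smul_smul, mul_inv_cancel₀ hq, one_smul] at h1
    have h2 := sub_eq_iff_eq_add.mp h1
    have h3 : z*y = (q*q) • (y*z) - (q*(q-q⁻¹)) • (1:U) := by rw [h2]; abel
    rw [h3]; module
  have exz : x * z = (q^2) • (z*x) + (-(q*(q-q⁻¹))) • (1:U) := by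
    have h1 := congrArg (fun w => q • w) hzx
    simp only [smul_sub, smul_smul, mul_inv_cancel₀ hq, one_smul] at h1
    have h2 := sub_eq_iff_eq_add.mp h1
    have h3 : x*z = (q*q) • (z*x) - (q*(q-q⁻¹)) • (1:U) := by rw [h2]; abel
    rw [h3]; module
  have ezx : z * x = ((q⁻¹)^2) • (x*z) + (q⁻¹*(q-q⁻¹)) • (1:U) := by
    have h1 := congrArg (fun w => q⁻¹ • w) hzx
    simp only [smul_sub, smul_smul, inv_mul_cancel₀ hq, one_smul] at h1
    have h2 := sub_eq_iff_eq_add.mp h1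
    rw [h2]; module
  have eyz : y * z = ((q⁻¹)^2) • (z*y) + (q⁻¹*(q-q⁻¹)) • (1:U) := by
    have h1 := congrArg (fun w => q⁻¹ • w) hyz
    simp only [smul_sub, smul_smul, inv_mul_cancel₀ hq, one_smul] at h1
    have h2 := sub_eq_iff_eq_add.mp h1
    rw [h2]; module
  set A := Algebra.adjoin K {x ^ 2, y ^ 2, z ^ 2} with hA
  -- memberships in A
  have hxA : x^2 ∈ A := Algebra.subset_adjoin (by simp)
  have hyA : y^2 ∈ A := Algebra.subset_adjoin (by simp)
  have hzA : z^2 ∈ A := Algebra.subset_adjoin (by simp)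
  have hxx : x*x ∈ A := by rw [← pow_two]; exact hxA
  have hyy : y*y ∈ A := by rw [← pow_two]; exact hyA
  have hzz : z*z ∈ A := by rw [← pow_two]; exact hzA
  have hxe : ∀ n, x^(2*n) ∈ A := fun n => by rw [pow_mul]; exact pow_mem hxA n
  have hye : ∀ n, y^(2*n) ∈ A := fun n => by rw [pow_mul]; exact pow_mem hyA n
  have hze : ∀ n, z^(2*n) ∈ A := fun n => by rw [pow_mul]; exact pow_mem hzA n
  have hnz1 : (q^2) * (-(q*(q-q⁻¹))) * ((q^2)+1)^2 ≠ 0 :=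
    mul_ne_zero (mul_ne_zero (pow_ne_zero 2 hq) (neg_ne_zero.mpr (mul_ne_zero hq hα)))
      (pow_ne_zero 2 hq21)
  have hnz2 : ((q⁻¹)^2) * (q⁻¹*(q-q⁻¹)) * (((q⁻¹)^2)+1)^2 ≠ 0 :=
    mul_ne_zero (mul_ne_zero (pow_ne_zero 2 (inv_ne_zero hq))
      (mul_ne_zero (inv_ne_zero hq) hα)) (pow_ne_zero 2 hqi21)
  have hxyA : x*y ∈ A := uqA_pair_mem A (q^2) (-(q*(q-q⁻¹))) hnz1 x y eyx hxx hyy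
  have hyzA : y*z ∈ A := uqA_pair_mem A (q^2) (-(q*(q-q⁻¹))) hnz1 y z ezy hyy hzz
  have hxzA : x*z ∈ A := uqA_pair_mem A ((q⁻¹)^2) (q⁻¹*(q-q⁻¹)) hnz2 x z ezx hxx hzz
  -- the middle-term lemma for the (odd, even, odd) case
  have hmid : ∀ b : ℕ, x*(y^(2*b)*z) ∈ A := by
    intro b
    rcases b with _|b'
    · have h1 : x*(y^(2*0)*z) = x*z := by norm_num
      rw [h1]; exact hxzA
    · obtain ⟨c0, hc, -⟩ := uqA_comm_pow ((q⁻¹)^2) (q⁻¹*(q-q⁻¹)) z y eyz (2*(b'+1))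
      rw [hc, mul_add, mul_smul_comm, mul_smul_comm]
      apply add_mem
      · exact A.smul_mem (by rw [← mul_assoc]; exact A.mul_mem hxzA (hye (b'+1))) _
      · have h2 : 2*(b'+1)-1 = 2*b'+1 := by omega
        rw [h2, pow_succ' y, ← mul_assoc]
        exact A.smul_mem (A.mul_mem hxyA (hye b')) _
  -- direction 1 : span ≤ A
  have dir1 : Submodule.span K
      {u : U | ∃ r s t : ℕ, Even (r + s + t) ∧ u = x ^ r * y ^ s * z ^ t}
      ≤ Subalgebra.toSubmodule A := by
    rw [Submodule.span_le]
    rintro u ⟨r, s, t, hev, rfl⟩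
    simp only [SetLike.mem_coe, Subalgebra.mem_toSubmodule]
    rcases Nat.even_or_odd r with hr|hr <;> rcases Nat.even_or_odd s with hs|hs <;>
      rcases Nat.even_or_odd t with ht|ht
    · -- e e e
      obtain ⟨a, rfl⟩ := hr; obtain ⟨b, rfl⟩ := hs; obtain ⟨c, rfl⟩ := ht
      rw [show a+a = 2*a from by ring, show b+b = 2*b from by ring,
        show c+c = 2*c from by ring]
      exact mul_mem (mul_mem (hxe a) (hye b)) (hze c)
    · -- e e o : impossible
      exfalso; rw [Nat.even_iff] at hev hr hs; rw [Nat.odd_iff] at ht; omega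
    · -- e o e : impossible
      exfalso; rw [Nat.even_iff] at hev hr ht; rw [Nat.odd_iff] at hs; omega
    · -- e o o
      obtain ⟨a, rfl⟩ := hr; obtain ⟨b, rfl⟩ := hs; obtain ⟨c, rfl⟩ := ht
      rw [show a+a = 2*a from by ring]
      have h1 : x^(2*a)*y^(2*b+1)*z^(2*c+1)
          = x^(2*a)*(y^(2*b)*((y*z)*z^(2*c))) := by
        rw [pow_succ y, pow_succ' z]; simp only [mul_assoc]
      rw [h1]
      exact mul_mem (hxe a) (mul_mem (hye b) (mul_mem hyzA (hze c)))
    · -- o e e : impossible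
      exfalso; rw [Nat.even_iff] at hev hs ht; rw [Nat.odd_iff] at hr; omega
    · -- o e o
      obtain ⟨a, rfl⟩ := hr; obtain ⟨b, rfl⟩ := hs; obtain ⟨c, rfl⟩ := ht
      rw [show b+b = 2*b from by ring]
      have h1 : x^(2*a+1)*y^(2*b)*z^(2*c+1)
          = x^(2*a)*((x*(y^(2*b)*z))*z^(2*c)) := by
        rw [pow_succ x, pow_succ' z]; simp only [mul_assoc]
      rw [h1]
      exact mul_mem (hxe a) (mul_mem (hmid b) (hze c))
    · -- o o e
      obtain ⟨a, rfl⟩ := hr; obtain ⟨b, rfl⟩ := hs; obtain ⟨c, rfl⟩ := ht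
      rw [show c+c = 2*c from by ring]
      have h1 : x^(2*a+1)*y^(2*b+1)*z^(2*c)
          = (x^(2*a)*(x*y))*(y^(2*b)*z^(2*c)) := by
        rw [pow_succ x, pow_succ' y]; simp only [mul_assoc]
      rw [h1]
      exact mul_mem (mul_mem (hxe a) hxyA) (mul_mem (hye b) (hze c))
    · -- o o o : impossible
      exfalso; rw [Nat.even_iff] at hev; rw [Nat.odd_iff] at hr hs ht; omega
  -- direction 2 : A ≤ span
  have hms : {u : U | ∃ r s t : ℕ, Even (r + s + t) ∧ u = x ^ r * y ^ s * z ^ t}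
      = uqA_msp x y z 0 := by
    ext u; simp [uqA_msp, Nat.even_iff]
  set S := Submodule.span K
    {u : U | ∃ r s t : ℕ, Even (r + s + t) ∧ u = x ^ r * y ^ s * z ^ t} with hS
  have honeS : (1:U) ∈ S :=
    Submodule.subset_span ⟨0, 0, 0, by norm_num, by simp⟩
  have hmulS : ∀ a b : U, a ∈ S → b ∈ S → a*b ∈ S := by
    intro a b ha hb
    refine Submodule.span_induction ?_ ?_ ?_ ?_ hb
    · rintro w ⟨r', s', t', hev, rfl⟩
      have ha0 : a ∈ Submodule.span K (uqA_msp x y z 0) := by rwa [hS, hms] at ha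
      have h1 := uqA_mul_mono x y z (q^2) (-(q*(q-q⁻¹))) ((q⁻¹)^2) (q⁻¹*(q-q⁻¹))
        (q^2) (-(q*(q-q⁻¹))) eyx ezx ezy r' s' t' 0 a ha0
      rw [uqA_msp_congr x y z (k := 0+(r'+s'+t')) (k' := 0)
        (by rw [Nat.even_iff] at hev; omega)] at h1
      rwa [hS, hms]
    · rw [mul_zero]; exact zero_mem _
    · intro u v _ _ hu hv; rw [mul_add]; exact add_mem hu hv
    · intro c u _ hu; rw [mul_smul_comm]; exact Submodule.smul_mem _ _ hu
  have dir2 : A ≤ S.toSubalgebra honeS hmulS := by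
    apply Algebra.adjoin_le
    intro u hu
    rcases hu with h|h|h
    · subst h
      exact Submodule.subset_span ⟨2, 0, 0, by norm_num, by simp⟩
    · subst h
      exact Submodule.subset_span ⟨0, 2, 0, by norm_num, by simp⟩
    · rw [Set.mem_singleton_iff] at h; subst h
      exact Submodule.subset_span ⟨0, 0, 2, by norm_num, by simp⟩
  apply Set.eq_of_subset_of_subset
  · intro u hu
    exact (Submodule.mem_toSubalgebra.mp (dir2 hu) : u ∈ S)
  · intro u hu
    exact dir1 hu
end

section
/- In the abstract algebra A' with generators ν_x, ν_y, ν_z subject to the twelve relations (the six cubic q-Serre-type relations and the six relations of Lemma defrel2), the element x^2 := 1 - (qν_yν_z - q^{-1}ν_zν_y)/(q-q^{-1}) satisfies x^2 ν_y = q^4 ν_y x^2. -/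
/-- In the abstract algebra `A'` with generators `ν_x, ν_y, ν_z` subject to the
twelve defining relations. -/
theorem stmt_14 (K : Type*) [Field K] (q : K) (hq : q ≠ 0) (hq2 : q ^ 2 ≠ 1)
    (A : Type*) [Ring A] [Algebra K A] (νx νy νz : A)
    (r1a : (q ^ 3) • (νx ^ 2 * νy) - (q + q⁻¹) • (νx * νy * νx)
      + (q⁻¹ ^ 3) • (νy * νx ^ 2) = ((q ^ 2 - q⁻¹ ^ 2) * (q - q⁻¹)) • νx)
    (r1b : (q ^ 3) • (νy ^ 2 * νz) - (q + q⁻¹) • (νy * νz * νy)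
      + (q⁻¹ ^ 3) • (νz * νy ^ 2) = ((q ^ 2 - q⁻¹ ^ 2) * (q - q⁻¹)) • νy)
    (r1c : (q ^ 3) • (νz ^ 2 * νx) - (q + q⁻¹) • (νz * νx * νz)
      + (q⁻¹ ^ 3) • (νx * νz ^ 2) = ((q ^ 2 - q⁻¹ ^ 2) * (q - q⁻¹)) • νz)
    (r1d : (q⁻¹ ^ 3) • (νy ^ 2 * νx) - (q + q⁻¹) • (νy * νx * νy)
      + (q ^ 3) • (νx * νy ^ 2) = ((q ^ 2 - q⁻¹ ^ 2) * (q - q⁻¹)) • νy)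
    (r1e : (q⁻¹ ^ 3) • (νz ^ 2 * νy) - (q + q⁻¹) • (νz * νy * νz)
      + (q ^ 3) • (νy * νz ^ 2) = ((q ^ 2 - q⁻¹ ^ 2) * (q - q⁻¹)) • νz)
    (r1f : (q⁻¹ ^ 3) • (νx ^ 2 * νz) - (q + q⁻¹) • (νx * νz * νx)
      + (q ^ 3) • (νz * νx ^ 2) = ((q ^ 2 - q⁻¹ ^ 2) * (q - q⁻¹)) • νx)
    (r2a : νx * ((q - q⁻¹)⁻¹ • (q • (νy * νz) - q⁻¹ • (νz * νy)))
      = νx - (q⁻¹ ^ 2) • νy - (q ^ 2) • νz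
        + (q - q⁻¹)⁻¹ • ((q ^ 2) • (νy * νz) - (q⁻¹ ^ 2) • (νz * νy)))
    (r2b : νy * ((q - q⁻¹)⁻¹ • (q • (νz * νx) - q⁻¹ • (νx * νz)))
      = νy - (q⁻¹ ^ 2) • νz - (q ^ 2) • νx
        + (q - q⁻¹)⁻¹ • ((q ^ 2) • (νz * νx) - (q⁻¹ ^ 2) • (νx * νz)))
    (r2c : νz * ((q - q⁻¹)⁻¹ • (q • (νx * νy) - q⁻¹ • (νy * νx)))
      = νz - (q⁻¹ ^ 2) • νx - (q ^ 2) • νy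
        + (q - q⁻¹)⁻¹ • ((q ^ 2) • (νx * νy) - (q⁻¹ ^ 2) • (νy * νx)))
    (r2d : ((q - q⁻¹)⁻¹ • (q • (νy * νz) - q⁻¹ • (νz * νy))) * νx
      = νx - (q ^ 2) • νy - (q⁻¹ ^ 2) • νz
        + (q - q⁻¹)⁻¹ • ((q ^ 2) • (νy * νz) - (q⁻¹ ^ 2) • (νz * νy)))
    (r2e : ((q - q⁻¹)⁻¹ • (q • (νz * νx) - q⁻¹ • (νx * νz))) * νy
      = νy - (q ^ 2) • νz - (q⁻¹ ^ 2) • νx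
        + (q - q⁻¹)⁻¹ • ((q ^ 2) • (νz * νx) - (q⁻¹ ^ 2) • (νx * νz)))
    (r2f : ((q - q⁻¹)⁻¹ • (q • (νx * νy) - q⁻¹ • (νy * νx))) * νz
      = νz - (q ^ 2) • νx - (q⁻¹ ^ 2) • νy
        + (q - q⁻¹)⁻¹ • ((q ^ 2) • (νx * νy) - (q⁻¹ ^ 2) • (νy * νx)))
    (x2 : A)
    (hx2 : x2 = 1 - (q - q⁻¹)⁻¹ • (q • (νy * νz) - q⁻¹ • (νz * νy))) :
    x2 * νy = (q ^ 4) • (νy * x2) := by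
  have hs : q - q⁻¹ ≠ 0 := by
    intro h
    apply hq2
    have h1 : q = q⁻¹ := sub_eq_zero.mp h
    calc q ^ 2 = q * q := sq q
    _ = q * q⁻¹ := by rw [← h1]
    _ = 1 := mul_inv_cancel₀ hq
  subst hx2
  have key : (q ^ 2) • ((q ^ 3) • (νy ^ 2 * νz) - (q + q⁻¹) • (νy * νz * νy)
      + (q⁻¹ ^ 3) • (νz * νy ^ 2)) = (q ^ 2) • (((q ^ 2 - q⁻¹ ^ 2) * (q - q⁻¹)) • νy) := by
    rw [r1b]
  have lhs : (1 - (q - q⁻¹)⁻¹ • (q • (νy * νz) - q⁻¹ • (νz * νy))) * νy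
      = νy - (q - q⁻¹)⁻¹ • (q • (νy * νz * νy) - q⁻¹ • (νz * νy ^ 2)) := by
    simp only [sub_mul, one_mul, smul_mul_assoc, smul_sub, sq, mul_assoc]
  have rhs : (q ^ 4) • (νy * (1 - (q - q⁻¹)⁻¹ • (q • (νy * νz) - q⁻¹ • (νz * νy))))
      = (q ^ 4) • νy - (q - q⁻¹)⁻¹ • ((q ^ 5) • (νy ^ 2 * νz) - (q ^ 3) • (νy * νz * νy)) := by
    simp only [mul_sub, mul_one, mul_smul_comm, smul_sub, smul_smul, sq, ← mul_assoc]
    match_scalars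
    all_goals try ring
    all_goals field_simp
  rw [lhs, rhs, sub_eq_sub_iff_sub_eq_sub, ← smul_sub, eq_inv_smul_iff₀ hs]
  linear_combination (norm := (match_scalars; all_goals try ring; all_goals (field_simp; ring))) key
end

section
/- In the abstract algebra A' with generators ν_x, ν_y, ν_z and the twelve defining relations, setting x^2 := 1 - (qν_yν_z - q^{-1}ν_zν_y)/(q-q^{-1}) and y^2 := 1 - (qν_zν_x - q^{-1}ν_xν_z)/(q-q^{-1}), the relation x^2 y^2 = 1 - q^{-2}(q+q^{-1})ν_z + q^{-4}ν_z^2 holds. -/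
/-- In the abstract algebra `A'` with generators `ν_x, ν_y, ν_z` subject to the
twelve defining relations. -/
theorem stmt_15 (K : Type*) [Field K] (q : K) (hq : q ≠ 0) (hq2 : q ^ 2 ≠ 1)
    (A : Type*) [Ring A] [Algebra K A] (νx νy νz : A)
    (r1a : (q ^ 3) • (νx ^ 2 * νy) - (q + q⁻¹) • (νx * νy * νx)
      + (q⁻¹ ^ 3) • (νy * νx ^ 2) = ((q ^ 2 - q⁻¹ ^ 2) * (q - q⁻¹)) • νx)
    (r1b : (q ^ 3) • (νy ^ 2 * νz) - (q + q⁻¹) • (νy * νz * νy)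
      + (q⁻¹ ^ 3) • (νz * νy ^ 2) = ((q ^ 2 - q⁻¹ ^ 2) * (q - q⁻¹)) • νy)
    (r1c : (q ^ 3) • (νz ^ 2 * νx) - (q + q⁻¹) • (νz * νx * νz)
      + (q⁻¹ ^ 3) • (νx * νz ^ 2) = ((q ^ 2 - q⁻¹ ^ 2) * (q - q⁻¹)) • νz)
    (r1d : (q⁻¹ ^ 3) • (νy ^ 2 * νx) - (q + q⁻¹) • (νy * νx * νy)
      + (q ^ 3) • (νx * νy ^ 2) = ((q ^ 2 - q⁻¹ ^ 2) * (q - q⁻¹)) • νy)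
    (r1e : (q⁻¹ ^ 3) • (νz ^ 2 * νy) - (q + q⁻¹) • (νz * νy * νz)
      + (q ^ 3) • (νy * νz ^ 2) = ((q ^ 2 - q⁻¹ ^ 2) * (q - q⁻¹)) • νz)
    (r1f : (q⁻¹ ^ 3) • (νx ^ 2 * νz) - (q + q⁻¹) • (νx * νz * νx)
      + (q ^ 3) • (νz * νx ^ 2) = ((q ^ 2 - q⁻¹ ^ 2) * (q - q⁻¹)) • νx)
    (r2a : νx * ((q - q⁻¹)⁻¹ • (q • (νy * νz) - q⁻¹ • (νz * νy)))
      = νx - (q⁻¹ ^ 2) • νy - (q ^ 2) • νz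
        + (q - q⁻¹)⁻¹ • ((q ^ 2) • (νy * νz) - (q⁻¹ ^ 2) • (νz * νy)))
    (r2b : νy * ((q - q⁻¹)⁻¹ • (q • (νz * νx) - q⁻¹ • (νx * νz)))
      = νy - (q⁻¹ ^ 2) • νz - (q ^ 2) • νx
        + (q - q⁻¹)⁻¹ • ((q ^ 2) • (νz * νx) - (q⁻¹ ^ 2) • (νx * νz)))
    (r2c : νz * ((q - q⁻¹)⁻¹ • (q • (νx * νy) - q⁻¹ • (νy * νx)))
      = νz - (q⁻¹ ^ 2) • νx - (q ^ 2) • νy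
        + (q - q⁻¹)⁻¹ • ((q ^ 2) • (νx * νy) - (q⁻¹ ^ 2) • (νy * νx)))
    (r2d : ((q - q⁻¹)⁻¹ • (q • (νy * νz) - q⁻¹ • (νz * νy))) * νx
      = νx - (q ^ 2) • νy - (q⁻¹ ^ 2) • νz
        + (q - q⁻¹)⁻¹ • ((q ^ 2) • (νy * νz) - (q⁻¹ ^ 2) • (νz * νy)))
    (r2e : ((q - q⁻¹)⁻¹ • (q • (νz * νx) - q⁻¹ • (νx * νz))) * νy
      = νy - (q ^ 2) • νz - (q⁻¹ ^ 2) • νx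
        + (q - q⁻¹)⁻¹ • ((q ^ 2) • (νz * νx) - (q⁻¹ ^ 2) • (νx * νz)))
    (r2f : ((q - q⁻¹)⁻¹ • (q • (νx * νy) - q⁻¹ • (νy * νx))) * νz
      = νz - (q ^ 2) • νx - (q⁻¹ ^ 2) • νy
        + (q - q⁻¹)⁻¹ • ((q ^ 2) • (νx * νy) - (q⁻¹ ^ 2) • (νy * νx)))
    (x2 y2 : A)
    (hx2 : x2 = 1 - (q - q⁻¹)⁻¹ • (q • (νy * νz) - q⁻¹ • (νz * νy)))
    (hy2 : y2 = 1 - (q - q⁻¹)⁻¹ • (q • (νz * νx) - q⁻¹ • (νx * νz))) :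
    x2 * y2 = 1 - (q⁻¹ ^ 2 * (q + q⁻¹)) • νz + (q⁻¹ ^ 4) • νz ^ 2 := by
  have hne : q - q⁻¹ ≠ 0 := by
    intro h
    apply hq2
    have hqe : q = q⁻¹ := sub_eq_zero.mp h
    calc q ^ 2 = q * q := sq q
    _ = q * q⁻¹ := by nth_rewrite 2 [hqe]; rfl
    _ = 1 := mul_inv_cancel₀ hq
  have h3 : q ^ 2 - 1 ≠ 0 := sub_ne_zero.mpr hq2
  have hE : (q - q⁻¹)⁻¹ = q * (q ^ 2 - 1)⁻¹ := by
    have hst : q - q⁻¹ = (q ^ 2 - 1) * q⁻¹ := by field_simp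
    rw [hst, mul_inv, inv_inv]
    ring
  have hA : q * q⁻¹ = 1 := mul_inv_cancel₀ hq
  have hB : q ^ 2 * (q ^ 2 - 1)⁻¹ = (q ^ 2 - 1)⁻¹ + 1 := by field_simp; ring
  have hC : q⁻¹ * (q ^ 2 - 1)⁻¹ + q⁻¹ = q * (q ^ 2 - 1)⁻¹ := by field_simp; ring
  have h1 : ((q⁻¹ ^ 3) • (νz ^ 2 * νy) - (q + q⁻¹) • (νz * νy * νz)
      + (q ^ 3) • (νy * νz ^ 2)) - ((q ^ 2 - q⁻¹ ^ 2) * (q - q⁻¹)) • νz = 0 :=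
    sub_eq_zero_of_eq r1e
  have h2 : (((q - q⁻¹)⁻¹ • (q • (νy * νz) - q⁻¹ • (νz * νy))) * νx)
      - (νx - (q ^ 2) • νy - (q⁻¹ ^ 2) • νz
        + (q - q⁻¹)⁻¹ • ((q ^ 2) • (νy * νz) - (q⁻¹ ^ 2) • (νz * νy))) = 0 :=
    sub_eq_zero_of_eq r2d
  have key : x2 * y2 - (1 - (q⁻¹ ^ 2 * (q + q⁻¹)) • νz + (q⁻¹ ^ 4) • νz ^ 2)
      = ((q - q⁻¹)⁻¹ * q⁻¹ ^ 3) • (νz * ((((q - q⁻¹)⁻¹ • (q • (νy * νz) - q⁻¹ • (νz * νy))) * νx)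
          - (νx - (q ^ 2) • νy - (q⁻¹ ^ 2) • νz
            + (q - q⁻¹)⁻¹ • ((q ^ 2) • (νy * νz) - (q⁻¹ ^ 2) • (νz * νy)))))
        - ((q - q⁻¹)⁻¹ * q⁻¹) • (((((q - q⁻¹)⁻¹ • (q • (νy * νz) - q⁻¹ • (νz * νy))) * νx)
          - (νx - (q ^ 2) • νy - (q⁻¹ ^ 2) • νz
            + (q - q⁻¹)⁻¹ • ((q ^ 2) • (νy * νz) - (q⁻¹ ^ 2) • (νz * νy)))) * νz)
        + ((q - q⁻¹)⁻¹ ^ 2 * q⁻¹) • ((((q⁻¹ ^ 3) • (νz ^ 2 * νy) - (q + q⁻¹) • (νz * νy * νz)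
          + (q ^ 3) • (νy * νz ^ 2)) - ((q ^ 2 - q⁻¹ ^ 2) * (q - q⁻¹)) • νz) * νx)
        - ((q - q⁻¹)⁻¹ ^ 2 * q⁻¹ ^ 2) • (((q⁻¹ ^ 3) • (νz ^ 2 * νy) - (q + q⁻¹) • (νz * νy * νz)
          + (q ^ 3) • (νy * νz ^ 2)) - ((q ^ 2 - q⁻¹ ^ 2) * (q - q⁻¹)) • νz) := by
    subst hx2 hy2
    simp only [mul_add, add_mul, mul_sub, sub_mul, smul_mul_assoc, mul_smul_comm, smul_sub,
      smul_add, smul_smul, mul_assoc, pow_two, one_mul, mul_one]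
    simp only [hE]
    match_scalars
    · ring1
    · linear_combination ((1) * (q ^ 2 - 1)⁻¹ * q ^ 2) * hA
    · linear_combination ((-1) * q⁻¹ * (q ^ 2 - 1)⁻¹ * q + (-1) * q⁻¹ ^ 2 * (q ^ 2 - 1)⁻¹ * q ^ 2) * hA
    · linear_combination ((-1) * (q ^ 2 - 1)⁻¹ ^ 2 * q ^ 2 + (1) * (q ^ 2 - 1)⁻¹ ^ 2 * q ^ 4 + (-1) * q⁻¹ * (q ^ 2 - 1)⁻¹ ^ 2 * q + (-1) * q⁻¹ * (q ^ 2 - 1)⁻¹ ^ 2 * q ^ 3 + (1) * q⁻¹ ^ 2 * (q ^ 2 - 1)⁻¹ + (1) * q⁻¹ ^ 2 * (q ^ 2 - 1)⁻¹ ^ 2 + (-1) * q⁻¹ ^ 2 * (q ^ 2 - 1)⁻¹ ^ 2 * q ^ 2 + (1) * q⁻¹ ^ 3 * (q ^ 2 - 1)⁻¹ ^ 2 * q) * hA + ((1) * (q ^ 2 - 1)⁻¹ * q ^ 2) * hB + ((1) * q⁻¹ * (q ^ 2 - 1)⁻¹) * hC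
    · linear_combination ((-1) * (q ^ 2 - 1)⁻¹ ^ 2 * q ^ 4) * hA
    · linear_combination ((-1) * q⁻¹ ^ 2 * (q ^ 2 - 1)⁻¹ ^ 2 * q ^ 2) * hA
    · ring1
    · ring1
    · ring1
    · linear_combination ((1) * (q ^ 2 - 1)⁻¹ ^ 2 * q + (-1) * (q ^ 2 - 1)⁻¹ ^ 2 * q ^ 3 + (1) * q⁻¹ + (1) * q⁻¹ * (q ^ 2 - 1)⁻¹ + (1) * q⁻¹ * (q ^ 2 - 1)⁻¹ ^ 2 * q ^ 2 + (-1) * q⁻¹ * (q ^ 2 - 1)⁻¹ ^ 2 * q ^ 4 + (1) * q⁻¹ ^ 2 * (q ^ 2 - 1)⁻¹ ^ 2 * q + (1) * q⁻¹ ^ 2 * (q ^ 2 - 1)⁻¹ ^ 2 * q ^ 3 + (-1) * q⁻¹ ^ 3 * (q ^ 2 - 1)⁻¹ ^ 2 + (1) * q⁻¹ ^ 3 * (q ^ 2 - 1)⁻¹ ^ 2 * q ^ 2 + (-1) * q⁻¹ ^ 4 * (q ^ 2 - 1)⁻¹ ^ 2 * q) * hA + ((-1) * (q ^ 2 - 1)⁻¹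 * q) * hB + ((1) + (1) * q⁻¹ ^ 2 + (-1) * q⁻¹ ^ 2 * (q ^ 2 - 1)⁻¹) * hC
    · linear_combination ((-1) * q⁻¹ ^ 4 * (q ^ 2 - 1)⁻¹) * hA + ((-1) * q⁻¹ ^ 3) * hC
    · ring1
    · linear_combination ((1) * q⁻¹ ^ 2 * (q ^ 2 - 1)⁻¹ ^ 2 * q ^ 3) * hA
    · ring1
    · linear_combination ((1) * q⁻¹ * (q ^ 2 - 1)⁻¹ ^ 2 * q ^ 4) * hA
  rw [h1, h2] at key
  simp only [mul_zero, zero_mul, smul_zero, add_zero, sub_zero, zero_sub, sub_neg_eq_add] at key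
  exact sub_eq_zero.mp key
end

section
/- Assume q is not a root of unity. For each d ∈ ℕ and ε ∈ {1,-1}, the (d+1)-dimensional U_q(sl_2)-module L(d,ε) with basis u_0, ..., u_d defined by (εx - q^{d-2i})u_i = (q^{-d} - q^{d-2i+2})u_{i-1}, (εy - q^{d-2i})u_i = (q^d - q^{d-2i-2})u_{i+1}, εz u_i = q^{2i-d}u_i is irreducible, and the actions of ν_x, ν_y, ν_z on L(d,ε) are given by ν_x u_i = q^{-1}(1 - q^{2(i+1)}) u_{i+1} and ν_y u_i = q(1 - q^{2(i-d-1)}) u_{i-1} (independent of ε). -/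
/-- For `q` not a root of unity, the `(d+1)`-dimensional `U_q(sl_2)`-module
`L(d,ε)` is irreducible, and `ν_x, ν_y` act on it by
`ν_x u_i = q⁻¹(1 - q^{2(i+1)}) u_{i+1}`, `ν_y u_i = q(1 - q^{2(i-d-1)}) u_{i-1}`
(independently of `ε`). -/
theorem stmt_16 (K : Type*) [Field K] (q : K) (hq : q ≠ 0)
    (hqru : ∀ n : ℕ, 0 < n → q ^ n ≠ 1)
    (U : Type*) [Ring U] [Algebra K U] (x y yi z : U)
    (hyyi : y * yi = 1) (hyiy : yi * y = 1)
    (hxy : q • (x * y) - q⁻¹ • (y * x) = (q - q⁻¹) • (1 : U))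
    (hyz : q • (y * z) - q⁻¹ • (z * y) = (q - q⁻¹) • (1 : U))
    (hzx : q • (z * x) - q⁻¹ • (x * z) = (q - q⁻¹) • (1 : U))
    (νx νy νz : U)
    (hνx : νx = q • ((1 : U) - y * z))
    (hνy : νy = q • ((1 : U) - z * x))
    (hνz : νz = q • ((1 : U) - x * y))
    (d : ℕ) (ε : K) (hε : ε = 1 ∨ ε = -1)
    (V : Type*) [AddCommGroup V] [Module K V]
    (ρ : U →ₐ[K] Module.End K V)
    (u : ℤ → V)
    (hu0 : ∀ i : ℤ, i < 0 ∨ (d : ℤ) < i → u i = 0)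
    (hubasis : LinearIndependent K (fun i : Fin (d + 1) => u (i : ℤ)) ∧
      Submodule.span K (Set.range fun i : Fin (d + 1) => u (i : ℤ)) = ⊤)
    (hx : ∀ i : ℤ, 0 ≤ i → i ≤ (d : ℤ) →
      ε • ρ x (u i) - (q ^ ((d : ℤ) - 2 * i)) • u i
        = (q ^ (-(d : ℤ)) - q ^ ((d : ℤ) - 2 * i + 2)) • u (i - 1))
    (hy : ∀ i : ℤ, 0 ≤ i → i ≤ (d : ℤ) →
      ε • ρ y (u i) - (q ^ ((d : ℤ) - 2 * i)) • u i
        = (q ^ (d : ℤ) - q ^ ((d : ℤ) - 2 * i - 2)) • u (i + 1))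
    (hz : ∀ i : ℤ, 0 ≤ i → i ≤ (d : ℤ) →
      ε • ρ z (u i) = (q ^ (2 * i - (d : ℤ))) • u i) :
    (∀ W : Submodule K V, (∀ a : U, ∀ v ∈ W, ρ a v ∈ W) → W = ⊥ ∨ W = ⊤) ∧
    (∀ i : ℤ, 0 ≤ i → i ≤ (d : ℤ) →
      ρ νx (u i) = (q⁻¹ * (1 - q ^ (2 * (i + 1)))) • u (i + 1)) ∧
    (∀ i : ℤ, 0 ≤ i → i ≤ (d : ℤ) →
      ρ νy (u i) = (q * (1 - q ^ (2 * (i - (d : ℤ) - 1)))) • u (i - 1)) := by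

  have hε2 : ε * ε = 1 := by rcases hε with h | h <;> simp [h]
  -- diagonal action of z
  have hZ : ∀ i : ℤ, 0 ≤ i → i ≤ (d : ℤ) →
      ρ z (u i) = (ε * q ^ (2 * i - (d : ℤ))) • u i := by
    intro i h0 h1
    have h := hz i h0 h1
    calc ρ z (u i) = (ε * ε) • ρ z (u i) := by rw [hε2, one_smul]
    _ = ε • (ε • ρ z (u i)) := by rw [smul_smul]
    _ = _ := by rw [h, smul_smul]
  have hY : ∀ i : ℤ, 0 ≤ i → i ≤ (d : ℤ) → ρ y (u i) =
      (ε * q ^ ((d : ℤ) - 2 * i)) • u i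
        + (ε * (q ^ (d : ℤ) - q ^ ((d : ℤ) - 2 * i - 2))) • u (i + 1) := by
    intro i h0 h1
    have h := hy i h0 h1
    have h2 : ε • ρ y (u i) = (q ^ ((d : ℤ) - 2 * i)) • u i
        + (q ^ (d : ℤ) - q ^ ((d : ℤ) - 2 * i - 2)) • u (i + 1) := by
      rw [sub_eq_iff_eq_add] at h; rw [h]; abel
    calc ρ y (u i) = (ε * ε) • ρ y (u i) := by rw [hε2, one_smul]
    _ = ε • (ε • ρ y (u i)) := by rw [smul_smul]
    _ = _ := by rw [h2, smul_add, smul_smul, smul_smul]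
  have hX : ∀ i : ℤ, 0 ≤ i → i ≤ (d : ℤ) → ρ x (u i) =
      (ε * q ^ ((d : ℤ) - 2 * i)) • u i
        + (ε * (q ^ (-(d : ℤ)) - q ^ ((d : ℤ) - 2 * i + 2))) • u (i - 1) := by
    intro i h0 h1
    have h := hx i h0 h1
    have h2 : ε • ρ x (u i) = (q ^ ((d : ℤ) - 2 * i)) • u i
        + (q ^ (-(d : ℤ)) - q ^ ((d : ℤ) - 2 * i + 2)) • u (i - 1) := by
      rw [sub_eq_iff_eq_add] at h; rw [h]; abel
    calc ρ x (u i) = (ε * ε) • ρ x (u i) := by rw [hε2, one_smul]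
    _ = ε • (ε • ρ x (u i)) := by rw [smul_smul]
    _ = _ := by rw [h2, smul_add, smul_smul, smul_smul]
  -- nu_x action
  have NUX : ∀ i : ℤ, 0 ≤ i → i ≤ (d : ℤ) →
      ρ νx (u i) = (q⁻¹ * (1 - q ^ (2 * (i + 1)))) • u (i + 1) := by
    intro i h0 h1
    rw [hνx, map_smul, map_sub, map_one, map_mul]
    simp only [LinearMap.smul_apply, LinearMap.sub_apply, Module.End.one_apply,
      Module.End.mul_apply]
    rw [hZ i h0 h1, map_smul, hY i h0 h1]
    rw [smul_add, smul_smul, smul_smul, smul_sub, smul_add, smul_smul, smul_smul]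
    have e1 : q * (ε * q ^ (2 * i - (d : ℤ)) * (ε * q ^ ((d : ℤ) - 2 * i))) = q := by
      rw [show ε * q ^ (2 * i - (d : ℤ)) * (ε * q ^ ((d : ℤ) - 2 * i))
          = (ε * ε) * (q ^ (2 * i - (d : ℤ)) * q ^ ((d : ℤ) - 2 * i)) by ring,
        hε2, ← zpow_add₀ hq]
      simp
    have h1 : q * (q ^ (2 * i - (d : ℤ)) * (q ^ (d : ℤ) - q ^ ((d : ℤ) - 2 * i - 2)))
        = q ^ (2 * i + 1) - q ^ (-1 : ℤ) := by
      rw [mul_sub, ← zpow_add₀ hq, ← zpow_add₀ hq, mul_sub,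
        ← zpow_one_add₀ hq, ← zpow_one_add₀ hq,
        show (1 + (2 * i - (d : ℤ) + (d : ℤ))) = 2 * i + 1 by ring,
        show (1 + (2 * i - (d : ℤ) + ((d : ℤ) - 2 * i - 2))) = (-1 : ℤ) by ring]
    have h2 : -(q⁻¹ * (1 - q ^ (2 * (i + 1)))) = q ^ (2 * i + 1) - q ^ (-1 : ℤ) := by
      rw [mul_sub, mul_one, ← zpow_neg_one, ← zpow_add₀ hq,
        show ((-1 : ℤ) + 2 * (i + 1)) = 2 * i + 1 by ring]
      ring
    have e2 : q * (ε * q ^ (2 * i - (d : ℤ)) * (ε * (q ^ (d : ℤ) - q ^ ((d : ℤ) - 2 * i - 2))))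
        = -(q⁻¹ * (1 - q ^ (2 * (i + 1)))) := by
      rw [show q * (ε * q ^ (2 * i - (d : ℤ)) * (ε * (q ^ (d : ℤ) - q ^ ((d : ℤ) - 2 * i - 2))))
          = (ε * ε) * (q * (q ^ (2 * i - (d : ℤ)) * (q ^ (d : ℤ) - q ^ ((d : ℤ) - 2 * i - 2)))) by ring,
        hε2, one_mul, h1, h2]
    rw [e1, e2]
    module
  have NUY : ∀ i : ℤ, 0 ≤ i → i ≤ (d : ℤ) →
      ρ νy (u i) = (q * (1 - q ^ (2 * (i - (d : ℤ) - 1)))) • u (i - 1) := by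
    intro i h0 h1
    rw [hνy, map_smul, map_sub, map_one, map_mul]
    simp only [LinearMap.smul_apply, LinearMap.sub_apply, Module.End.one_apply,
      Module.End.mul_apply]
    rw [hX i h0 h1]
    have hZi : ρ z (u i) = (ε * q ^ (2 * i - (d : ℤ))) • u i := hZ i h0 h1
    have h0' : (0 : ℤ) ≤ i - 1 ∨ i - 1 < 0 := by omega
    -- z action on u (i-1): either in-range formula or u (i-1) = 0
    have hZi1 : ρ z (u (i - 1)) = (ε * q ^ (2 * (i - 1) - (d : ℤ))) • u (i - 1) := by
      rcases h0' with h | h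
      · exact hZ (i - 1) h (by omega)
      · rw [hu0 (i - 1) (Or.inl h)]; simp
    rw [map_add, map_smul, map_smul, hZi, hZi1]
    rw [smul_smul, smul_smul, smul_sub, smul_add, smul_smul, smul_smul]
    have e1 : q * (ε * (q ^ (-(d : ℤ)) - q ^ ((d : ℤ) - 2 * i + 2)) * (ε * q ^ (2 * (i - 1) - (d : ℤ))))
        = -(q * (1 - q ^ (2 * (i - (d : ℤ) - 1)))) := by
      rw [show q * (ε * (q ^ (-(d : ℤ)) - q ^ ((d : ℤ) - 2 * i + 2)) * (ε * q ^ (2 * (i - 1) - (d : ℤ))))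
          = (ε * ε) * (q * (q ^ (-(d : ℤ)) * q ^ (2 * (i - 1) - (d : ℤ))
              - q ^ ((d : ℤ) - 2 * i + 2) * q ^ (2 * (i - 1) - (d : ℤ)))) by ring, hε2,
        ← zpow_add₀ hq, ← zpow_add₀ hq,
        show (-(d : ℤ)) + (2 * (i - 1) - (d : ℤ)) = 2 * (i - (d : ℤ) - 1) by ring,
        show ((d : ℤ) - 2 * i + 2) + (2 * (i - 1) - (d : ℤ)) = 0 by ring]
      simp only [zpow_zero, one_mul]
      ring
    have e2 : q * (ε * q ^ ((d : ℤ) - 2 * i) * (ε * q ^ (2 * i - (d : ℤ)))) = q := by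
      rw [show ε * q ^ ((d : ℤ) - 2 * i) * (ε * q ^ (2 * i - (d : ℤ)))
          = (ε * ε) * (q ^ ((d : ℤ) - 2 * i) * q ^ (2 * i - (d : ℤ))) by ring,
        hε2, ← zpow_add₀ hq]
      simp
    rw [e1, e2]
    module
  -- extended formulas for all integers
  have NUXall : ∀ i : ℤ, ρ νx (u i) = (q⁻¹ * (1 - q ^ (2 * (i + 1)))) • u (i + 1) := by
    intro i
    rcases lt_trichotomy i 0 with h | h | h
    · rcases eq_or_lt_of_le (by omega : i ≤ -1) with h1 | h1
      · rw [hu0 i (Or.inl h), map_zero, h1]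
        norm_num
      · rw [hu0 i (Or.inl h), hu0 (i + 1) (Or.inl (by omega)), map_zero, smul_zero]
    · exact NUX i (by omega) (by omega)
    · rcases le_or_gt i (d : ℤ) with h1 | h1
      · exact NUX i (by omega) h1
      · rw [hu0 i (Or.inr h1), hu0 (i + 1) (Or.inr (by omega)), map_zero, smul_zero]
  have NUYall : ∀ i : ℤ, ρ νy (u i) = (q * (1 - q ^ (2 * (i - (d : ℤ) - 1)))) • u (i - 1) := by
    intro i
    rcases lt_or_ge i 0 with h | h
    · rw [hu0 i (Or.inl h), hu0 (i - 1) (Or.inl (by omega)), map_zero, smul_zero]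
    · rcases le_or_gt i (d : ℤ) with h1 | h1
      · exact NUY i h h1
      · rcases eq_or_lt_of_le (by omega : (d : ℤ) + 1 ≤ i) with h2 | h2
        · rw [hu0 i (Or.inr h1), map_zero, ← h2]
          norm_num
        · rw [hu0 i (Or.inr h1), hu0 (i - 1) (Or.inr (by omega)), map_zero, smul_zero]
  -- nonvanishing of coefficients
  have hqz : ∀ n : ℤ, n ≠ 0 → q ^ n ≠ 1 := by
    intro n hn
    rcases lt_or_gt_of_ne hn with h | h
    · intro hc
      have : q ^ (-n) = 1 := by
        rw [zpow_neg, hc]; simp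
      rw [show -n = ((-n).toNat : ℤ) by omega, zpow_natCast] at this
      exact hqru _ (by omega) this
    · intro hc
      rw [show n = (n.toNat : ℤ) by omega, zpow_natCast] at hc
      exact hqru _ (by omega) hc
  have hαne : ∀ i : ℤ, 0 ≤ i → q⁻¹ * (1 - q ^ (2 * (i + 1))) ≠ 0 := by
    intro i h0
    have h1 : q ^ (2 * (i + 1)) ≠ 1 := hqz _ (by omega)
    have : (1 : K) - q ^ (2 * (i + 1)) ≠ 0 := sub_ne_zero.mpr (Ne.symm h1)
    exact mul_ne_zero (inv_ne_zero hq) this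
  have hβne : ∀ i : ℤ, i ≤ (d : ℤ) → q * (1 - q ^ (2 * (i - (d : ℤ) - 1))) ≠ 0 := by
    intro i h1
    have h2 : q ^ (2 * (i - (d : ℤ) - 1)) ≠ 1 := hqz _ (by omega)
    exact mul_ne_zero hq (sub_ne_zero.mpr (Ne.symm h2))
  -- iterated raising
  have UP : ∀ k : ℕ, ∀ i : ℤ, 0 ≤ i → ∃ c : K, c ≠ 0 ∧
      ((ρ νx) ^ k) (u i) = c • u (i + k) := by
    intro k
    induction k with
    | zero => intro i _; exact ⟨1, one_ne_zero, by simp⟩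
    | succ k ih =>
      intro i h0
      obtain ⟨c, hc, hck⟩ := ih (i + 1) (by omega)
      refine ⟨(q⁻¹ * (1 - q ^ (2 * (i + 1)))) * c, mul_ne_zero (hαne i h0) hc, ?_⟩
      rw [pow_succ, Module.End.mul_apply, NUXall i, map_smul, hck, smul_smul,
        show i + 1 + (k : ℤ) = i + ((k : ℕ) + 1 : ℕ) by push_cast; ring]
  -- iterated lowering
  have DOWN : ∀ k : ℕ, ∀ i : ℤ, i ≤ (d : ℤ) → ∃ c : K, c ≠ 0 ∧
      ((ρ νy) ^ k) (u i) = c • u (i - k) := by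
    intro k
    induction k with
    | zero => intro i _; exact ⟨1, one_ne_zero, by simp⟩
    | succ k ih =>
      intro i h1
      obtain ⟨c, hc, hck⟩ := ih (i - 1) (by omega)
      refine ⟨(q * (1 - q ^ (2 * (i - (d : ℤ) - 1)))) * c, mul_ne_zero (hβne i h1) hc, ?_⟩
      rw [pow_succ, Module.End.mul_apply, NUYall i, map_smul, hck, smul_smul,
        show i - 1 - (k : ℤ) = i - ((k : ℕ) + 1 : ℕ) by push_cast; ring]
  refine ⟨?_, fun i h0 h1 => NUX i h0 h1, fun i h0 h1 => NUY i h0 h1⟩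
  -- irreducibility
  intro W hW
  by_cases hWbot : W = ⊥
  · exact Or.inl hWbot
  right
  -- get a nonzero vector in W
  obtain ⟨w, hwW, hw0⟩ := Submodule.exists_mem_ne_zero_of_ne_bot hWbot
  -- express w in the spanning set
  have hwspan : w ∈ Submodule.span K (Set.range fun i : Fin (d + 1) => u (i : ℤ)) := by
    rw [hubasis.2]; trivial
  rw [Finsupp.mem_span_range_iff_exists_finsupp] at hwspan
  obtain ⟨c, hc⟩ := hwspan
  -- u d ∈ W
  have hud : u (d : ℤ) ∈ W := by
    have hne : c.support.Nonempty := by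
      rcases Finset.eq_empty_or_nonempty c.support with h | h
      · exfalso; apply hw0; rw [← hc]
        rw [Finsupp.support_eq_empty.mp h]; simp
      · exact h
    set j : Fin (d + 1) := c.support.min' hne with hj
    have hjmem : c j ≠ 0 := Finsupp.mem_support_iff.mp (c.support.min'_mem hne)
    set k : ℕ := d - (j : ℕ) with hk
    have hjk : ((j : ℕ) : ℤ) + (k : ℤ) = (d : ℤ) := by
      have := j.isLt; push_cast [hk]; omega
    -- apply (ρ νx)^k to w
    have hWk : ((ρ νx) ^ k) w ∈ W := by
      have : ((ρ νx) ^ k) w = ρ (νx ^ k) w := by rw [map_pow]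
      rw [this]; exact hW _ _ hwW
    obtain ⟨γ, hγ, hγk⟩ := UP k (j : ℤ) (Int.natCast_nonneg _)
    have key : ((ρ νx) ^ k) w = (c j * γ) • u (d : ℤ) := by
      rw [← hc, map_finsuppSum]
      simp only [Finsupp.sum]
      have : ∀ i ∈ c.support, ((ρ νx) ^ k) (c i • u (i : ℤ))
          = (if i = j then (c j * γ) • u (d : ℤ) else 0) := by
        intro i hi
        rcases eq_or_ne i j with rfl | hij
        · rw [map_smul, hγk, smul_smul, hjk]
          simp
        · have hij' : (j : ℕ) < (i : ℕ) := by
            have hle := c.support.min'_le i hi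
            rcases lt_or_eq_of_le hle with h | h
            · exact h
            · exact absurd h.symm hij
          obtain ⟨γ', _, hγ'⟩ := UP k (i : ℤ) (Int.natCast_nonneg _)
          rw [if_neg hij, map_smul, hγ', hu0 ((i : ℤ) + k) (Or.inr (by omega))]
          simp
      rw [Finset.sum_congr rfl this, Finset.sum_ite_eq' c.support j,
        if_pos (c.support.min'_mem hne)]
    have : u (d : ℤ) = (c j * γ)⁻¹ • (((ρ νx) ^ k) w) := by
      rw [key, smul_smul, inv_mul_cancel₀ (mul_ne_zero hjmem hγ), one_smul]
    rw [this]
    exact W.smul_mem _ hWk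
  -- all basis vectors in W
  have hall : ∀ i : Fin (d + 1), u (i : ℤ) ∈ W := by
    intro i
    set k : ℕ := d - (i : ℕ) with hk
    have hik : (d : ℤ) - (k : ℤ) = ((i : ℕ) : ℤ) := by
      have := i.isLt; push_cast [hk]; omega
    obtain ⟨γ, hγ, hγk⟩ := DOWN k (d : ℤ) le_rfl
    have hWk : ((ρ νy) ^ k) (u (d : ℤ)) ∈ W := by
      have : ((ρ νy) ^ k) (u (d : ℤ)) = ρ (νy ^ k) (u (d : ℤ)) := by rw [map_pow]
      rw [this]; exact hW _ _ hud
    have : u ((i : ℕ) : ℤ) = γ⁻¹ • (((ρ νy) ^ k) (u (d : ℤ))) := by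
      rw [hγk, hik, smul_smul, inv_mul_cancel₀ hγ, one_smul]
    rw [this]
    exact W.smul_mem _ hWk
  rw [eq_top_iff, ← hubasis.2, Submodule.span_le]
  rintro v ⟨i, rfl⟩
  exact hall i
end

section
/- Assume q is not a root of unity, and let V be a finite-dimensional module over the subalgebra A of U_q(sl_2) generated by ν_x, ν_y, ν_z. Then the actions of ν_x, ν_y, ν_z on V are nilpotent. -/
set_option maxHeartbeats 1600000

open Polynomial Module

theorem my_core_ac {L : Type*} [Field L] [IsAlgClosed L] {V : Type*} [AddCommGroup V] [Module L V]
    [FiniteDimensional L V] (q : L) (hq : q ≠ 0) (hqru : ∀ n : ℕ, 0 < n → q ^ n ≠ 1)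
    (N B C : Module.End L V)
    (h1 : N * B = (q^4) • (B * N)) (h2 : C * N = (q^4) • (N * C))
    (h3 : (q^4) • (B * C) = ((q^2-1)^2) • ((q^3 • (1 : Module.End L V) - N) * (q • 1 - N)))
    (h4 : C * B = ((q^2-1)^2) • ((1 - q^3 • N) * (1 - q • N))) : IsNilpotent N := by
  have hq2 : ((q^2-1)^2 : L) ≠ 0 := by
    have : q^2 ≠ 1 := hqru 2 (by norm_num)
    intro h
    have h2 := pow_eq_zero_iff (n := 2) (by norm_num) |>.mp h
    exact this (sub_eq_zero.mp h2)
  have hq4 : (q^4 : L) ≠ 0 := pow_ne_zero _ hq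
  -- finiteness of eigenvalue set
  have hNint : IsIntegral L N := LinearMap.isIntegral N
  have hmp0 : minpoly L N ≠ 0 := minpoly.ne_zero hNint
  have hfin : Set.Finite {μ : L | N.HasEigenvalue μ} := by
    refine (Polynomial.finite_setOf_isRoot hmp0).subset ?_
    intro μ hμ
    exact (Module.End.hasEigenvalue_iff_isRoot).mp hμ
  -- power injectivity
  have hpowinj : ∀ k l : ℕ, q ^ k = q ^ l → k = l := by
    have key : ∀ k l : ℕ, k < l → q ^ k = q ^ l → False := by
      intro k l hkl h
      have e : q ^ l = q ^ k * q ^ (l - k) := by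
        rw [← pow_add]
        congr 1
        omega
      have e2 : q ^ k * q ^ (l - k) = q ^ k * 1 := by rw [← e, ← h, mul_one]
      exact hqru (l - k) (by omega) (mul_left_cancel₀ (pow_ne_zero _ hq) e2)
    intro k l h
    rcases lt_trichotomy k l with h' | h' | h'
    · exact absurd h (fun hh => key k l h' hh)
    · exact h'
    · exact absurd h (fun hh => key l k h' hh.symm)
  -- step up
  have hup : ∀ μ : L, N.HasEigenvalue μ →
      N.HasEigenvalue (q^4*μ) ∨ (1 - q^3*μ)*(1-q*μ) = 0 := by
    intro μ hμ
    obtain ⟨v, hv⟩ := hμ.exists_hasEigenvector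
    have hveq : N v = μ • v := Module.End.mem_eigenspace_iff.mp hv.1
    by_cases hB : B v = 0
    · right
      have e := congrArg (fun f : Module.End L V => f v) h4
      simp only [Module.End.mul_apply, LinearMap.smul_apply] at e
      rw [hB, map_zero] at e
      have ev1 : (1 - q • N) v = (1 - q*μ) • v := by
        simp only [LinearMap.sub_apply, LinearMap.smul_apply, Module.End.one_apply, hveq,
          smul_smul, sub_smul, one_smul]
      have ev2 : ((1 : Module.End L V) - q^3 • N) ((1 - q*μ) • v) = ((1-q^3*μ)*(1-q*μ)) • v := by
        simp only [LinearMap.sub_apply, LinearMap.smul_apply, Module.End.one_apply, map_smul, hveq,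
          smul_smul]
        module
      rw [ev1, ev2] at e
      have := e.symm
      rw [smul_smul] at this
      rcases smul_eq_zero.mp this with h | h
      · rcases mul_eq_zero.mp h with h | h
        · exact absurd h hq2
        · exact h
      · exact absurd h hv.2
    · left
      refine Module.End.hasEigenvalue_of_hasEigenvector (x := B v) ⟨Module.End.mem_eigenspace_iff.mpr ?_, hB⟩
      have e := congrArg (fun f : Module.End L V => f v) h1
      simp only [Module.End.mul_apply, LinearMap.smul_apply] at e
      rw [hveq, map_smul] at e
      rw [e, smul_smul]
  -- step down
  have hdown : ∀ μ : L, N.HasEigenvalue μ →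
      N.HasEigenvalue ((q^4)⁻¹*μ) ∨ (q^3 - μ)*(q - μ) = 0 := by
    intro μ hμ
    obtain ⟨v, hv⟩ := hμ.exists_hasEigenvector
    have hveq : N v = μ • v := Module.End.mem_eigenspace_iff.mp hv.1
    by_cases hC : C v = 0
    · right
      have e := congrArg (fun f : Module.End L V => f v) h3
      simp only [Module.End.mul_apply, LinearMap.smul_apply] at e
      rw [hC, map_zero, smul_zero] at e
      have ev1 : (q • (1 : Module.End L V) - N) v = (q - μ) • v := by
        simp only [LinearMap.sub_apply, LinearMap.smul_apply, Module.End.one_apply, hveq, sub_smul]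
      have ev2 : (q^3 • (1 : Module.End L V) - N) ((q - μ) • v) = ((q^3-μ)*(q-μ)) • v := by
        simp only [LinearMap.sub_apply, LinearMap.smul_apply, Module.End.one_apply, map_smul, hveq,
          smul_smul]
        module
      rw [ev1, ev2] at e
      rw [smul_smul] at e
      rcases smul_eq_zero.mp e.symm with h | h
      · rcases mul_eq_zero.mp h with h | h
        · exact absurd h hq2
        · exact h
      · exact absurd h hv.2
    · left
      refine Module.End.hasEigenvalue_of_hasEigenvector (x := C v) ⟨Module.End.mem_eigenspace_iff.mpr ?_, hC⟩
      have e := congrArg (fun f : Module.End L V => f v) h2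
      simp only [Module.End.mul_apply, LinearMap.smul_apply] at e
      rw [hveq, map_smul] at e
      calc N (C v) = (q^4)⁻¹ • (q^4 • N (C v)) := by rw [smul_smul, inv_mul_cancel₀ hq4, one_smul]
        _ = (q^4)⁻¹ • (μ • C v) := by rw [← e]
        _ = ((q^4)⁻¹ * μ) • C v := by rw [smul_smul]
  -- chains
  have chainup : ∀ μ : L, N.HasEigenvalue μ → μ ≠ 0 →
      ∃ k : ℕ, (1 - q^3*(q^(4*k)*μ)) * (1 - q*(q^(4*k)*μ)) = 0 := by
    intro μ hμ hμ0
    by_contra hc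
    push_neg at hc
    have hall : ∀ k : ℕ, N.HasEigenvalue (q^(4*k)*μ) := by
      intro k
      induction k with
      | zero => simpa using hμ
      | succ k ih =>
        rcases hup _ ih with h | h
        · have he : q^4*(q^(4*k)*μ) = q^(4*(k+1))*μ := by ring
          rwa [he] at h
        · exact absurd h (hc k)
    have hinj : Function.Injective (fun k : ℕ => q^(4*k)*μ) := by
      intro k l h
      simp only at h
      have h2 := mul_right_cancel₀ hμ0 h
      have h3 := hpowinj _ _ h2
      omega
    exact (Set.infinite_of_injective_forall_mem hinj hall) hfin
  have chaindown : ∀ μ : L, N.HasEigenvalue μ → μ ≠ 0 →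
      ∃ j : ℕ, (q^3 - (q^(4*j))⁻¹*μ) * (q - (q^(4*j))⁻¹*μ) = 0 := by
    intro μ hμ hμ0
    by_contra hc
    push_neg at hc
    have hall : ∀ j : ℕ, N.HasEigenvalue ((q^(4*j))⁻¹*μ) := by
      intro j
      induction j with
      | zero => simpa using hμ
      | succ j ih =>
        rcases hdown _ ih with h | h
        · have he : (q^4)⁻¹*((q^(4*j))⁻¹*μ) = (q^(4*(j+1)))⁻¹*μ := by
            rw [← mul_assoc, ← mul_inv]
            congr 2
            rw [← pow_add]
            congr 1
            omega
          rwa [he] at h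
        · exact absurd h (hc j)
    have hinj : Function.Injective (fun j : ℕ => (q^(4*j))⁻¹*μ) := by
      intro k l h
      simp only at h
      have h2 := mul_right_cancel₀ hμ0 h
      have h3 : q ^ (4*k) = q ^ (4*l) := by
        have hk := pow_ne_zero (4*k) hq
        have hl := pow_ne_zero (4*l) hq
        field_simp at h2
        exact h2.symm
      have := hpowinj _ _ h3
      omega
    exact (Set.infinite_of_injective_forall_mem hinj hall) hfin
  -- all eigenvalues are zero
  have key : ∀ μ : L, N.HasEigenvalue μ → μ = 0 := by
    intro μ hμ
    by_contra hμ0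
    obtain ⟨k, hk⟩ := chainup μ hμ hμ0
    obtain ⟨j, hj⟩ := chaindown μ hμ hμ0
    have hμval : μ = q^(4*j)*q^3 ∨ μ = q^(4*j)*q := by
      rcases mul_eq_zero.mp hj with h | h
      · left
        have e : μ = q^(4*j)*((q^(4*j))⁻¹*μ) := by
          rw [← mul_assoc, mul_inv_cancel₀ (pow_ne_zero _ hq), one_mul]
        have h2 : (q^(4*j))⁻¹*μ = q^3 := by rwa [sub_eq_zero, eq_comm] at h
        exact e.trans (by rw [h2])
      · right
        have e : μ = q^(4*j)*((q^(4*j))⁻¹*μ) := by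
          rw [← mul_assoc, mul_inv_cancel₀ (pow_ne_zero _ hq), one_mul]
        have h2 : (q^(4*j))⁻¹*μ = q := by rwa [sub_eq_zero, eq_comm] at h
        exact e.trans (by rw [h2])
    have hk' : q^3*(q^(4*k)*μ) = 1 ∨ q*(q^(4*k)*μ) = 1 := by
      rcases mul_eq_zero.mp hk with h | h
      · left; rw [sub_eq_zero] at h; exact h.symm
      · right; rw [sub_eq_zero] at h; exact h.symm
    rcases hμval with h | h <;> rcases hk' with h' | h' <;> rw [h] at h'
    · exact hqru (4*k+4*j+6) (by omega) (by rw [← h']; ring)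
    · exact hqru (4*k+4*j+4) (by omega) (by rw [← h']; ring)
    · exact hqru (4*k+4*j+4) (by omega) (by rw [← h']; ring)
    · exact hqru (4*k+4*j+2) (by omega) (by rw [← h']; ring)
  -- conclude nilpotency via the minimal polynomial
  have hmonic := minpoly.monic hNint
  have hsplits : Polynomial.Splits (minpoly L N) :=
    IsAlgClosed.splits (minpoly L N)
  have hroots0 : ∀ r ∈ (minpoly L N).roots, r = (0:L) := by
    intro r hr
    exact key r ((Module.End.hasEigenvalue_iff_isRoot).mpr (Polynomial.isRoot_of_mem_roots hr))
  have hrep : (minpoly L N).roots = Multiset.replicate (minpoly L N).roots.card 0 :=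
    Multiset.eq_replicate_of_mem hroots0
  have hp : minpoly L N = Polynomial.X ^ Multiset.card (minpoly L N).roots := by
    conv_lhs => rw [hsplits.eq_prod_roots_of_monic hmonic]
    rw [hrep, Multiset.map_replicate, Multiset.prod_replicate, Polynomial.C_0, sub_zero,
      Multiset.card_replicate]
  refine ⟨Multiset.card (minpoly L N).roots, ?_⟩
  have haev := minpoly.aeval L N
  rw [hp] at haev
  simpa using haev


theorem my_core {K : Type*} [Field K] {V : Type*} [AddCommGroup V] [Module K V]
    [FiniteDimensional K V] (q : K) (hq : q ≠ 0) (hqru : ∀ n : ℕ, 0 < n → q ^ n ≠ 1)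
    (N B C : Module.End K V)
    (h1 : N * B = (q^4) • (B * N)) (h2 : C * N = (q^4) • (N * C))
    (h3 : (q^4) • (B * C) = ((q^2-1)^2) • ((q^3 • (1 : Module.End K V) - N) * (q • 1 - N)))
    (h4 : C * B = ((q^2-1)^2) • ((1 - q^3 • N) * (1 - q • N))) : IsNilpotent N := by
  classical
  set n := Module.finrank K V with hn
  let bV := Module.finBasis K V
  let T : Module.End K V ≃ₐ[K] Matrix (Fin n) (Fin n) K := LinearMap.toMatrixAlgEquiv bV
  set L := AlgebraicClosure K with hL
  let φ : Matrix (Fin n) (Fin n) K →+* Matrix (Fin n) (Fin n) L :=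
    (algebraMap K L).mapMatrix
  let ψ : Matrix (Fin n) (Fin n) L ≃ₐ[L] Module.End L (Fin n → L) :=
    Matrix.toLinAlgEquiv'
  have hφsmul : ∀ (s : K) (M : Matrix (Fin n) (Fin n) K),
      φ (s • M) = (algebraMap K L s) • φ M := by
    intro s M
    ext i j
    simp only [φ, RingHom.mapMatrix_apply, Matrix.map_apply, Matrix.smul_apply,
      smul_eq_mul, map_mul]
  have hinj : Function.Injective (algebraMap K L) := (algebraMap K L).injective
  set q' : L := algebraMap K L q with hq'def
  have hq'0 : q' ≠ 0 := fun h => hq (hinj (by rw [← hq'def, h, map_zero]))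
  have hq'ru : ∀ m : ℕ, 0 < m → q' ^ m ≠ 1 := by
    intro m hm h
    exact hqru m hm (hinj (by rw [map_pow, ← hq'def, h, map_one]))
  let tr : Module.End K V → Module.End L (Fin n → L) := fun f => ψ (φ (T f))
  have htr_mul : ∀ f g, tr (f * g) = tr f * tr g := by
    intro f g; simp [tr, map_mul]
  have htr_smul : ∀ (s : K) (f : Module.End K V),
      tr (s • f) = (algebraMap K L s) • tr f := by
    intro s f
    simp only [tr, map_smul, hφsmul]
  have htr_one : tr (1 : Module.End K V) = 1 := by simp [tr, map_one]
  have htr_sub : ∀ f g, tr (f - g) = tr f - tr g := by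
    intro f g; simp [tr, map_sub]
  have hmid1 : tr (q^3 • (1 : Module.End K V) - N) = q'^3 • 1 - tr N := by
    rw [htr_sub, htr_smul, htr_one, map_pow]
  have hmid2 : tr (q • (1 : Module.End K V) - N) = q' • 1 - tr N := by
    rw [htr_sub, htr_smul, htr_one]
  have hmid3 : tr ((1 : Module.End K V) - q^3 • N) = 1 - q'^3 • tr N := by
    rw [htr_sub, htr_smul, htr_one, map_pow]
  have hmid4 : tr ((1 : Module.End K V) - q • N) = 1 - q' • tr N := by
    rw [htr_sub, htr_smul, htr_one]
  have hc2 : algebraMap K L ((q^2-1)^2) = (q'^2 - 1)^2 := by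
    rw [map_pow, map_sub, map_one, map_pow]
  have e1 : tr N * tr B = (q'^4) • (tr B * tr N) := by
    rw [← htr_mul, ← htr_mul, h1, htr_smul, map_pow]
  have e2 : tr C * tr N = (q'^4) • (tr N * tr C) := by
    rw [← htr_mul, ← htr_mul, h2, htr_smul, map_pow]
  have e3 : (q'^4) • (tr B * tr C) =
      ((q'^2-1)^2) • ((q'^3 • (1 : Module.End L (Fin n → L)) - tr N) * (q' • 1 - tr N)) := by
    rw [← htr_mul, ← map_pow, ← htr_smul, h3, htr_smul, hc2, htr_mul, hmid1, hmid2]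
  have e4 : tr C * tr B =
      ((q'^2-1)^2) • ((1 - q'^3 • tr N) * (1 - q' • tr N)) := by
    rw [← htr_mul, h4, htr_smul, hc2, htr_mul, hmid3, hmid4]
  have hnil := my_core_ac q' hq'0 hq'ru (tr N) (tr B) (tr C) e1 e2 e3 e4
  obtain ⟨k, hk⟩ := hnil
  refine ⟨k, ?_⟩
  have hpow : ∀ m : ℕ, tr (N ^ m) = (tr N) ^ m := by
    intro m
    induction m with
    | zero => simpa using htr_one
    | succ m ih => rw [pow_succ, htr_mul, ih, pow_succ]
  have : tr (N ^ k) = 0 := by rw [hpow, hk]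
  -- descend
  have hφT : φ (T (N ^ k)) = 0 := by
    have := congrArg ψ.symm this
    simpa [tr] using this
  have hT : T (N ^ k) = 0 := by
    ext i j
    have := congrArg (fun M => M i j) hφT
    simp only [φ, RingHom.mapMatrix_apply, Matrix.map_apply, Matrix.zero_apply] at this
    exact hinj (by simpa using this)
  have := congrArg T.symm hT
  simpa using this



theorem my_assemble {K U : Type*} [Field K] [Ring U] [Algebra K U] (q : K)
    (n b c w v : U)
    (hb : b = (q^2-1) • (w*w)) (hc : c = (q^2-1) • (v*v))
    (hL1 : n * w = (q^2) • (w * n)) (hL2 : v * n = (q^2) • (n * v))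
    (hP1 : (q^4) • (w * w * (v * v)) = (q^4)•(1:U) - (q^3+q) • n + n * n)
    (hP2 : v * v * (w * w) = (1:U) - (q^3+q) • n + (q^4) • (n * n)) :
    (n * b = (q^4) • (b * n)) ∧ (c * n = (q^4) • (n * c)) ∧
    ((q^4) • (b * c) = ((q^2-1)^2) • ((q^3•(1:U) - n)*(q•(1:U) - n))) ∧
    (c * b = ((q^2-1)^2) • (((1:U) - q^3•n)*((1:U) - q•n))) := by
  have t1 : n*(w*w) = (q^2*q^2)•(w*(w*n)) := by
    calc n*(w*w) = (n*w)*w := by rw [mul_assoc]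
      _ = (q^2)•((w*n)*w) := by rw [hL1, smul_mul_assoc]
      _ = (q^2)•(w*(n*w)) := by rw [mul_assoc]
      _ = (q^2)•(w*((q^2)•(w*n))) := by rw [hL1]
      _ = (q^2*q^2)•(w*(w*n)) := by simp only [mul_smul_comm, smul_smul]
  have t2 : (v*v)*n = (q^2*q^2)•(n*(v*v)) := by
    calc (v*v)*n = v*(v*n) := by rw [mul_assoc]
      _ = (q^2)•(v*(n*v)) := by rw [hL2, mul_smul_comm]
      _ = (q^2)•((v*n)*v) := by rw [mul_assoc]
      _ = (q^2)•(((q^2)•(n*v))*v) := by rw [hL2]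
      _ = (q^2*q^2)•(n*(v*v)) := by simp only [smul_mul_assoc, smul_smul, mul_assoc]
  refine ⟨?_, ?_, ?_, ?_⟩
  · rw [hb]
    simp only [mul_smul_comm, smul_mul_assoc, smul_smul]
    rw [show w*w*n = w*(w*n) from mul_assoc w w n, t1]
    module
  · rw [hc]
    simp only [mul_smul_comm, smul_mul_assoc, smul_smul]
    rw [t2]
    module
  · calc (q^4)•(b*c) = ((q^2-1)*(q^2-1))•((q^4)•(w * w * (v * v))) := by
          rw [hb, hc]
          simp only [mul_smul_comm, smul_mul_assoc, smul_smul, mul_assoc]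
          try module
      _ = ((q^2-1)*(q^2-1))•((q^4)•(1:U) - (q^3+q) • n + n * n) := by rw [hP1]
      _ = ((q^2-1)^2) • ((q^3•(1:U) - n)*(q•(1:U) - n)) := by
          simp only [mul_sub, sub_mul, mul_add, add_mul, smul_mul_assoc, mul_smul_comm, smul_smul,
            smul_sub, smul_add, mul_one, one_mul, sub_smul, add_smul]
          module
  · calc c*b = ((q^2-1)*(q^2-1))•(v * v * (w * w)) := by
          rw [hb, hc]
          simp only [mul_smul_comm, smul_mul_assoc, smul_smul, mul_assoc]
          try module
      _ = ((q^2-1)*(q^2-1))•((1:U) - (q^3+q) • n + (q^4) • (n * n)) := by rw [hP2]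
      _ = ((q^2-1)^2) • (((1:U) - q^3•n)*((1:U) - q•n)) := by
          simp only [mul_sub, sub_mul, mul_add, add_mul, smul_mul_assoc, mul_smul_comm, smul_smul,
            smul_sub, smul_add, mul_one, one_mul, sub_smul, add_smul]
          module


/-- For `q` not a root of unity, on any finite-dimensional module over the
subalgebra `A` of `U_q(sl_2)` generated by `ν_x, ν_y, ν_z`, the actions of
`ν_x, ν_y, ν_z` are nilpotent. -/
theorem stmt_17 (K : Type*) [Field K] (q : K) (hq : q ≠ 0)
    (hqru : ∀ n : ℕ, 0 < n → q ^ n ≠ 1)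
    (U : Type*) [Ring U] [Algebra K U] (x y yi z : U)
    (hyyi : y * yi = 1) (hyiy : yi * y = 1)
    (hxy : q • (x * y) - q⁻¹ • (y * x) = (q - q⁻¹) • (1 : U))
    (hyz : q • (y * z) - q⁻¹ • (z * y) = (q - q⁻¹) • (1 : U))
    (hzx : q • (z * x) - q⁻¹ • (x * z) = (q - q⁻¹) • (1 : U))
    (νx νy νz : U)
    (hνx : νx = q • ((1 : U) - y * z))
    (hνy : νy = q • ((1 : U) - z * x))
    (hνz : νz = q • ((1 : U) - x * y))
    (A : Subalgebra K U) (hA : A = Algebra.adjoin K {νx, νy, νz})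
    (V : Type*) [AddCommGroup V] [Module K V] [FiniteDimensional K V]
    (ρ : A →ₐ[K] Module.End K V) :
    (∀ a : A, (a : U) = νx → IsNilpotent (ρ a)) ∧
    (∀ a : A, (a : U) = νy → IsNilpotent (ρ a)) ∧
    (∀ a : A, (a : U) = νz → IsNilpotent (ρ a)) := by
  have rel0 : ∀ a b : U, (q•(a*b) - q⁻¹•(b*a) = (q-q⁻¹)•(1:U)) →
      b * a - (q^2) • (a * b) + (q^2-1) • (1:U) = 0 := by
    intro a b hab
    have h := congrArg (fun u : U => q • u) hab
    simp only [smul_sub, smul_smul] at h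
    rw [mul_inv_cancel₀ hq, one_smul] at h
    have hs : q*(q-q⁻¹) = q^2-1 := by field_simp
    have hqq : q*q = q^2 := (sq q).symm
    rw [hs, hqq] at h
    rw [← h]
    abel
  have hN1 : y * x - (q^2) • (x * y) + (q^2-1) • (1:U) = 0 := rel0 x y hxy
  have hN2 : z * y - (q^2) • (y * z) + (q^2-1) • (1:U) = 0 := rel0 y z hyz
  have hN3 : x * z - (q^2) • (z * x) + (q^2-1) • (1:U) = 0 := rel0 z x hzx
  have hLx1 : νx * y = (q^2) • (y * νx) := by
    have cert : (νx * y) - ((q^2) • (y * νx)) = ((-1:K)*q) • ((y) * (z * y - (q^2) • (y * z) + (q^2-1) • (1:U))) := by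
      rw [hνx]
      simp only [mul_sub, sub_mul, mul_add, add_mul, smul_mul_assoc, mul_smul_comm, smul_smul,
        smul_sub, smul_add, mul_one, one_mul, mul_assoc, sub_smul, add_smul]
      module
    rw [hN2] at cert
    simp only [mul_zero, zero_mul, smul_zero, zero_smul, add_zero, zero_add] at cert
    exact sub_eq_zero.mp cert
  have hLx2 : z * νx = (q^2) • (νx * z) := by
    have cert : (z * νx) - ((q^2) • (νx * z)) = ((-1:K)*q) • ((z * y - (q^2) • (y * z) + (q^2-1) • (1:U)) * (z)) := by
      rw [hνx]
      simp only [mul_sub, sub_mul, mul_add, add_mul, smul_mul_assoc, mul_smul_comm, smul_smul,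
        smul_sub, smul_add, mul_one, one_mul, mul_assoc, sub_smul, add_smul]
      module
    rw [hN2] at cert
    simp only [mul_zero, zero_mul, smul_zero, zero_smul, add_zero, zero_add] at cert
    exact sub_eq_zero.mp cert
  have hLy1 : νy * z = (q^2) • (z * νy) := by
    have cert : (νy * z) - ((q^2) • (z * νy)) = ((-1:K)*q) • ((z) * (x * z - (q^2) • (z * x) + (q^2-1) • (1:U))) := by
      rw [hνy]
      simp only [mul_sub, sub_mul, mul_add, add_mul, smul_mul_assoc, mul_smul_comm, smul_smul,
        smul_sub, smul_add, mul_one, one_mul, mul_assoc, sub_smul, add_smul]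
      module
    rw [hN3] at cert
    simp only [mul_zero, zero_mul, smul_zero, zero_smul, add_zero, zero_add] at cert
    exact sub_eq_zero.mp cert
  have hLy2 : x * νy = (q^2) • (νy * x) := by
    have cert : (x * νy) - ((q^2) • (νy * x)) = ((-1:K)*q) • ((x * z - (q^2) • (z * x) + (q^2-1) • (1:U)) * (x)) := by
      rw [hνy]
      simp only [mul_sub, sub_mul, mul_add, add_mul, smul_mul_assoc, mul_smul_comm, smul_smul,
        smul_sub, smul_add, mul_one, one_mul, mul_assoc, sub_smul, add_smul]
      module
    rw [hN3] at cert
    simp only [mul_zero, zero_mul, smul_zero, zero_smul, add_zero, zero_add] at cert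
    exact sub_eq_zero.mp cert
  have hLz1 : νz * x = (q^2) • (x * νz) := by
    have cert : (νz * x) - ((q^2) • (x * νz)) = ((-1:K)*q) • ((x) * (y * x - (q^2) • (x * y) + (q^2-1) • (1:U))) := by
      rw [hνz]
      simp only [mul_sub, sub_mul, mul_add, add_mul, smul_mul_assoc, mul_smul_comm, smul_smul,
        smul_sub, smul_add, mul_one, one_mul, mul_assoc, sub_smul, add_smul]
      module
    rw [hN1] at cert
    simp only [mul_zero, zero_mul, smul_zero, zero_smul, add_zero, zero_add] at cert
    exact sub_eq_zero.mp cert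
  have hLz2 : y * νz = (q^2) • (νz * y) := by
    have cert : (y * νz) - ((q^2) • (νz * y)) = ((-1:K)*q) • ((y * x - (q^2) • (x * y) + (q^2-1) • (1:U)) * (y)) := by
      rw [hνz]
      simp only [mul_sub, sub_mul, mul_add, add_mul, smul_mul_assoc, mul_smul_comm, smul_smul,
        smul_sub, smul_add, mul_one, one_mul, mul_assoc, sub_smul, add_smul]
      module
    rw [hN1] at cert
    simp only [mul_zero, zero_mul, smul_zero, zero_smul, add_zero, zero_add] at cert
    exact sub_eq_zero.mp cert
  have hQy : νx * νz - (q^2) • (νz * νx) + (q^2-1) • (1:U) = (q^2-1) • (y * y) := by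
    have cert : (νx * νz - (q^2) • (νz * νx) + (q^2-1) • (1:U)) - ((q^2-1) • (y * y)) = ((-1:K)) • ((y) * (x * z - (q^2) • (z * x) + (q^2-1) • (1:U)) * (y)) + ((1:K)) • ((y * x - (q^2) • (x * y) + (q^2-1) • (1:U)) * (z) * (y)) + ((1:K)*q^2) • ((x) * (y) * (z * y - (q^2) • (y * z) + (q^2-1) • (1:U))) + ((-1:K)*q^2 + (1:K)) • ((z * y - (q^2) • (y * z) + (q^2-1) • (1:U))) := by
      rw [hνx, hνz]
      simp only [mul_sub, sub_mul, mul_add, add_mul, smul_mul_assoc, mul_smul_comm, smul_smul,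
        smul_sub, smul_add, mul_one, one_mul, mul_assoc, sub_smul, add_smul]
      module
    rw [hN1, hN2, hN3] at cert
    simp only [mul_zero, zero_mul, smul_zero, zero_smul, add_zero, zero_add] at cert
    exact sub_eq_zero.mp cert
  have hQz : νy * νx - (q^2) • (νx * νy) + (q^2-1) • (1:U) = (q^2-1) • (z * z) := by
    have cert : (νy * νx - (q^2) • (νx * νy) + (q^2-1) • (1:U)) - ((q^2-1) • (z * z)) = ((-1:K)*q^2 + (1:K)) • ((x * z - (q^2) • (z * x) + (q^2-1) • (1:U))) + ((-1:K)) • ((x * z - (q^2) • (z * x) + (q^2-1) • (1:U)) * (y) * (z)) + ((1:K)*q^2) • ((y) * (z) * (x * z - (q^2) • (z * x) + (q^2-1) • (1:U))) + ((1:K)) • ((x) * (z * y - (q^2) • (y * z) + (q^2-1) • (1:U)) * (z)) + ((1:K)) • ((y) * (x * z - (q^2) • (z * x) + (q^2-1) • (1:U)) * (z)) + ((-1:K)) • ((y * x - (q^2) • (x * y) + (q^2-1) • (1:U)) * (z) * (z)) := by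
      rw [hνx, hνy]
      simp only [mul_sub, sub_mul, mul_add, add_mul, smul_mul_assoc, mul_smul_comm, smul_smul,
        smul_sub, smul_add, mul_one, one_mul, mul_assoc, sub_smul, add_smul]
      module
    rw [hN1, hN2, hN3] at cert
    simp only [mul_zero, zero_mul, smul_zero, zero_smul, add_zero, zero_add] at cert
    exact sub_eq_zero.mp cert
  have hQx : νz * νy - (q^2) • (νy * νz) + (q^2-1) • (1:U) = (q^2-1) • (x * x) := by
    have cert : (νz * νy - (q^2) • (νy * νz) + (q^2-1) • (1:U)) - ((q^2-1) • (x * x)) = ((-1:K)*q^2 + (1:K)) • ((x * z - (q^2) • (z * x) + (q^2-1) • (1:U))) + ((-1:K)) • ((x) * (y) * (x * z - (q^2) • (z * x) + (q^2-1) • (1:U))) + ((1:K)*q^2) • ((x * z - (q^2) • (z * x) + (q^2-1) • (1:U)) * (x) * (y)) + ((1:K)) • ((x) * (y * x - (q^2) • (x * y) + (q^2-1) • (1:U)) * (z)) + ((1:K)) • ((x) * (x * z - (q^2) • (z * x) + (q^2-1) • (1:U)) * (y)) + ((-1:K)) • ((x) * (x) * (z * y - (q^2) • (y * z) + (q^2-1)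 • (1:U))) := by
      rw [hνy, hνz]
      simp only [mul_sub, sub_mul, mul_add, add_mul, smul_mul_assoc, mul_smul_comm, smul_smul,
        smul_sub, smul_add, mul_one, one_mul, mul_assoc, sub_smul, add_smul]
      module
    rw [hN1, hN2, hN3] at cert
    simp only [mul_zero, zero_mul, smul_zero, zero_smul, add_zero, zero_add] at cert
    exact sub_eq_zero.mp cert
  have hPRx1 : (q^4) • (y * y * (z * z)) = (q^4)•(1:U) - (q^3+q) • νx + νx * νx := by
    have cert : ((q^4) • (y * y * (z * z))) - ((q^4)•(1:U) - (q^3+q) • νx + νx * νx) = ((-1:K)*q^2) • ((y) * (z * y - (q^2) • (y * z) + (q^2-1) • (1:U)) * (z)) := by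
      rw [hνx]
      simp only [mul_sub, sub_mul, mul_add, add_mul, smul_mul_assoc, mul_smul_comm, smul_smul,
        smul_sub, smul_add, mul_one, one_mul, mul_assoc, sub_smul, add_smul]
      module
    rw [hN2] at cert
    simp only [mul_zero, zero_mul, smul_zero, zero_smul, add_zero, zero_add] at cert
    exact sub_eq_zero.mp cert
  have hPRx2 : z * z * (y * y) = (1:U) - (q^3+q) • νx + (q^4) • (νx * νx) := by
    have cert : (z * z * (y * y)) - ((1:U) - (q^3+q) • νx + (q^4) • (νx * νx)) = ((1:K)) • ((z) * (z * y - (q^2) • (y * z) + (q^2-1) • (1:U)) * (y)) + ((1:K)*q^2) • ((z * y - (q^2) • (y * z) + (q^2-1) • (1:U)) * (z) * (y)) + ((-1:K)*q^4 + (1:K)) • ((z * y - (q^2) • (y * z) + (q^2-1) • (1:U))) + ((1:K)*q^4) • ((y) * (z) * (z * y - (q^2) • (y * z) + (q^2-1) • (1:U))) := by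
      rw [hνx]
      simp only [mul_sub, sub_mul, mul_add, add_mul, smul_mul_assoc, mul_smul_comm, smul_smul,
        smul_sub, smul_add, mul_one, one_mul, mul_assoc, sub_smul, add_smul]
      module
    rw [hN2] at cert
    simp only [mul_zero, zero_mul, smul_zero, zero_smul, add_zero, zero_add] at cert
    exact sub_eq_zero.mp cert
  have hPRy1 : (q^4) • (z * z * (x * x)) = (q^4)•(1:U) - (q^3+q) • νy + νy * νy := by
    have cert : ((q^4) • (z * z * (x * x))) - ((q^4)•(1:U) - (q^3+q) • νy + νy * νy) = ((-1:K)*q^2) • ((z) * (x * z - (q^2) • (z * x) + (q^2-1) • (1:U)) * (x)) := by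
      rw [hνy]
      simp only [mul_sub, sub_mul, mul_add, add_mul, smul_mul_assoc, mul_smul_comm, smul_smul,
        smul_sub, smul_add, mul_one, one_mul, mul_assoc, sub_smul, add_smul]
      module
    rw [hN3] at cert
    simp only [mul_zero, zero_mul, smul_zero, zero_smul, add_zero, zero_add] at cert
    exact sub_eq_zero.mp cert
  have hPRy2 : x * x * (z * z) = (1:U) - (q^3+q) • νy + (q^4) • (νy * νy) := by
    have cert : (x * x * (z * z)) - ((1:U) - (q^3+q) • νy + (q^4) • (νy * νy)) = ((-1:K)*q^4 + (1:K)) • ((x * z - (q^2) • (z * x) + (q^2-1) • (1:U))) + ((1:K)*q^4) • ((x * z - (q^2) • (z * x) + (q^2-1) • (1:U)) * (z) * (x)) + ((1:K)*q^2) • ((x) * (z) * (x * z - (q^2) • (z * x) + (q^2-1) • (1:U))) + ((1:K)) • ((x) * (x * z - (q^2) • (z * x) + (q^2-1) • (1:U)) * (z)) := by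
      rw [hνy]
      simp only [mul_sub, sub_mul, mul_add, add_mul, smul_mul_assoc, mul_smul_comm, smul_smul,
        smul_sub, smul_add, mul_one, one_mul, mul_assoc, sub_smul, add_smul]
      module
    rw [hN3] at cert
    simp only [mul_zero, zero_mul, smul_zero, zero_smul, add_zero, zero_add] at cert
    exact sub_eq_zero.mp cert
  have hPRz1 : (q^4) • (x * x * (y * y)) = (q^4)•(1:U) - (q^3+q) • νz + νz * νz := by
    have cert : ((q^4) • (x * x * (y * y))) - ((q^4)•(1:U) - (q^3+q) • νz + νz * νz) = ((-1:K)*q^2) • ((x) * (y * x - (q^2) • (x * y) + (q^2-1) • (1:U)) * (y)) := by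
      rw [hνz]
      simp only [mul_sub, sub_mul, mul_add, add_mul, smul_mul_assoc, mul_smul_comm, smul_smul,
        smul_sub, smul_add, mul_one, one_mul, mul_assoc, sub_smul, add_smul]
      module
    rw [hN1] at cert
    simp only [mul_zero, zero_mul, smul_zero, zero_smul, add_zero, zero_add] at cert
    exact sub_eq_zero.mp cert
  have hPRz2 : y * y * (x * x) = (1:U) - (q^3+q) • νz + (q^4) • (νz * νz) := by
    have cert : (y * y * (x * x)) - ((1:U) - (q^3+q) • νz + (q^4) • (νz * νz)) = ((1:K)) • ((y) * (y * x - (q^2) • (x * y) + (q^2-1) • (1:U)) * (x)) + ((1:K)*q^2) • ((y * x - (q^2) • (x * y) + (q^2-1) • (1:U)) * (y) * (x)) + ((-1:K)*q^4 + (1:K)) • ((y * x - (q^2) • (x * y) + (q^2-1) • (1:U))) + ((1:K)*q^4) • ((x) * (y) * (y * x - (q^2) • (x * y) + (q^2-1) • (1:U))) := by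
      rw [hνz]
      simp only [mul_sub, sub_mul, mul_add, add_mul, smul_mul_assoc, mul_smul_comm, smul_smul,
        smul_sub, smul_add, mul_one, one_mul, mul_assoc, sub_smul, add_smul]
      module
    rw [hN1] at cert
    simp only [mul_zero, zero_mul, smul_zero, zero_smul, add_zero, zero_add] at cert
    exact sub_eq_zero.mp cert
  -- memberships and A-level elements
  have hmx : νx ∈ A := by rw [hA]; exact Algebra.subset_adjoin (by simp)
  have hmy : νy ∈ A := by rw [hA]; exact Algebra.subset_adjoin (by simp)
  have hmz : νz ∈ A := by rw [hA]; exact Algebra.subset_adjoin (by simp)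
  let aN : A := ⟨νx, hmx⟩
  let bN : A := ⟨νy, hmy⟩
  let cN : A := ⟨νz, hmz⟩
  let YA : A := aN * cN - (q^2) • (cN * aN) + (q^2-1) • 1
  let ZA : A := bN * aN - (q^2) • (aN * bN) + (q^2-1) • 1
  let XA : A := cN * bN - (q^2) • (bN * cN) + (q^2-1) • 1
  have hYAc : (YA : U) = νx * νz - (q^2) • (νz * νx) + (q^2-1) • (1:U) := by
    simp only [YA, aN, cN, AddMemClass.coe_add, AddSubgroupClass.coe_sub, MulMemClass.coe_mul,
      SetLike.val_smul, OneMemClass.coe_one]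
  have hZAc : (ZA : U) = νy * νx - (q^2) • (νx * νy) + (q^2-1) • (1:U) := by
    simp only [ZA, aN, bN, AddMemClass.coe_add, AddSubgroupClass.coe_sub, MulMemClass.coe_mul,
      SetLike.val_smul, OneMemClass.coe_one]
  have hXAc : (XA : U) = νz * νy - (q^2) • (νy * νz) + (q^2-1) • (1:U) := by
    simp only [XA, bN, cN, AddMemClass.coe_add, AddSubgroupClass.coe_sub, MulMemClass.coe_mul,
      SetLike.val_smul, OneMemClass.coe_one]
  refine ⟨?_, ?_, ?_⟩
  · -- generator x
    intro a ha
    obtain ⟨hx1, hx2, hx3, hx4⟩ := my_assemble (U := U) q νx _ _ y z hQy hQz hLx1 hLx2 hPRx1 hPRx2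
    have ha1 : aN * YA = (q^4) • (YA * aN) := by
      refine Subtype.ext ?_
      simp only [MulMemClass.coe_mul, SetLike.val_smul, hYAc, hZAc]
      exact hx1
    have ha2 : ZA * aN = (q^4) • (aN * ZA) := by
      refine Subtype.ext ?_
      simp only [MulMemClass.coe_mul, SetLike.val_smul, hYAc, hZAc]
      exact hx2
    have ha3 : (q^4) • (YA * ZA) = ((q^2-1)^2) • ((q^3•(1:A) - aN)*(q•(1:A) - aN)) := by
      refine Subtype.ext ?_
      simp only [MulMemClass.coe_mul, SetLike.val_smul, AddSubgroupClass.coe_sub,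
        OneMemClass.coe_one, hYAc, hZAc]
      exact hx3
    have ha4 : ZA * YA = ((q^2-1)^2) • (((1:A) - q^3•aN)*((1:A) - q•aN)) := by
      refine Subtype.ext ?_
      simp only [MulMemClass.coe_mul, SetLike.val_smul, AddSubgroupClass.coe_sub,
        OneMemClass.coe_one, hYAc, hZAc]
      exact hx4
    have he1 := congrArg ρ ha1
    have he2 := congrArg ρ ha2
    have he3 := congrArg ρ ha3
    have he4 := congrArg ρ ha4
    simp only [map_mul, map_smul, map_sub, map_one] at he1 he2 he3 he4
    have hnil := my_core q hq hqru (ρ aN) (ρ YA) (ρ ZA) he1 he2 he3 he4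
    rw [show a = aN from Subtype.ext ha]
    exact hnil
  · -- generator y
    intro a ha
    obtain ⟨hx1, hx2, hx3, hx4⟩ := my_assemble (U := U) q νy _ _ z x hQz hQx hLy1 hLy2 hPRy1 hPRy2
    have ha1 : bN * ZA = (q^4) • (ZA * bN) := by
      refine Subtype.ext ?_
      simp only [MulMemClass.coe_mul, SetLike.val_smul, hZAc, hXAc]
      exact hx1
    have ha2 : XA * bN = (q^4) • (bN * XA) := by
      refine Subtype.ext ?_
      simp only [MulMemClass.coe_mul, SetLike.val_smul, hZAc, hXAc]
      exact hx2
    have ha3 : (q^4) • (ZA * XA) = ((q^2-1)^2) • ((q^3•(1:A) - bN)*(q•(1:A) - bN)) := by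
      refine Subtype.ext ?_
      simp only [MulMemClass.coe_mul, SetLike.val_smul, AddSubgroupClass.coe_sub,
        OneMemClass.coe_one, hZAc, hXAc]
      exact hx3
    have ha4 : XA * ZA = ((q^2-1)^2) • (((1:A) - q^3•bN)*((1:A) - q•bN)) := by
      refine Subtype.ext ?_
      simp only [MulMemClass.coe_mul, SetLike.val_smul, AddSubgroupClass.coe_sub,
        OneMemClass.coe_one, hZAc, hXAc]
      exact hx4
    have he1 := congrArg ρ ha1
    have he2 := congrArg ρ ha2
    have he3 := congrArg ρ ha3
    have he4 := congrArg ρ ha4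
    simp only [map_mul, map_smul, map_sub, map_one] at he1 he2 he3 he4
    have hnil := my_core q hq hqru (ρ bN) (ρ ZA) (ρ XA) he1 he2 he3 he4
    rw [show a = bN from Subtype.ext ha]
    exact hnil
  · -- generator z
    intro a ha
    obtain ⟨hx1, hx2, hx3, hx4⟩ := my_assemble (U := U) q νz _ _ x y hQx hQy hLz1 hLz2 hPRz1 hPRz2
    have ha1 : cN * XA = (q^4) • (XA * cN) := by
      refine Subtype.ext ?_
      simp only [MulMemClass.coe_mul, SetLike.val_smul, hXAc, hYAc]
      exact hx1
    have ha2 : YA * cN = (q^4) • (cN * YA) := by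
      refine Subtype.ext ?_
      simp only [MulMemClass.coe_mul, SetLike.val_smul, hXAc, hYAc]
      exact hx2
    have ha3 : (q^4) • (XA * YA) = ((q^2-1)^2) • ((q^3•(1:A) - cN)*(q•(1:A) - cN)) := by
      refine Subtype.ext ?_
      simp only [MulMemClass.coe_mul, SetLike.val_smul, AddSubgroupClass.coe_sub,
        OneMemClass.coe_one, hXAc, hYAc]
      exact hx3
    have ha4 : YA * XA = ((q^2-1)^2) • (((1:A) - q^3•cN)*((1:A) - q•cN)) := by
      refine Subtype.ext ?_
      simp only [MulMemClass.coe_mul, SetLike.val_smul, AddSubgroupClass.coe_sub,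
        OneMemClass.coe_one, hXAc, hYAc]
      exact hx4
    have he1 := congrArg ρ ha1
    have he2 := congrArg ρ ha2
    have he3 := congrArg ρ ha3
    have he4 := congrArg ρ ha4
    simp only [map_mul, map_smul, map_sub, map_one] at he1 he2 he3 he4
    have hnil := my_core q hq hqru (ρ cN) (ρ XA) (ρ YA) he1 he2 he3 he4
    rw [show a = cN from Subtype.ext ha]
    exact hnil
end
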